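/- arXiv:2407.00812 — 12 statements merged into one kernel-verified Lean document; each statement's English description precedes it below -/
import Mathlib

section
/- Let φ : ℝⁿ → ℝ be continuously differentiable and bounded from below, let a, b > 0, and let (x^k) be a sequence satisfying the sufficient-decrease condition (H1) and the modified relative-error condition (H3). Suppose x̄ is an accumulation point of (x^k) and φ satisfies the basic PLK condition at x̄: there exist ε > 0, η > 0, and a continuous concave function ϕ : [0, η] → [0, ∞) with ϕ(0) = 0, ϕ differentiable on (0, η) with ϕ'(s) > 0 for all s ∈ (0, η), such that ϕ'(φ(x) − φ(x̄)) · ‖∇φ(x)‖ ≥ 1 whenever ‖x − x̄‖ < ε and φ(x̄) < φ(x) < φ(x̄) + η. Then ∑_{k=0}^∞ ‖x^{k+1} − x^k‖ < ∞, the whole sequence (x^k) converges to x̄, and ∇φ(x̄) = 0. -/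
open Filter Topology

/-!
Sufficient decrease makes `φ (x k)` antitone, so it converges to `φ x̄` along the whole sequence
and stays above it. Near `x̄`, concavity of the desingularizing function `ϕ`, the PLK inequality
at `x k` and the relative-error bound turn the decrease `a ‖x (k+1) - x k‖²` of `φ` into
`‖x (k+1) - x k‖ ≤ (b / a) (ϕ (r k) - ϕ (r (k+1)))` with `r k = φ (x k) - φ x̄`.
Starting from a term of the convergent subsequence that is close to `x̄` and has small `ϕ (r k)`,
these bounds telescope, which keeps the iterates in the PLK neighbourhood forever and bounds
the length of the trajectory. A sequence of finite length is Cauchy, so it converges to its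
accumulation point `x̄`, and the relative-error bound forces `∇φ x̄ = 0`.
-/

theorem ConcaveOn.mul_sub_le_sub_of_hasDerivAt {S : Set ℝ} {f : ℝ → ℝ} {f' x y : ℝ}
    (hf : ConcaveOn ℝ S f) (hx : x ∈ S) (hy : y ∈ S) (hxy : x < y) (hf' : HasDerivAt f f' y) :
    f' * (y - x) ≤ f y - f x := by
  have hslope := hf.le_slope_of_hasDerivAt hx hy hxy hf'
  rwa [slope_def_field, le_div_iff₀ (sub_pos.2 hxy)] at hslope

/-- One step of the descent: `s` and `t` play the roles of `φ (x k) - φ x̄` and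
`φ (x (k+1)) - φ x̄`, `d` of `‖x (k+1) - x k‖`, and `g` of `‖∇φ (x k)‖`. -/
theorem le_mul_sub_of_desingularized_step {ϕ ϕ' : ℝ → ℝ} {η a b d g s t : ℝ}
    (hconc : ConcaveOn ℝ (Set.Icc 0 η) ϕ) (hderiv : ∀ s ∈ Set.Ioo 0 η, HasDerivAt ϕ (ϕ' s) s)
    (ha : 0 < a) (hb : 0 ≤ b) (hg₀ : 0 ≤ g) (ht : 0 ≤ t) (hs : s < η)
    (hdec : t + a * d ^ 2 ≤ s) (hg : g ≤ b * d) (hKL : 0 < s → 1 ≤ ϕ' s * g) :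
    d ≤ b / a * (ϕ s - ϕ t) := by
  rcases le_or_gt s 0 with hs₀ | hs₀
  · have hd2 : d ^ 2 ≤ 0 := le_of_mul_le_mul_left (by rw [mul_zero]; linarith) ha
    obtain rfl : d = 0 := pow_eq_zero_iff two_ne_zero |>.1 (le_antisymm hd2 (sq_nonneg d))
    obtain rfl : s = t := by linarith
    simp
  have hpg := hKL hs₀
  have hp : 0 < ϕ' s := by
    by_contra! h
    linarith [mul_nonpos_of_nonpos_of_nonneg h hg₀]
  have hpbd : 1 ≤ ϕ' s * (b * d) := hpg.trans (mul_le_mul_of_nonneg_left hg hp.le)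
  have hd : 0 < d := by
    by_contra! h
    linarith [mul_nonpos_of_nonneg_of_nonpos hp.le (mul_nonpos_of_nonneg_of_nonpos hb h)]
  have hts : t < s := by linarith [mul_pos ha (pow_pos hd 2)]
  have hconcave_step : ϕ' s * (s - t) ≤ ϕ s - ϕ t :=
    hconc.mul_sub_le_sub_of_hasDerivAt ⟨ht, by linarith⟩ ⟨hs₀.le, hs.le⟩ hts (hderiv s ⟨hs₀, hs⟩)
  rw [div_mul_eq_mul_div, le_div_iff₀ ha]
  calc d * a ≤ d * a * (ϕ' s * (b * d)) := le_mul_of_one_le_right (by positivity) hpbd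
    _ = b * (ϕ' s * (a * d ^ 2)) := by ring
    _ ≤ b * (ϕ' s * (s - t)) := by gcongr; linarith
    _ ≤ b * (ϕ s - ϕ t) := by gcongr

section FiniteLength

variable {α : Type*} [PseudoMetricSpace α]

theorem summable_dist_of_dist_le_sub {x : ℕ → α} {xbar : α} {ε : ℝ} {ψ : ℕ → ℝ}
    (hψ : ∀ k, 0 ≤ ψ k) (h₀ : dist (x 0) xbar + ψ 0 < ε)
    (hstep : ∀ k, dist (x k) xbar < ε → dist (x k) (x (k + 1)) ≤ ψ k - ψ (k + 1)) :
    Summable fun k => dist (x k) (x (k + 1)) := by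
  have hpartial : ∀ m, ∑ k ∈ Finset.range m, dist (x k) (x (k + 1)) ≤ ψ 0 - ψ m := by
    intro m
    induction m with
    | zero => simp
    | succ m ih =>
      have hball : dist (x m) xbar < ε := calc
        dist (x m) xbar ≤ dist (x 0) (x m) + dist (x 0) xbar := dist_triangle_left _ _ _
        _ ≤ ψ 0 - ψ m + dist (x 0) xbar := by
          gcongr; exact (dist_le_range_sum_dist x m).trans ih
        _ < ε := by linarith [hψ m]
      rw [Finset.sum_range_succ]
      linarith [hstep m hball]
  exact summable_of_sum_range_le (c := ψ 0) (fun _ => dist_nonneg) fun m =>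
    (hpartial m).trans (by linarith [hψ m])

theorem summable_dist_and_tendsto_of_dist_le_sub {x : ℕ → α} {xbar : α} {ε : ℝ} {ψ : ℕ → ℝ}
    {σ : ℕ → ℕ} (hε : 0 < ε) (hσ : StrictMono σ) (hxσ : Tendsto (x ∘ σ) atTop (𝓝 xbar))
    (hψ : Tendsto ψ atTop (𝓝 0)) (hψ₀ : ∀ᶠ k in atTop, 0 ≤ ψ k)
    (hstep : ∀ᶠ k in atTop, dist (x k) xbar < ε → dist (x k) (x (k + 1)) ≤ ψ k - ψ (k + 1)) :
    (Summable fun k => dist (x k) (x (k + 1))) ∧ Tendsto x atTop (𝓝 xbar) := by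
  obtain ⟨N, hN⟩ := eventually_atTop.1 (hψ₀.and hstep)
  have hsmall : Tendsto (fun j => dist (x (σ j)) xbar + ψ (σ j)) atTop (𝓝 0) := by
    simpa using (tendsto_iff_dist_tendsto_zero.1 hxσ).add (hψ.comp hσ.tendsto_atTop)
  obtain ⟨j, hjN, hj⟩ :=
    ((hσ.tendsto_atTop.eventually_ge_atTop N).and (hsmall.eventually_lt_const hε)).exists
  have hshift : Summable fun k => dist (x (k + σ j)) (x (k + 1 + σ j)) :=
    summable_dist_of_dist_le_sub (x := fun k => x (k + σ j)) (ψ := fun k => ψ (k + σ j))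
      (fun k => (hN _ (by omega)).1) (by simpa using hj) fun k hk => by
        rw [Nat.add_right_comm k 1]
        exact (hN (k + σ j) (by omega)).2 hk
  have hsum : Summable fun k => dist (x k) (x (k + 1)) :=
    (summable_nat_add_iff (σ j)).1 (hshift.congr fun k => by rw [Nat.add_right_comm k 1])
  exact ⟨hsum, tendsto_nhds_of_cauchySeq_of_subseq (cauchySeq_of_summable_dist hsum)
    hσ.tendsto_atTop hxσ⟩

end FiniteLength

theorem eq_zero_of_norm_le_mul_norm_sub {E F : Type*} [NormedAddCommGroup E]
    [NormedAddCommGroup F] {f : E → F} {x : ℕ → E} {xbar : E} {b : ℝ}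
    (hf : ContinuousAt f xbar) (hx : Tendsto x atTop (𝓝 xbar))
    (hle : ∀ k, ‖f (x k)‖ ≤ b * ‖x (k + 1) - x k‖) : f xbar = 0 := by
  have hlhs : Tendsto (fun k => ‖f (x k)‖) atTop (𝓝 ‖f xbar‖) := (hf.tendsto.comp hx).norm
  have hrhs : Tendsto (fun k => b * ‖x (k + 1) - x k‖) atTop (𝓝 0) := by
    simpa using (((hx.comp (tendsto_add_atTop_nat 1)).sub hx).norm.const_mul b)
  exact norm_le_zero_iff.1 (le_of_tendsto_of_tendsto hlhs hrhs (Eventually.of_forall hle))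

theorem ContDiff.continuous_gradient {E : Type*} [NormedAddCommGroup E] [InnerProductSpace ℝ E]
    [CompleteSpace E] {f : E → ℝ} (hf : ContDiff ℝ 1 f) : Continuous (gradient f) :=
  (InnerProductSpace.toDual ℝ E).symm.continuous.comp (hf.continuous_fderiv one_ne_zero)

theorem global_convergence_H1_H3_basic_PLK_general
    (n : ℕ) (φ : EuclideanSpace ℝ (Fin n) → ℝ)
    (hφ : ContDiff ℝ 1 φ)
    (a b : ℝ) (ha : 0 < a) (hb : 0 < b)
    (x : ℕ → EuclideanSpace ℝ (Fin n))
    (hH1 : ∀ k : ℕ, φ (x (k + 1)) + a * ‖x (k + 1) - x k‖ ^ 2 ≤ φ (x k))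
    (hH3 : ∀ k : ℕ, ‖gradient φ (x k)‖ ≤ b * ‖x (k + 1) - x k‖)
    (xbar : EuclideanSpace ℝ (Fin n))
    (hacc : ∃ σ : ℕ → ℕ, StrictMono σ ∧
      Tendsto (fun j => x (σ j)) atTop (𝓝 xbar))
    (hPLK : ∃ (ε η : ℝ), 0 < ε ∧ 0 < η ∧
      ∃ (ϕ ϕ' : ℝ → ℝ),
        ϕ 0 = 0 ∧
        ContinuousOn ϕ (Set.Icc 0 η) ∧
        ConcaveOn ℝ (Set.Icc 0 η) ϕ ∧
        (∀ s ∈ Set.Icc (0 : ℝ) η, 0 ≤ ϕ s) ∧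
        (∀ s ∈ Set.Ioo (0 : ℝ) η, HasDerivAt ϕ (ϕ' s) s) ∧
        (∀ s ∈ Set.Ioo (0 : ℝ) η, 0 < ϕ' s) ∧
        (∀ y, ‖y - xbar‖ < ε → φ xbar < φ y → φ y < φ xbar + η →
          1 ≤ ϕ' (φ y - φ xbar) * ‖gradient φ y‖)) :
    Summable (fun k => ‖x (k + 1) - x k‖) ∧
      Tendsto x atTop (𝓝 xbar) ∧ gradient φ xbar = 0 := by
  obtain ⟨σ, hσ, hxσ⟩ := hacc
  obtain ⟨ε, η, hε, hη, ϕ, ϕ', hϕ0, hϕc, hϕconc, hϕnn, hϕd, -, hKL⟩ := hPLK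
  have hanti : Antitone (φ ∘ x) := antitone_nat_of_succ_le fun k => by
    simp only [Function.comp_apply]
    linarith [hH1 k, mul_nonneg ha.le (sq_nonneg ‖x (k + 1) - x k‖)]
  have hφx : Tendsto (φ ∘ x) atTop (𝓝 (φ xbar)) :=
    (tendsto_iff_tendsto_subseq_of_antitone hanti hσ.tendsto_atTop).2
      ((hφ.continuous.tendsto xbar).comp hxσ)
  have hge : ∀ k, φ xbar ≤ φ (x k) := hanti.le_of_tendsto hφx
  have hbelow : ∀ᶠ k in atTop, φ (x k) < φ xbar + η :=
    hφx.eventually_lt_const (lt_add_of_pos_right _ hη)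
  have hr : Tendsto (fun k => φ (x k) - φ xbar) atTop (𝓝[Set.Icc 0 η] 0) := by
    refine tendsto_nhdsWithin_iff.2 ⟨by simpa using hφx.sub_const (φ xbar), ?_⟩
    filter_upwards [hbelow] with k hk
    exact ⟨sub_nonneg.2 (hge k), by linarith⟩
  have hψ : Tendsto (fun k => b / a * ϕ (φ (x k) - φ xbar)) atTop (𝓝 0) := by
    simpa [hϕ0] using ((hϕc 0 ⟨le_rfl, hη.le⟩).tendsto.comp hr).const_mul (b / a)
  have hψ₀ : ∀ᶠ k in atTop, 0 ≤ b / a * ϕ (φ (x k) - φ xbar) := by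
    filter_upwards [tendsto_nhdsWithin_iff.1 hr |>.2] with k hk
    exact mul_nonneg (by positivity) (hϕnn _ hk)
  have hstep : ∀ᶠ k in atTop, dist (x k) xbar < ε → dist (x k) (x (k + 1)) ≤
      b / a * ϕ (φ (x k) - φ xbar) - b / a * ϕ (φ (x (k + 1)) - φ xbar) := by
    filter_upwards [hbelow] with k hk hdist
    rw [dist_eq_norm] at hdist
    rw [← mul_sub, dist_comm, dist_eq_norm]
    exact le_mul_sub_of_desingularized_step hϕconc hϕd ha hb.le (norm_nonneg _)
      (sub_nonneg.2 (hge _)) (by linarith) (by linarith [hH1 k]) (hH3 k)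
      fun hpos => hKL _ hdist (sub_pos.1 hpos) hk
  obtain ⟨hsum, hlim⟩ := summable_dist_and_tendsto_of_dist_le_sub hε hσ hxσ hψ hψ₀ hstep
  exact ⟨hsum.congr fun k => by rw [dist_comm, dist_eq_norm], hlim,
    eq_zero_of_norm_le_mul_norm_sub hφ.continuous_gradient.continuousAt hlim hH3⟩

/-- Global convergence of generic descent algorithms satisfying (H1) and (H3)
under the basic PLK condition at an accumulation point of the iterates. -/
theorem global_convergence_H1_H3_basic_PLK
    (n : ℕ) (φ : EuclideanSpace ℝ (Fin n) → ℝ)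
    (hφ : ContDiff ℝ 1 φ)
    (hbdd : ∃ m : ℝ, ∀ x, m ≤ φ x)
    (a b : ℝ) (ha : 0 < a) (hb : 0 < b)
    (x : ℕ → EuclideanSpace ℝ (Fin n))
    (hH1 : ∀ k : ℕ, φ (x (k + 1)) + a * ‖x (k + 1) - x k‖ ^ 2 ≤ φ (x k))
    (hH3 : ∀ k : ℕ, ‖gradient φ (x k)‖ ≤ b * ‖x (k + 1) - x k‖)
    (xbar : EuclideanSpace ℝ (Fin n))
    (hacc : ∃ σ : ℕ → ℕ, StrictMono σ ∧
      Tendsto (fun j => x (σ j)) atTop (𝓝 xbar))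
    (hPLK : ∃ (ε η : ℝ), 0 < ε ∧ 0 < η ∧
      ∃ (ϕ ϕ' : ℝ → ℝ),
        ϕ 0 = 0 ∧
        ContinuousOn ϕ (Set.Icc 0 η) ∧
        ConcaveOn ℝ (Set.Icc 0 η) ϕ ∧
        (∀ s ∈ Set.Icc (0 : ℝ) η, 0 ≤ ϕ s) ∧
        (∀ s ∈ Set.Ioo (0 : ℝ) η, HasDerivAt ϕ (ϕ' s) s) ∧
        (∀ s ∈ Set.Ioo (0 : ℝ) η, 0 < ϕ' s) ∧
        (∀ y, ‖y - xbar‖ < ε → φ xbar < φ y → φ y < φ xbar + η →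
          1 ≤ ϕ' (φ y - φ xbar) * ‖gradient φ y‖)) :
    Summable (fun k => ‖x (k + 1) - x k‖) ∧
      Tendsto x atTop (𝓝 xbar) ∧ gradient φ xbar = 0 :=
  global_convergence_H1_H3_basic_PLK_general n φ hφ a b ha hb x hH1 hH3 xbar hacc hPLK
end

section
/- Let σ > 0, p ∈ (0, 1), and let (a_k) be a monotonically decreasing sequence of nonnegative reals satisfying a_{k+1} ≤ a_k − σ·a_{k+1}^p for all k ∈ ℕ. If (a_k) converges to ā, then ā = 0 and one of the following holds: (i) a_k > 0 for all k and a_{k+1}/a_k → 0 as k → ∞ (superlinear convergence to zero); or (ii) there exists k₀ ∈ ℕ such that a_k = 0 for all k ≥ k₀. -/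
open Filter Topology

/-- Convergence rates for monotone sequences (Lemma 3.2): either superlinear
convergence to zero or finite termination. -/
theorem monotone_sequence_rate
    (σ p : ℝ) (hσ : 0 < σ) (hp : p ∈ Set.Ioo (0 : ℝ) 1)
    (a : ℕ → ℝ) (hnonneg : ∀ k, 0 ≤ a k)
    (hdec : ∀ k, a (k + 1) ≤ a k)
    (hrec : ∀ k, a (k + 1) ≤ a k - σ * (a (k + 1)) ^ p)
    (abar : ℝ) (hconv : Tendsto a atTop (𝓝 abar)) :
    abar = 0 ∧
      (((∀ k, 0 < a k) ∧ Tendsto (fun k => a (k + 1) / a k) atTop (𝓝 0)) ∨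
        (∃ k₀ : ℕ, ∀ k ≥ k₀, a k = 0)) := by
  have hanti : Antitone a := antitone_nat_of_succ_le hdec
  have h1 : Tendsto (fun k => a (k + 1)) atTop (𝓝 abar) :=
    hconv.comp (tendsto_add_atTop_nat 1)
  have habar0 : 0 ≤ abar := ge_of_tendsto' hconv hnonneg
  have habar : abar = 0 := by
    have h2 : Tendsto (fun k => a k - σ * (a (k + 1)) ^ p) atTop
        (𝓝 (abar - σ * abar ^ p)) :=
      hconv.sub (((h1.rpow_const (Or.inr hp.1.le))).const_mul σ)
    have hle : abar ≤ abar - σ * abar ^ p :=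
      le_of_tendsto_of_tendsto' h1 h2 hrec
    have h3 : σ * abar ^ p ≤ 0 := by linarith
    have h4 : abar ^ p = 0 := by
      have := Real.rpow_nonneg habar0 p
      nlinarith
    exact (Real.rpow_eq_zero habar0 hp.1.ne').mp h4
  refine ⟨habar, ?_⟩
  by_cases hpos : ∀ k, 0 < a k
  · left
    refine ⟨hpos, ?_⟩
    have hup : Tendsto (fun k => (a (k + 1)) ^ (1 - p) / σ) atTop (𝓝 0) := by
      have : Tendsto (fun k => (a (k + 1)) ^ (1 - p)) atTop (𝓝 (abar ^ (1 - p))) :=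
        h1.rpow_const (Or.inr (by linarith [hp.2]))
      rw [habar, Real.zero_rpow (by linarith [hp.2] : (1 : ℝ) - p ≠ 0)] at this
      simpa using this.div_const σ
    refine squeeze_zero (fun k => div_nonneg (hnonneg _) (hnonneg _)) (fun k => ?_) hup
    have hak1 := hpos (k + 1)
    have hpden : 0 < σ * (a (k + 1)) ^ p :=
      mul_pos hσ (Real.rpow_pos_of_pos hak1 p)
    have hden : σ * (a (k + 1)) ^ p ≤ a k := by linarith [hrec k]
    have step1 : a (k + 1) / a k ≤ a (k + 1) / (σ * (a (k + 1)) ^ p) :=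
      div_le_div_of_nonneg_left (hnonneg _) hpden hden
    have step2 : a (k + 1) / (σ * (a (k + 1)) ^ p) = (a (k + 1)) ^ (1 - p) / σ := by
      rw [Real.rpow_sub hak1, Real.rpow_one, mul_comm, ← div_div]
    linarith [step1, step2 ▸ step1]
  · right
    push_neg at hpos
    obtain ⟨k₀, hk₀⟩ := hpos
    refine ⟨k₀, fun k hk => le_antisymm ?_ (hnonneg k)⟩
    calc a k ≤ a k₀ := hanti hk
    _ ≤ 0 := hk₀
end

section
/- Let φ : ℝⁿ → ℝ be continuously differentiable and bounded from below, let a, b > 0, let (x^k) satisfy the sufficient-decrease condition (H1) and the relative-error condition (H2), let x̄ be an accumulation point of (x^k), and suppose φ satisfies the exponent PLK condition at x̄ with exponent q = 0 and some constant M > 0. Then the value sequence (φ(x^k)) terminates at φ(x̄) in finitely many steps: there exists K ∈ ℕ such that φ(x^k) = φ(x̄) for all k ≥ K. -/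
open Filter Topology

theorem value_finite_termination_q0_H2
    (n : ℕ) (φ : EuclideanSpace ℝ (Fin n) → ℝ)
    (hφ : ContDiff ℝ 1 φ)
    (hbdd : ∃ m : ℝ, ∀ x, m ≤ φ x)
    (a b : ℝ) (ha : 0 < a) (hb : 0 < b)
    (x : ℕ → EuclideanSpace ℝ (Fin n))
    (hH1 : ∀ k : ℕ, φ (x (k + 1)) + a * ‖x (k + 1) - x k‖ ^ 2 ≤ φ (x k))
    (hH2 : ∀ k : ℕ, ‖gradient φ (x (k + 1))‖ ≤ b * ‖x (k + 1) - x k‖)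
    (xbar : EuclideanSpace ℝ (Fin n))
    (hacc : ∃ σ : ℕ → ℕ, StrictMono σ ∧
      Tendsto (fun j => x (σ j)) atTop (𝓝 xbar))
    (q : ℝ) (hq : q = 0)
    (M : ℝ) (hM : 0 < M)
    (hPLK : ∃ ε η : ℝ, 0 < ε ∧ 0 < η ∧
      ∀ y, ‖y - xbar‖ < ε → φ xbar < φ y → φ y < φ xbar + η →
        (1 / (M * (1 - q))) * (φ y - φ xbar) ^ q ≤ ‖gradient φ y‖) :
    ∃ K : ℕ, ∀ k ≥ K, φ (x k) = φ xbar := by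
  subst hq
  obtain ⟨m, hm⟩ := hbdd
  obtain ⟨σ, hσmono, hσlim⟩ := hacc
  obtain ⟨ε, η, hε, hη, hKL⟩ := hPLK
  have hmono : ∀ k, φ (x (k + 1)) ≤ φ (x k) := fun k => by
    nlinarith [hH1 k, mul_nonneg ha.le (sq_nonneg ‖x (k + 1) - x k‖)]
  have hanti : Antitone (fun k => φ (x k)) := antitone_nat_of_succ_le hmono
  have hbb : BddBelow (Set.range fun k => φ (x k)) :=
    ⟨m, by rintro _ ⟨k, rfl⟩; exact hm _⟩
  have hconv : Tendsto (fun k => φ (x k)) atTop (𝓝 (⨅ k, φ (x k))) :=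
    tendsto_atTop_ciInf hanti hbb
  have hsub1 : Tendsto (fun j => φ (x (σ j))) atTop (𝓝 (⨅ k, φ (x k))) :=
    hconv.comp hσmono.tendsto_atTop
  have hsub2 : Tendsto (fun j => φ (x (σ j))) atTop (𝓝 (φ xbar)) :=
    (hφ.continuous.tendsto xbar).comp hσlim
  have hL : (⨅ k, φ (x k)) = φ xbar := tendsto_nhds_unique hsub1 hsub2
  have hge : ∀ k, φ xbar ≤ φ (x k) := fun k => hL ▸ ciInf_le hbb k
  suffices h : ∃ K, φ (x K) = φ xbar by
    obtain ⟨K, hK⟩ := h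
    exact ⟨K, fun k hk => le_antisymm (le_trans (hanti hk) hK.le) (hge k)⟩
  by_contra hcon
  push_neg at hcon
  have hgt : ∀ k, φ xbar < φ (x k) := fun k => lt_of_le_of_ne (hge k) (Ne.symm (hcon k))
  have hφlim : Tendsto (fun k => φ (x k)) atTop (𝓝 (φ xbar)) := hL ▸ hconv
  have hshift : Tendsto (fun k => φ (x (k + 1))) atTop (𝓝 (φ xbar)) :=
    (tendsto_add_atTop_iff_nat 1).2 hφlim
  have hdiff : Tendsto (fun k => (φ (x k) - φ (x (k + 1))) / a) atTop (𝓝 0) := by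
    have := (hφlim.sub hshift).div_const a
    simpa using this
  have hd2 : Tendsto (fun k => ‖x (k + 1) - x k‖ ^ 2) atTop (𝓝 0) :=
    squeeze_zero (fun k => sq_nonneg _)
      (fun k => by rw [le_div_iff₀ ha]; nlinarith [hH1 k]) hdiff
  have hd : Tendsto (fun k => ‖x (k + 1) - x k‖) atTop (𝓝 0) := by
    have h := (Real.continuous_sqrt.tendsto 0).comp hd2
    simpa [Function.comp_def, Real.sqrt_sq (norm_nonneg _)] using h
  have hgrad : Tendsto (fun k => ‖gradient φ (x (k + 1))‖) atTop (𝓝 0) :=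
    squeeze_zero (fun k => norm_nonneg _) hH2 (by simpa using hd.const_mul b)
  have hgrad' : Tendsto (fun k => ‖gradient φ (x k)‖) atTop (𝓝 0) :=
    (tendsto_add_atTop_iff_nat 1).1 hgrad
  have h1 : ∀ᶠ j in atTop, ‖x (σ j) - xbar‖ < ε := by
    have := hσlim (Metric.ball_mem_nhds xbar hε)
    filter_upwards [this] with j hj
    simpa [dist_eq_norm] using hj
  have h2 : ∀ᶠ j in atTop, φ (x (σ j)) < φ xbar + η :=
    hsub2.eventually_lt_const (by linarith)
  have h3 : ∀ᶠ j in atTop, ‖gradient φ (x (σ j))‖ < 1 / M :=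
    (hgrad'.comp hσmono.tendsto_atTop).eventually_lt_const (by positivity)
  obtain ⟨j, hj1, hj2, hj3⟩ := (h1.and (h2.and h3)).exists
  have := hKL (x (σ j)) hj1 (hgt _) hj2
  rw [Real.rpow_zero] at this
  have hM' : 1 / (M * (1 - 0)) = 1 / M := by ring_nf
  rw [hM'] at this
  linarith
end

section
/- Let φ : ℝⁿ → ℝ be continuously differentiable and bounded from below, let a, b > 0, let (x^k) satisfy the sufficient-decrease condition (H1) and the relative-error condition (H2), let x̄ be an accumulation point of (x^k), and suppose φ satisfies the exponent PLK condition at x̄ with exponent q ∈ (0, 1/2) and some constant M > 0. Then either there exists K ∈ ℕ such that φ(x^k) = φ(x̄) for all k ≥ K, or φ(x^k) > φ(x̄) for all k and (φ(x^{k+1}) − φ(x̄))/(φ(x^k) − φ(x̄)) → 0 as k → ∞ (Q-superlinear convergence of the values to φ(x̄)). -/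
/-!
Write `r k = φ (x k) - φ x̄`. Near `x̄` the PLK inequality and (H2) give `c r_{k+1}^q ≤ b d_k`
with `d_k = ‖x_{k+1} - x_k‖`, while (H1) gives `a d_k² ≤ r_k`; hence `r_{k+1}^{2q} ≤ C r_k`, i.e.
`r_{k+1} ≤ ρ_k r_k` with `ρ_k = C^p r_k^{p-1}` and `p = 1/(2q) > 1`. Since `r_k → 0`, `ρ_k → 0`,
which is the superlinear rate once the iterates stay near `x̄`. They do: as soon as `ρ_k ≤ 1/4`,
`√(r_k / a)` at least halves at each step and bounds `d_k`, so `‖x_k - x̄‖ + 2 √(r_k / a)` cannot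
increase and an iterate close to `x̄` with small value gap never leaves the PLK neighbourhood.
-/

open Filter Topology

lemma rpow_le_rpow_inv_of_mul_sq_le {a b c q t u d : ℝ} (ha : 0 < a) (hc : 0 < c) (hq : 0 < q)
    (ht : 0 ≤ t) (hu : 0 ≤ u) (hdesc : a * d ^ 2 ≤ u) (hgrad : c * t ^ q ≤ b * d) :
    t ≤ (b ^ 2 / (a * c ^ 2) * u) ^ (2 * q)⁻¹ := by
  rw [Real.le_rpow_inv_iff_of_pos ht (by positivity) (by positivity), mul_comm 2 q,
    Real.rpow_mul ht, Real.rpow_two, div_mul_eq_mul_div, le_div_iff₀ (by positivity)]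
  have hsq : (c * t ^ q) ^ 2 ≤ (b * d) ^ 2 :=
    pow_le_pow_left₀ (by positivity) hgrad 2
  nlinarith [sq_nonneg b]

lemma mul_rpow_eq_mul_rpow_sub_one_mul {C u p : ℝ} (hC : 0 ≤ C) (hu : 0 < u) :
    (C * u) ^ p = C ^ p * u ^ (p - 1) * u := by
  rw [Real.mul_rpow hC hu.le, Real.rpow_sub_one hu.ne', mul_assoc, div_mul_cancel₀ _ hu.ne']

lemma tendsto_const_mul_rpow_nhds_zero {α : Type*} {l : Filter α} {f : α → ℝ} {K e : ℝ}
    (he : 0 < e) (hf : Tendsto f l (𝓝 0)) : Tendsto (fun y => K * f y ^ e) l (𝓝 0) := by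
  simpa [Real.zero_rpow he.ne'] using (hf.rpow_const (Or.inr he.le)).const_mul K

lemma tendsto_succ_div_nhds_zero {r ρ : ℕ → ℝ} (hr : ∀ k, 0 < r k) (hρ : Tendsto ρ atTop (𝓝 0))
    (h : ∀ᶠ k in atTop, r (k + 1) ≤ ρ k * r k) :
    Tendsto (fun k => r (k + 1) / r k) atTop (𝓝 0) :=
  squeeze_zero' (.of_forall fun _ => div_nonneg (hr _).le (hr _).le)
    (h.mono fun k hk => (div_le_iff₀ (hr k)).2 hk) hρ

lemma norm_sub_lt_of_halving {E : Type*} [SeminormedAddCommGroup E] {x : ℕ → E} {s : ℕ → ℝ}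
    {y : E} {ε : ℝ} {N : ℕ} (hs : ∀ k, ‖x (k + 1) - x k‖ ≤ s k)
    (hhalf : ∀ k, N ≤ k → ‖x (k + 1) - y‖ < ε → 2 * s (k + 1) ≤ s k)
    (hN : ‖x N - y‖ + 2 * s N < ε) {k : ℕ} (hk : N ≤ k) : ‖x k - y‖ < ε := by
  have hs0 : ∀ k, 0 ≤ s k := fun k => (norm_nonneg _).trans (hs k)
  suffices ‖x k - y‖ + 2 * s k < ε by linarith [hs0 k]
  induction k, hk using Nat.le_induction with
  | base => exact hN
  | succ k hk ih =>
    have hnext : ‖x (k + 1) - y‖ ≤ ‖x k - y‖ + s k := by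
      linarith [norm_sub_le_norm_sub_add_norm_sub (x (k + 1)) (x k) y, hs k]
    linarith [hhalf k hk (by linarith [hs0 k]), hs0 k]

lemma two_mul_sqrt_div_le {u v a : ℝ} (ha : 0 < a) (h : 4 * u ≤ v) : 2 * √(u / a) ≤ √(v / a) := by
  rw [show (2 : ℝ) = √4 by rw [show (4 : ℝ) = 2 ^ 2 by norm_num, Real.sqrt_sq zero_le_two],
    ← Real.sqrt_mul zero_le_four, mul_div_assoc']
  gcongr

theorem tendsto_succ_div_of_descent {E : Type*} [SeminormedAddCommGroup E] {x : ℕ → E} {y : E}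
    {r : ℕ → ℝ} {a b c q ε η : ℝ} (ha : 0 < a) (hc : 0 < c) (hq : q ∈ Set.Ioo (0 : ℝ) (1 / 2))
    (hε : 0 < ε) (hη : 0 < η) (hr : ∀ k, 0 < r k) (hlim : Tendsto r atTop (𝓝 0))
    (hy : MapClusterPt y atTop x) (hdesc : ∀ k, a * ‖x (k + 1) - x k‖ ^ 2 ≤ r k)
    (hgrad : ∀ k, ‖x (k + 1) - y‖ < ε → r (k + 1) < η → c * r (k + 1) ^ q ≤ b * ‖x (k + 1) - x k‖) :
    Tendsto (fun k => r (k + 1) / r k) atTop (𝓝 0) := by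
  obtain ⟨hq0, hq2⟩ := hq
  set p := (2 * q)⁻¹
  set C := b ^ 2 / (a * c ^ 2)
  set ρ : ℕ → ℝ := fun k => C ^ p * r k ^ (p - 1)
  have hp : 1 < p := by rw [lt_inv_comm₀ one_pos (by positivity)]; linarith
  have hρ : Tendsto ρ atTop (𝓝 0) := tendsto_const_mul_rpow_nhds_zero (by linarith) hlim
  have hstep : ∀ k, ‖x (k + 1) - y‖ < ε → r (k + 1) < η → r (k + 1) ≤ ρ k * r k := fun k h1 h2 =>
    calc r (k + 1) ≤ (C * r k) ^ p := rpow_le_rpow_inv_of_mul_sq_le ha hc hq0 (hr _).le (hr _).le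
          (hdesc k) (hgrad k h1 h2)
      _ = ρ k * r k := mul_rpow_eq_mul_rpow_sub_one_mul (by positivity) (hr k)
  have hsqrt : Tendsto (fun k => 2 * √(r k / a)) atTop (𝓝 0) := by
    simpa using ((hlim.div_const a).sqrt).const_mul 2
  have hquarter : (0 : ℝ) < 1 / 4 := by norm_num
  obtain ⟨N₀, hN₀⟩ := eventually_atTop.1 <|
    (hρ.eventually (ge_mem_nhds hquarter)).and (hlim.eventually (gt_mem_nhds hη))
  obtain ⟨N, hN, hNy, hNr⟩ := frequently_atTop.1 ((hy.frequently
    (Metric.ball_mem_nhds y (half_pos hε))).and_eventually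
    (hsqrt.eventually (gt_mem_nhds (half_pos hε)))) N₀
  have hball : ∀ k, N ≤ k → ‖x k - y‖ < ε := fun k hk => by
    refine norm_sub_lt_of_halving (s := fun j => √(r j / a)) (fun j => ?_) (fun j hj hjy => ?_)
      (by rw [dist_eq_norm] at hNy; linarith) hk
    · rw [Real.le_sqrt (norm_nonneg _) (div_nonneg (hr j).le ha.le), le_div_iff₀ ha]
      linarith [hdesc j]
    · refine two_mul_sqrt_div_le ha ?_
      linarith [hstep j hjy (hN₀ (j + 1) (by omega)).2,
        mul_le_mul_of_nonneg_right (hN₀ j (by omega)).1 (hr j).le]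
  exact tendsto_succ_div_nhds_zero hr hρ <| eventually_atTop.2
    ⟨N, fun k hk => hstep k (hball _ (by omega)) (hN₀ (k + 1) (by omega)).2⟩

theorem value_superlinear_lower_exponent_H2_general
    (n : ℕ) (φ : EuclideanSpace ℝ (Fin n) → ℝ)
    (hφ : ContDiff ℝ 1 φ)
    (a b : ℝ) (ha : 0 < a)
    (x : ℕ → EuclideanSpace ℝ (Fin n))
    (hH1 : ∀ k : ℕ, φ (x (k + 1)) + a * ‖x (k + 1) - x k‖ ^ 2 ≤ φ (x k))
    (hH2 : ∀ k : ℕ, ‖gradient φ (x (k + 1))‖ ≤ b * ‖x (k + 1) - x k‖)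
    (xbar : EuclideanSpace ℝ (Fin n))
    (hacc : ∃ σ : ℕ → ℕ, StrictMono σ ∧
      Tendsto (fun j => x (σ j)) atTop (𝓝 xbar))
    (q : ℝ) (hq : q ∈ Set.Ioo (0 : ℝ) (1/2))
    (M : ℝ) (hM : 0 < M)
    (hPLK : ∃ ε η : ℝ, 0 < ε ∧ 0 < η ∧
      ∀ y, ‖y - xbar‖ < ε → φ xbar < φ y → φ y < φ xbar + η →
        (1 / (M * (1 - q))) * (φ y - φ xbar) ^ q ≤ ‖gradient φ y‖) :
    (∃ K : ℕ, ∀ k ≥ K, φ (x k) = φ xbar) ∨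
      ((∀ k : ℕ, φ xbar < φ (x k)) ∧
        Tendsto (fun k => (φ (x (k + 1)) - φ xbar) / (φ (x k) - φ xbar))
          atTop (𝓝 0)) := by
  obtain ⟨ε, η, hε, hη, hPLK⟩ := hPLK
  obtain ⟨σ, hσ, hσx⟩ := hacc
  have hanti : Antitone fun k => φ (x k) :=
    antitone_nat_of_succ_le fun k => by nlinarith [hH1 k, sq_nonneg ‖x (k + 1) - x k‖]
  have hlim : Tendsto (fun k => φ (x k)) atTop (𝓝 (φ xbar)) :=
    (tendsto_iff_tendsto_subseq_of_antitone hanti hσ.tendsto_atTop).2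
      ((hφ.continuous.tendsto xbar).comp hσx)
  have hge : ∀ k, φ xbar ≤ φ (x k) := hanti.le_of_tendsto hlim
  by_cases hreach : ∃ K, φ (x K) = φ xbar
  · obtain ⟨K, hK⟩ := hreach
    exact .inl ⟨K, fun k hk => le_antisymm (hK ▸ hanti hk) (hge k)⟩
  simp only [not_exists] at hreach
  have hpos : ∀ k, φ xbar < φ (x k) := fun k => (hge k).lt_of_ne (Ne.symm (hreach k))
  have hc : 0 < 1 / (M * (1 - q)) := one_div_pos.2 (mul_pos hM (by linarith [hq.2]))
  refine .inr ⟨hpos, tendsto_succ_div_of_descent ha hc hq hε hη (fun k => sub_pos.2 (hpos k))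
    (by simpa using hlim.sub_const (φ xbar)) (.of_comp hσ.tendsto_atTop hσx.mapClusterPt)
    (fun k => by linarith [hH1 k, hge (k + 1)])
    (fun k h1 h2 => (hPLK _ h1 (hpos _) (by linarith)).trans (hH2 k))⟩

theorem value_superlinear_lower_exponent_H2
    (n : ℕ) (φ : EuclideanSpace ℝ (Fin n) → ℝ)
    (hφ : ContDiff ℝ 1 φ)
    (hbdd : ∃ m : ℝ, ∀ x, m ≤ φ x)
    (a b : ℝ) (ha : 0 < a) (hb : 0 < b)
    (x : ℕ → EuclideanSpace ℝ (Fin n))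
    (hH1 : ∀ k : ℕ, φ (x (k + 1)) + a * ‖x (k + 1) - x k‖ ^ 2 ≤ φ (x k))
    (hH2 : ∀ k : ℕ, ‖gradient φ (x (k + 1))‖ ≤ b * ‖x (k + 1) - x k‖)
    (xbar : EuclideanSpace ℝ (Fin n))
    (hacc : ∃ σ : ℕ → ℕ, StrictMono σ ∧
      Tendsto (fun j => x (σ j)) atTop (𝓝 xbar))
    (q : ℝ) (hq : q ∈ Set.Ioo (0 : ℝ) (1/2))
    (M : ℝ) (hM : 0 < M)
    (hPLK : ∃ ε η : ℝ, 0 < ε ∧ 0 < η ∧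
      ∀ y, ‖y - xbar‖ < ε → φ xbar < φ y → φ y < φ xbar + η →
        (1 / (M * (1 - q))) * (φ y - φ xbar) ^ q ≤ ‖gradient φ y‖) :
    (∃ K : ℕ, ∀ k ≥ K, φ (x k) = φ xbar) ∨
      ((∀ k : ℕ, φ xbar < φ (x k)) ∧
        Tendsto (fun k => (φ (x (k + 1)) - φ xbar) / (φ (x k) - φ xbar))
          atTop (𝓝 0)) :=
  value_superlinear_lower_exponent_H2_general n φ hφ a b ha x hH1 hH2 xbar hacc q hq M hM hPLK
end

section
/- Let φ : ℝⁿ → ℝ be continuously differentiable and bounded from below, let a, b > 0, let (x^k) satisfy the sufficient-decrease condition (H1) and the relative-error condition (H2), let x̄ be an accumulation point of (x^k), and suppose φ satisfies the exponent PLK condition at x̄ with exponent q = 1/2 and some constant M > 0. Then the value sequence converges Q-linearly to φ(x̄): there exist ρ ∈ (0,1) and K ∈ ℕ such that φ(x^{k+1}) − φ(x̄) ≤ ρ(φ(x^k) − φ(x̄)) for all k ≥ K. -/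
open Filter Topology

private lemma geom_sum_le_aux (s : ℝ) (h0 : 0 ≤ s) (h1 : s < 1) (n : ℕ) :
    ∑ i ∈ Finset.range n, s ^ i ≤ 1 / (1 - s) := by
  rw [geom_sum_eq h1.ne]
  have hden : (0:ℝ) < 1 - s := by linarith
  have : (s ^ n - 1) / (s - 1) = (1 - s ^ n) / (1 - s) := by
    rw [div_eq_div_iff (by linarith) (by linarith)]; ring
  rw [this]
  apply (div_le_div_iff_of_pos_right hden).mpr
  have := pow_nonneg h0 n; linarith

set_option maxHeartbeats 1000000 in
theorem value_linear_q_half_H2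
    (n : ℕ) (φ : EuclideanSpace ℝ (Fin n) → ℝ)
    (hφ : ContDiff ℝ 1 φ)
    (hbdd : ∃ m : ℝ, ∀ x, m ≤ φ x)
    (a b : ℝ) (ha : 0 < a) (hb : 0 < b)
    (x : ℕ → EuclideanSpace ℝ (Fin n))
    (hH1 : ∀ k : ℕ, φ (x (k + 1)) + a * ‖x (k + 1) - x k‖ ^ 2 ≤ φ (x k))
    (hH2 : ∀ k : ℕ, ‖gradient φ (x (k + 1))‖ ≤ b * ‖x (k + 1) - x k‖)
    (xbar : EuclideanSpace ℝ (Fin n))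
    (hacc : ∃ σ : ℕ → ℕ, StrictMono σ ∧
      Tendsto (fun j => x (σ j)) atTop (𝓝 xbar))
    (q : ℝ) (hq : q = 1/2)
    (M : ℝ) (hM : 0 < M)
    (hPLK : ∃ ε η : ℝ, 0 < ε ∧ 0 < η ∧
      ∀ y, ‖y - xbar‖ < ε → φ xbar < φ y → φ y < φ xbar + η →
        (1 / (M * (1 - q))) * (φ y - φ xbar) ^ q ≤ ‖gradient φ y‖) :
    ∃ ρ ∈ Set.Ioo (0 : ℝ) 1, ∃ K : ℕ, ∀ k ≥ K,
      φ (x (k + 1)) - φ xbar ≤ ρ * (φ (x k) - φ xbar) := by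
  obtain ⟨ε, η, hε, hη, hKL⟩ := hPLK
  obtain ⟨σ, hσ, hxl⟩ := hacc
  set r : ℕ → ℝ := fun k => φ (x k) - φ xbar with hr
  have hsq : ∀ k, a * ‖x (k + 1) - x k‖ ^ 2 ≤ r k - r (k + 1) := by
    intro k; have := hH1 k; simp only [hr]; linarith
  have hmono : ∀ k, r (k + 1) ≤ r k := by
    intro k
    have h1 := hsq k
    nlinarith [sq_nonneg ‖x (k + 1) - x k‖, ha.le]
  have hanti : Antitone r := antitone_nat_of_succ_le hmono
  obtain ⟨m0, hm0⟩ := hbdd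
  have hbddr : BddBelow (Set.range r) := by
    refine ⟨m0 - φ xbar, ?_⟩
    rintro _ ⟨k, rfl⟩
    simp only [hr]
    have := hm0 (x k); linarith
  have htends : Tendsto r atTop (𝓝 (⨅ k, r k)) := tendsto_atTop_ciInf hanti hbddr
  have hφcont : Tendsto (fun j => φ (x (σ j))) atTop (𝓝 (φ xbar)) :=
    (hφ.continuous.tendsto xbar).comp hxl
  have hsub : Tendsto (fun j => r (σ j)) atTop (𝓝 (⨅ k, r k)) :=
    htends.comp hσ.tendsto_atTop
  have hrsub : Tendsto (fun j => r (σ j)) atTop (𝓝 0) := by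
    have h := hφcont.sub (tendsto_const_nhds (x := φ xbar))
    simpa [hr] using h
  have hinf0 : (⨅ k, r k) = 0 := tendsto_nhds_unique hsub hrsub
  have htend0 : Tendsto r atTop (𝓝 0) := hinf0 ▸ htends
  have hr0 : ∀ k, 0 ≤ r k := fun k => hanti.le_of_tendsto htend0 k
  -- the rate
  set ρ : ℝ := (b ^ 2 * M ^ 2) / (b ^ 2 * M ^ 2 + 4 * a) with hρdef
  have hρpos : 0 < ρ := by positivity
  have hρlt : ρ < 1 := by
    rw [hρdef, div_lt_one (by positivity)]; nlinarith
  set s : ℝ := Real.sqrt ρ with hsdef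
  have hs0 : 0 ≤ s := Real.sqrt_nonneg ρ
  have hs1 : s < 1 := by
    have := Real.sqrt_lt_sqrt hρpos.le hρlt
    simpa [hsdef] using this
  have hden : (0:ℝ) < 1 - s := by linarith
  -- one-step inequality
  have hstep : ∀ k, ‖x (k + 1) - xbar‖ < ε → r (k + 1) < η → r (k + 1) ≤ ρ * r k := by
    intro k hnear hlt
    rcases le_or_gt (r (k + 1)) 0 with h0 | h0
    · have h0' : r (k + 1) = 0 := le_antisymm h0 (hr0 _)
      rw [h0']
      exact mul_nonneg hρpos.le (hr0 k)
    · have hlow : φ xbar < φ (x (k + 1)) := by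
        have := h0; simp only [hr] at this; linarith
      have hup : φ (x (k + 1)) < φ xbar + η := by
        have := hlt; simp only [hr] at this; linarith
      have hKLk := hKL (x (k + 1)) hnear hlow hup
      rw [hq] at hKLk
      have hrpow : (φ (x (k + 1)) - φ xbar) ^ ((1:ℝ) / 2) = Real.sqrt (r (k + 1)) := by
        simp only [hr, Real.sqrt_eq_rpow]
      rw [hrpow] at hKLk
      have hcoef : (1 / (M * (1 - 1 / 2))) = 2 / M := by
        field_simp
        norm_num
      rw [hcoef] at hKLk
      have hchain : (2 / M) * Real.sqrt (r (k + 1)) ≤ b * ‖x (k + 1) - x k‖ :=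
        hKLk.trans (hH2 k)
      have h2s : 2 * Real.sqrt (r (k + 1)) ≤ M * (b * ‖x (k + 1) - x k‖) := by
        rw [div_mul_eq_mul_div, div_le_iff₀ hM] at hchain
        nlinarith [hchain]
      have hsq2 : (2 * Real.sqrt (r (k + 1))) ^ 2 ≤ (M * (b * ‖x (k + 1) - x k‖)) ^ 2 := by
        apply pow_le_pow_left₀ (by positivity) h2s
      have hss : Real.sqrt (r (k + 1)) ^ 2 = r (k + 1) := Real.sq_sqrt (hr0 _)
      have hsqk := hsq k
      have hmaster : r (k + 1) * (b ^ 2 * M ^ 2 + 4 * a) ≤ b ^ 2 * M ^ 2 * r k := by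
        nlinarith [hsq2, hss, hsqk, mul_le_mul_of_nonneg_left hsqk
          (show (0:ℝ) ≤ M ^ 2 * b ^ 2 by positivity), sq_nonneg ‖x (k + 1) - x k‖]
      rw [hρdef, div_mul_eq_mul_div, le_div_iff₀ (by positivity)]
      linarith [hmaster]
  -- bound on step lengths
  have hdist : ∀ k, ‖x (k + 1) - x k‖ ≤ Real.sqrt (r k / a) := by
    intro k
    rw [← Real.sqrt_sq (norm_nonneg (x (k + 1) - x k))]
    apply Real.sqrt_le_sqrt
    rw [le_div_iff₀ ha]
    nlinarith [hsq k, hr0 (k + 1)]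
  -- choose K
  have hδpos : 0 < a * ((ε / 2) * (1 - s)) ^ 2 := by positivity
  set δ : ℝ := a * ((ε / 2) * (1 - s)) ^ 2 with hδdef
  have hev1 : ∀ᶠ j in atTop, ‖x (σ j) - xbar‖ < ε / 2 := by
    obtain ⟨N, hN⟩ := Metric.tendsto_atTop.mp hxl (ε / 2) (half_pos hε)
    filter_upwards [eventually_ge_atTop N] with j hj
    rw [← dist_eq_norm]
    exact hN j hj
  have hev2 : ∀ᶠ j in atTop, r (σ j) < min η δ :=
    hrsub.eventually_lt_const (lt_min hη hδpos)
  obtain ⟨j0, hj1, hj2⟩ := (hev1.and hev2).exists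
  set K : ℕ := σ j0 with hKdef
  have hrKη : r K < η := lt_of_lt_of_le hj2 (min_le_left _ _)
  have hrKδ : r K < δ := lt_of_lt_of_le hj2 (min_le_right _ _)
  -- sqrt(r K / a) < (ε/2)(1-s)
  have hsqrtK : Real.sqrt (r K / a) < (ε / 2) * (1 - s) := by
    have h1 : r K / a < δ / a := by
      exact (div_lt_div_iff_of_pos_right ha).mpr hrKδ
    have h2 : Real.sqrt (r K / a) < Real.sqrt (δ / a) :=
      Real.sqrt_lt_sqrt (div_nonneg (hr0 K) ha.le) h1
    have h3 : δ / a = ((ε / 2) * (1 - s)) ^ 2 := by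
      rw [hδdef, mul_comm, mul_div_assoc, div_self ha.ne', mul_one]
    rw [h3, Real.sqrt_sq (mul_nonneg (by linarith) hden.le)] at h2
    exact h2
  -- (√ρ)^m = √(ρ^m)
  have hsqrtpow : ∀ m : ℕ, Real.sqrt (ρ ^ m) = s ^ m := by
    intro m
    have h1 : (s ^ m) ^ 2 = ρ ^ m := by
      rw [← pow_mul, mul_comm, pow_mul, hsdef, Real.sq_sqrt hρpos.le]
    rw [← h1, Real.sqrt_sq (pow_nonneg hs0 m)]
  -- nearness from the sum bound
  have hnear_all : ∀ m : ℕ,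
      (∑ i ∈ Finset.range m, ‖x (K + i + 1) - x (K + i)‖) ≤
        Real.sqrt (r K / a) * ∑ i ∈ Finset.range m, s ^ i →
      ‖x (K + m) - xbar‖ < ε := by
    intro m hsum
    have htri : ‖x (K + m) - xbar‖ ≤
        (∑ i ∈ Finset.range m, ‖x (K + i + 1) - x (K + i)‖) + ‖x K - xbar‖ := by
      have h1 := dist_le_range_sum_dist (fun i => x (K + i)) m
      simp only [dist_eq_norm] at h1
      have h2 : ‖x (K + m) - xbar‖ ≤ ‖x K - x (K + m)‖ + ‖x K - xbar‖ := by
        have := norm_sub_le (x K - x (K + m)) (x K - xbar)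
        calc ‖x (K + m) - xbar‖ = ‖(x K - xbar) - (x K - x (K + m))‖ := by
              congr 1; abel
          _ ≤ ‖x K - xbar‖ + ‖x K - x (K + m)‖ := norm_sub_le _ _
          _ = ‖x K - x (K + m)‖ + ‖x K - xbar‖ := by ring
      have h3 : ‖x K - x (K + m)‖ ≤ ∑ i ∈ Finset.range m, ‖x (K + i + 1) - x (K + i)‖ := by
        refine h1.trans_eq ?_
        refine Finset.sum_congr rfl fun i _ => ?_
        rw [norm_sub_rev]
        rfl
      linarith
    have hgeom : (∑ i ∈ Finset.range m, s ^ i) ≤ 1 / (1 - s) :=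
      geom_sum_le_aux s hs0 hs1 m
    have hprod : Real.sqrt (r K / a) * (∑ i ∈ Finset.range m, s ^ i) < ε / 2 := by
      calc Real.sqrt (r K / a) * (∑ i ∈ Finset.range m, s ^ i)
          ≤ Real.sqrt (r K / a) * (1 / (1 - s)) := by
            apply mul_le_mul_of_nonneg_left hgeom (Real.sqrt_nonneg _)
        _ < ((ε / 2) * (1 - s)) * (1 / (1 - s)) := by
            apply mul_lt_mul_of_pos_right hsqrtK (one_div_pos.mpr hden)
        _ = ε / 2 := by field_simp
    linarith [hj1, hsum.trans_lt hprod, htri]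
  -- main induction
  have key : ∀ m : ℕ, r (K + m) ≤ ρ ^ m * r K ∧
      (∑ i ∈ Finset.range m, ‖x (K + i + 1) - x (K + i)‖) ≤
        Real.sqrt (r K / a) * ∑ i ∈ Finset.range m, s ^ i := by
    intro m
    induction m with
    | zero => simp
    | succ m ih =>
      obtain ⟨ihA, ihB⟩ := ih
      have hterm : ‖x (K + m + 1) - x (K + m)‖ ≤ Real.sqrt (r K / a) * s ^ m := by
        calc ‖x (K + m + 1) - x (K + m)‖ ≤ Real.sqrt (r (K + m) / a) := hdist _
          _ ≤ Real.sqrt (ρ ^ m * r K / a) := by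
              apply Real.sqrt_le_sqrt
              exact (div_le_div_iff_of_pos_right ha).mpr ihA
          _ = Real.sqrt (r K / a) * s ^ m := by
              rw [show ρ ^ m * r K / a = ρ ^ m * (r K / a) by ring,
                Real.sqrt_mul (pow_nonneg hρpos.le m), hsqrtpow m, mul_comm]
      have hsumB : (∑ i ∈ Finset.range (m + 1), ‖x (K + i + 1) - x (K + i)‖) ≤
          Real.sqrt (r K / a) * ∑ i ∈ Finset.range (m + 1), s ^ i := by
        rw [Finset.sum_range_succ, Finset.sum_range_succ, mul_add]
        exact add_le_add ihB hterm
      have hnear : ‖x (K + (m + 1)) - xbar‖ < ε := hnear_all (m + 1) hsumB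
      have hrlt : r (K + m + 1) < η := by
        have h1 : r (K + m + 1) ≤ r (K + m) := hmono _
        have h2 : ρ ^ m * r K ≤ r K := by
          have := pow_le_one₀ hρpos.le hρlt.le (n := m)
          nlinarith [hr0 K]
        linarith [ihA, hrKη]
      have hA := hstep (K + m) (by exact hnear) hrlt
      refine ⟨?_, hsumB⟩
      calc r (K + (m + 1)) = r (K + m + 1) := by rw [← Nat.add_assoc]
        _ ≤ ρ * r (K + m) := hA
        _ ≤ ρ * (ρ ^ m * r K) := mul_le_mul_of_nonneg_left ihA hρpos.le
        _ = ρ ^ (m + 1) * r K := by ring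
  -- conclusion
  refine ⟨ρ, ⟨hρpos, hρlt⟩, K, ?_⟩
  intro k hk
  obtain ⟨m, rfl⟩ := Nat.exists_eq_add_of_le hk
  have hnear : ‖x (K + m + 1) - xbar‖ < ε := by
    have := hnear_all (m + 1) (key (m + 1)).2
    rwa [← Nat.add_assoc] at this
  have hrlt : r (K + m + 1) < η := by
    have h1 : r (K + m + 1) ≤ r (K + m) := hmono _
    have h2 : ρ ^ m * r K ≤ r K := by
      have := pow_le_one₀ hρpos.le hρlt.le (n := m)
      nlinarith [hr0 K]
    linarith [(key m).1, hrKη]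
  have := hstep (K + m) hnear hrlt
  simp only [hr] at this
  exact this
end

section
/- Let φ : ℝⁿ → ℝ be continuously differentiable and bounded from below, let a, b > 0, let (x^k) satisfy the sufficient-decrease condition (H1) and the relative-error condition (H2), let x̄ be an accumulation point of (x^k), and suppose φ satisfies the exponent PLK condition at x̄ with exponent q ∈ (1/2, 1) and some constant M > 0. Then there exist η > 0 and K ∈ ℕ such that φ(x^k) − φ(x̄) ≤ η · k^{−1/(2q−1)} for all k ≥ K. -/
open Filter Topology


/-- Concavity estimate: for `0 < v ≤ u` and `p ∈ [0,1]`,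
`p * u^(p-1) * (u - v) ≤ u^p - v^p`. -/
lemma helperA {u v p : ℝ} (hv : 0 < v) (huv : v ≤ u) (hp0 : 0 ≤ p) (hp1 : p ≤ 1) :
    p * u ^ (p - 1) * (u - v) ≤ u ^ p - v ^ p := by
  have hu : 0 < u := lt_of_lt_of_le hv huv
  have hs : -1 ≤ v / u - 1 := by
    have : (0:ℝ) ≤ v / u := by positivity
    linarith
  have hB := rpow_one_add_le_one_add_mul_self hs hp0 hp1
  have he : (1:ℝ) + (v / u - 1) = v / u := by ring
  rw [he] at hB
  have hup : 0 < u ^ p := Real.rpow_pos_of_pos hu p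
  have hmul := mul_le_mul_of_nonneg_right hB hup.le
  have hdiv : (v / u) ^ p = v ^ p / u ^ p := Real.div_rpow hv.le hu.le _
  rw [hdiv, div_mul_cancel₀ _ (ne_of_gt hup)] at hmul
  have hsub : u ^ (p - 1) = u ^ p / u := by
    rw [Real.rpow_sub hu, Real.rpow_one]
  rw [hsub]
  have expand : (1 + p * (v / u - 1)) * u ^ p = u ^ p - p * (u ^ p / u) * (u - v) := by
    field_simp
    ring
  rw [expand] at hmul
  linarith

/-- Convexity estimate: for `0 < v ≤ u` and `p ∈ [0,1]`,
`p * u^(-p-1) * (u - v) ≤ v^(-p) - u^(-p)`. -/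
lemma helperB {u v p : ℝ} (hv : 0 < v) (huv : v ≤ u) (hp0 : 0 ≤ p) (hp1 : p ≤ 1) :
    p * u ^ (-p - 1) * (u - v) ≤ v ^ (-p) - u ^ (-p) := by
  have hu : 0 < u := lt_of_lt_of_le hv huv
  set t := v / u with ht
  have ht0 : 0 < t := by positivity
  have ht1 : t ≤ 1 := by rw [ht, div_le_one hu]; exact huv
  have hs : -1 ≤ t - 1 := by linarith
  have hb := rpow_one_add_le_one_add_mul_self hs hp0 hp1
  have he : (1:ℝ) + (t - 1) = t := by ring
  rw [he] at hb
  have htp : 0 < t ^ p := Real.rpow_pos_of_pos ht0 p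
  have hnn : 0 ≤ p * (1 - t) := mul_nonneg hp0 (by linarith)
  have h2 : (1 + p * (1 - t)) * t ^ p ≤ 1 := by nlinarith [sq_nonneg (p * (1 - t))]
  have key : 1 + p * (1 - t) ≤ t ^ (-p) := by
    rw [Real.rpow_neg ht0.le, inv_eq_one_div]
    exact (le_div_iff₀ htp).mpr h2
  have hup : 0 < u ^ (-p) := Real.rpow_pos_of_pos hu _
  have hmul := mul_le_mul_of_nonneg_right key hup.le
  have htv : t ^ (-p) * u ^ (-p) = v ^ (-p) := by
    rw [ht, Real.div_rpow hv.le hu.le _, div_mul_cancel₀ _ (ne_of_gt hup)]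
  rw [htv] at hmul
  have hsub : u ^ (-p - 1) = u ^ (-p) / u := by
    rw [Real.rpow_sub hu, Real.rpow_one]
  have expand : (1 + p * (1 - t)) * u ^ (-p) = u ^ (-p) + p * (u ^ (-p) / u) * (u - v) := by
    rw [ht]
    field_simp
  rw [expand] at hmul
  rw [hsub]
  linarith

/-- Rate lemma: recursion `ρ(k+1)^θ ≤ C (ρ k − ρ(k+1))` with `θ ∈ (1,2)` gives
sublinear decay `ρ k = O(k^{-1/(θ-1)})`. -/
lemma rate_aux (ρ : ℕ → ℝ) (θ C : ℝ) (hθ1 : 1 < θ) (hθ2 : θ < 2) (hC : 0 < C)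
    (hpos : ∀ k, 0 < ρ k) (hmono : ∀ k, ρ (k + 1) ≤ ρ k) (K₁ : ℕ)
    (hrec : ∀ k, K₁ ≤ k → ρ (k + 1) ^ θ ≤ C * (ρ k - ρ (k + 1))) :
    ∃ η' > (0:ℝ), ∃ K : ℕ, ∀ k ≥ K, ρ k ≤ η' * (k : ℝ) ^ (-(1 / (θ - 1))) := by
  have hanti : Antitone ρ := antitone_nat_of_succ_le hmono
  set p := θ - 1 with hp
  have hp0 : 0 < p := sub_pos.mpr hθ1
  have hp1 : p < 1 := by rw [hp]; linarith
  have h2θ : (0:ℝ) < 2 ^ (-θ) := Real.rpow_pos_of_pos two_pos _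
  have h2p : (2:ℝ) ^ (-p) < 1 := Real.rpow_lt_one_of_one_lt_of_neg one_lt_two (by linarith)
  have h2p0 : (0:ℝ) < 2 ^ (-p) := Real.rpow_pos_of_pos two_pos _
  set c₁ := p * 2 ^ (-θ) / C with hc₁
  set c₂ := (1 - 2 ^ (-p)) * (ρ K₁) ^ (-p) with hc₂
  have hc₁0 : 0 < c₁ := div_pos (mul_pos hp0 h2θ) hC
  have hρK₁ : 0 < (ρ K₁) ^ (-p) := Real.rpow_pos_of_pos (hpos _) _
  have hc₂0 : 0 < c₂ := mul_pos (by linarith) hρK₁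
  set c := min c₁ c₂ with hc
  have hc0 : 0 < c := lt_min hc₁0 hc₂0
  have hstep : ∀ k, K₁ ≤ k → ρ k ^ (-p) + c ≤ ρ (k + 1) ^ (-p) := by
    intro k hk
    have hu : 0 < ρ k := hpos k
    have hv : 0 < ρ (k + 1) := hpos (k + 1)
    by_cases hcase : ρ k ≤ 2 * ρ (k + 1)
    · have hB := helperB hv (hmono k) hp0.le hp1.le
      rw [show -p - 1 = -θ by rw [hp]; ring] at hB
      have hr := hrec k hk
      have hθpos : (0:ℝ) < θ := by linarith
      have hnθ : 0 < ρ k ^ (-θ) := Real.rpow_pos_of_pos hu _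
      have hA : (2:ℝ) ^ (-θ) * ρ k ^ θ ≤ ρ (k + 1) ^ θ := by
        have h1 : ρ k ^ θ ≤ (2 * ρ (k + 1)) ^ θ := Real.rpow_le_rpow hu.le hcase hθpos.le
        rw [Real.mul_rpow (by norm_num) hv.le] at h1
        have h2 : (2:ℝ) ^ (-θ) * (2:ℝ) ^ θ = 1 := by
          rw [← Real.rpow_add two_pos]; norm_num
        calc (2:ℝ) ^ (-θ) * ρ k ^ θ ≤ 2 ^ (-θ) * ((2:ℝ) ^ θ * ρ (k + 1) ^ θ) :=
              mul_le_mul_of_nonneg_left h1 h2θ.le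
          _ = ρ (k + 1) ^ θ := by rw [← mul_assoc, h2, one_mul]
      have hI : ρ k ^ (-θ) * ρ k ^ θ = 1 := by
        rw [← Real.rpow_add hu]; norm_num
      have hA2 : (2:ℝ) ^ (-θ) ≤ ρ k ^ (-θ) * ρ (k + 1) ^ θ := by
        have h1 := mul_le_mul_of_nonneg_left hA hnθ.le
        have h2 : ρ k ^ (-θ) * ((2:ℝ) ^ (-θ) * ρ k ^ θ) = 2 ^ (-θ) := by
          rw [show ρ k ^ (-θ) * ((2:ℝ) ^ (-θ) * ρ k ^ θ)
              = (ρ k ^ (-θ) * ρ k ^ θ) * 2 ^ (-θ) by ring, hI, one_mul]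
        linarith
      have h5 : c₁ ≤ p * ρ k ^ (-θ) * (ρ k - ρ (k + 1)) := by
        rw [hc₁, div_le_iff₀ hC]
        have h6 : p * (2:ℝ) ^ (-θ) ≤ p * (ρ k ^ (-θ) * ρ (k + 1) ^ θ) :=
          mul_le_mul_of_nonneg_left hA2 hp0.le
        have h7 : p * (ρ k ^ (-θ) * ρ (k + 1) ^ θ)
            ≤ p * (ρ k ^ (-θ) * (C * (ρ k - ρ (k + 1)))) :=
          mul_le_mul_of_nonneg_left (mul_le_mul_of_nonneg_left hr hnθ.le) hp0.le
        nlinarith [h6, h7]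
      have hfin : c ≤ ρ (k + 1) ^ (-p) - ρ k ^ (-p) :=
        le_trans (min_le_left _ _) (le_trans h5 hB)
      linarith
    · push_neg at hcase
      have h1 : ρ k ^ (-p) ≤ (2 * ρ (k + 1)) ^ (-p) :=
        Real.rpow_le_rpow_of_nonpos (by positivity) hcase.le (by linarith)
      rw [Real.mul_rpow (by norm_num) hv.le] at h1
      have h3 : (ρ K₁) ^ (-p) ≤ ρ (k + 1) ^ (-p) :=
        Real.rpow_le_rpow_of_nonpos hv (hanti (Nat.le_succ_of_le hk)) (by linarith)
      have hv0 : 0 < ρ (k + 1) ^ (-p) := Real.rpow_pos_of_pos hv _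
      have hfin : c₂ ≤ ρ (k + 1) ^ (-p) - ρ k ^ (-p) := by
        rw [hc₂]
        nlinarith [h1, h3, h2p, h2p0, hv0]
      linarith [le_trans (min_le_right c₁ c₂) hfin]
  have hiter : ∀ m : ℕ, ρ K₁ ^ (-p) + m * c ≤ ρ (K₁ + m) ^ (-p) := by
    intro m
    induction m with
    | zero => simp
    | succ m ih =>
      have hs := hstep (K₁ + m) (Nat.le_add_right _ _)
      have e : K₁ + (m + 1) = K₁ + m + 1 := by omega
      rw [e]
      push_cast
      push_cast at ih
      linarith
  refine ⟨(c / 2) ^ (-(1 / p)), Real.rpow_pos_of_pos (by linarith) _, 2 * K₁ + 2, ?_⟩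
  intro k hk
  have hkpos : (0:ℝ) < (k : ℝ) := by
    have : 0 < k := by omega
    exact_mod_cast this
  obtain ⟨m, rfl⟩ := Nat.exists_eq_add_of_le (show K₁ ≤ k by omega)
  have hm : (((K₁ + m : ℕ) : ℝ)) / 2 ≤ (m : ℝ) := by
    have h1 : K₁ ≤ m := by omega
    have h2 : ((K₁ : ℝ)) ≤ (m : ℝ) := by exact_mod_cast h1
    push_cast
    linarith
  have ht : c * (((K₁ + m : ℕ) : ℝ) / 2) ≤ ρ (K₁ + m) ^ (-p) := by
    have h1 := hiter m
    nlinarith [hm, hc0, hρK₁]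
  have hY : 0 < c * (((K₁ + m : ℕ) : ℝ) / 2) := mul_pos hc0 (by positivity)
  have hr1 := Real.rpow_le_rpow_of_nonpos hY ht (show -(1 / p) ≤ 0 from neg_nonpos.mpr (by positivity))
  have hid : (ρ (K₁ + m) ^ (-p)) ^ (-(1 / p)) = ρ (K₁ + m) := by
    rw [← Real.rpow_mul (hpos _).le, show (-p) * (-(1 / p)) = 1 by
      field_simp, Real.rpow_one]
  rw [hid] at hr1
  have hsplit : (c * (((K₁ + m : ℕ) : ℝ) / 2)) ^ (-(1 / p))
      = (c / 2) ^ (-(1 / p)) * ((K₁ + m : ℕ) : ℝ) ^ (-(1 / p)) := by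
    rw [show c * (((K₁ + m : ℕ) : ℝ) / 2) = (c / 2) * ((K₁ + m : ℕ) : ℝ) by ring,
      Real.mul_rpow (by linarith) (by positivity)]
  rw [hsplit] at hr1
  exact hr1

set_option maxHeartbeats 2000000 in
lemma main_aux {E : Type*} [NormedAddCommGroup E]
    (x : ℕ → E) (xbar : E) (ρ : ℕ → ℝ)
    (a b M q ε η : ℝ) (ha : 0 < a) (hb : 0 < b) (hM : 0 < M)
    (hq : 1 / 2 < q) (hq1 : q < 1) (hε : 0 < ε) (hη : 0 < η)
    (hρpos : ∀ k, 0 < ρ k)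
    (hH1 : ∀ k, a * ‖x (k + 1) - x k‖ ^ 2 ≤ ρ k - ρ (k + 1))
    (hKL : ∀ k, ‖x (k + 1) - xbar‖ < ε → ρ (k + 1) < η →
      ρ (k + 1) ^ q ≤ M * (1 - q) * b * ‖x (k + 1) - x k‖)
    (hnear : ∀ δ > (0:ℝ), ∃ K₀ : ℕ, ‖x K₀ - xbar‖ < ε / 4 ∧ ρ K₀ < δ) :
    ∃ η' > (0:ℝ), ∃ K : ℕ, ∀ k ≥ K, ρ k ≤ η' * (k : ℝ) ^ (-(1 / (2 * q - 1))) := by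
  have hp : 0 < 1 - q := by linarith
  set Δ : ℕ → ℝ := fun k => ‖x (k + 1) - x k‖ with hΔdef
  have hΔ0 : ∀ k, 0 ≤ Δ k := fun k => norm_nonneg _
  have hmono : ∀ k, ρ (k + 1) ≤ ρ k := by
    intro k
    nlinarith [hH1 k, sq_nonneg ‖x (k + 1) - x k‖,
      mul_nonneg ha.le (sq_nonneg ‖x (k + 1) - x k‖)]
  have hanti : Antitone ρ := antitone_nat_of_succ_le hmono
  set D := M * b / a with hDdef
  have hD : 0 < D := by rw [hDdef]; positivity
  -- choose δ
  set δ₁ := a * (ε / 8) ^ 2 with hδ₁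
  set δ₂ := (ε / (4 * D)) ^ (1 / (1 - q)) with hδ₂
  have hδ₁0 : 0 < δ₁ := by rw [hδ₁]; positivity
  have hεD : 0 < ε / (4 * D) := by positivity
  have hδ₂0 : 0 < δ₂ := Real.rpow_pos_of_pos hεD _
  set δ := min (min δ₁ δ₂) (η / 2) with hδdef
  have hδ0 : 0 < δ := lt_min (lt_min hδ₁0 hδ₂0) (by linarith)
  obtain ⟨K₀, hK₀near, hK₀ρ⟩ := hnear δ hδ0
  have hρK : ∀ k, K₀ ≤ k → ρ k < δ := fun k hk => lt_of_le_of_lt (hanti hk) hK₀ρ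
  have hηρ : ∀ k, K₀ ≤ k → ρ k < η := by
    intro k hk
    have h1 := hρK k hk
    have h2 : δ ≤ η / 2 := min_le_right _ _
    linarith
  have hΔK₀ : Δ K₀ < ε / 8 := by
    have h := hH1 K₀
    have h2 : ρ K₀ < δ₁ :=
      lt_of_lt_of_le hK₀ρ (le_trans (min_le_left _ _) (min_le_left _ _))
    have h3 : a * Δ K₀ ^ 2 < a * (ε / 8) ^ 2 := by
      have := hρpos (K₀ + 1)
      rw [hδ₁] at h2
      calc a * Δ K₀ ^ 2 ≤ ρ K₀ - ρ (K₀ + 1) := h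
        _ < a * (ε / 8) ^ 2 := by linarith
    exact lt_of_pow_lt_pow_left₀ 2 (by positivity) ((mul_lt_mul_iff_right₀ ha).mp h3)
  have hSbound : D * ρ (K₀ + 1) ^ (1 - q) ≤ ε / 4 := by
    have h1 : ρ (K₀ + 1) ≤ δ₂ :=
      le_of_lt (lt_of_lt_of_le (hρK _ (Nat.le_succ _))
        (le_trans (min_le_left _ _) (min_le_right _ _)))
    have h2 : ρ (K₀ + 1) ^ (1 - q) ≤ δ₂ ^ (1 - q) :=
      Real.rpow_le_rpow (hρpos _).le h1 hp.le
    have h3 : δ₂ ^ (1 - q) = ε / (4 * D) := by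
      rw [hδ₂, ← Real.rpow_mul hεD.le,
        show 1 / (1 - q) * (1 - q) = 1 by field_simp, Real.rpow_one]
    have h4 : D * ρ (K₀ + 1) ^ (1 - q) ≤ D * (ε / (4 * D)) := by
      apply mul_le_mul_of_nonneg_left _ hD.le
      rw [← h3]; exact h2
    have h5 : D * (ε / (4 * D)) = ε / 4 := by field_simp
    linarith
  -- one-step inequality
  have hstep : ∀ k, K₀ ≤ k → ‖x (k + 1) - xbar‖ < ε →
      2 * Δ (k + 1) ≤ Δ k + D * (ρ (k + 1) ^ (1 - q) - ρ (k + 2) ^ (1 - q)) := by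
    intro k hk hball
    have hKLk := hKL k hball (hηρ (k + 1) (le_trans hk (Nat.le_succ k)))
    have hu : 0 < ρ (k + 1) := hρpos _
    have hv : 0 < ρ (k + 2) := hρpos _
    have hvu : ρ (k + 2) ≤ ρ (k + 1) := hmono (k + 1)
    have hA := helperA hv hvu hp.le (by linarith : 1 - q ≤ 1)
    rw [show (1 - q) - 1 = -q by ring] at hA
    have hH1k := hH1 (k + 1)
    have huq : 0 < ρ (k + 1) ^ q := Real.rpow_pos_of_pos hu q
    have hunq : 0 < ρ (k + 1) ^ (-q) := Real.rpow_pos_of_pos hu _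
    have hinv : ρ (k + 1) ^ (-q) * ρ (k + 1) ^ q = 1 := by
      rw [← Real.rpow_add hu]; norm_num
    have hΔkpos : 0 < Δ k := by
      rcases lt_or_ge 0 (Δ k) with h | h
      · exact h
      · exfalso
        have h0 : ‖x (k + 1) - x k‖ = 0 := le_antisymm h (norm_nonneg _)
        rw [h0] at hKLk
        nlinarith [huq]
    have e1 : 1 ≤ M * (1 - q) * b * Δ k * ρ (k + 1) ^ (-q) := by
      have h' := mul_le_mul_of_nonneg_right hKLk hunq.le
      rw [mul_comm (ρ (k + 1) ^ q)] at h'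
      rw [hinv] at h'
      linarith
    set sd := ρ (k + 1) ^ (1 - q) - ρ (k + 2) ^ (1 - q) with hsd
    have hsd0 : 0 ≤ sd := by
      have h1 : (0:ℝ) ≤ (1 - q) * ρ (k + 1) ^ (-q) * (ρ (k + 1) - ρ (k + 2)) :=
        mul_nonneg (mul_nonneg hp.le hunq.le) (by linarith)
      exact le_trans h1 hA
    have key : a * Δ (k + 1) ^ 2 ≤ M * b * Δ k * sd := by
      have e2 : (1 - q) * ρ (k + 1) ^ (-q) * (a * Δ (k + 1) ^ 2)
          ≤ (1 - q) * ρ (k + 1) ^ (-q) * (ρ (k + 1) - ρ (k + 2)) :=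
        mul_le_mul_of_nonneg_left hH1k (by positivity)
      have e4 : a * Δ (k + 1) ^ 2
          ≤ (M * (1 - q) * b * Δ k * ρ (k + 1) ^ (-q)) * (a * Δ (k + 1) ^ 2) :=
        le_mul_of_one_le_left (by positivity) e1
      calc a * Δ (k + 1) ^ 2
          ≤ (M * (1 - q) * b * Δ k * ρ (k + 1) ^ (-q)) * (a * Δ (k + 1) ^ 2) := e4
        _ = M * b * Δ k * ((1 - q) * ρ (k + 1) ^ (-q) * (a * Δ (k + 1) ^ 2)) := by ring
        _ ≤ M * b * Δ k * sd := by
            apply mul_le_mul_of_nonneg_left (le_trans e2 hA) (by positivity)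
    have key2 : Δ (k + 1) ^ 2 ≤ Δ k * (D * sd) := by
      rw [hDdef]
      rw [show Δ k * (M * b / a * sd) = (M * b * Δ k * sd) / a by ring]
      rw [le_div_iff₀ ha]
      linarith [key]
    have h2d : (2 * Δ (k + 1)) ^ 2 ≤ (Δ k + D * sd) ^ 2 := by
      nlinarith [key2, sq_nonneg (Δ k - D * sd)]
    have hs := Real.sqrt_le_sqrt h2d
    rw [Real.sqrt_sq (by positivity), Real.sqrt_sq (add_nonneg (hΔ0 k) (mul_nonneg hD.le hsd0))] at hs
    exact hs
  -- capture induction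
  set T : ℕ → ℝ := fun m => ∑ j ∈ Finset.range m, Δ (K₀ + j) with hT
  have hcap : ∀ m, ‖x (K₀ + m) - xbar‖ < ε ∧
      T (m + 1) + Δ (K₀ + m) + D * ρ (K₀ + m + 1) ^ (1 - q)
        ≤ 2 * Δ K₀ + D * ρ (K₀ + 1) ^ (1 - q) := by
    intro m
    induction m with
    | zero =>
      constructor
      · simpa using (by linarith : ‖x K₀ - xbar‖ < ε)
      · simp [hT, Finset.sum_range_one]
        linarith [hΔ0 K₀]
    | succ m ih =>
      obtain ⟨ihball, ihsum⟩ := ih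
      have hρnn : (0:ℝ) ≤ D * ρ (K₀ + m + 1) ^ (1 - q) := mul_nonneg hD.le (Real.rpow_pos_of_pos (hρpos _) _).le
      have hTb : T (m + 1) ≤ 2 * Δ K₀ + D * ρ (K₀ + 1) ^ (1 - q) := by
        have h1 := hΔ0 (K₀ + m)
        linarith
      have e : K₀ + (m + 1) = K₀ + m + 1 := by omega
      have hball1 : ‖x (K₀ + (m + 1)) - xbar‖ < ε := by
        have htel := Finset.sum_range_sub (fun j => x (K₀ + j)) (m + 1)
        simp only [Nat.add_zero] at htel
        have hnorm : ‖x (K₀ + (m + 1)) - x K₀‖ ≤ T (m + 1) := by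
          rw [← htel]
          exact le_trans (norm_sum_le _ _) (le_of_eq rfl)
        have htri := norm_add_le (x K₀ - xbar) (x (K₀ + (m + 1)) - x K₀)
        rw [show (x K₀ - xbar) + (x (K₀ + (m + 1)) - x K₀)
            = x (K₀ + (m + 1)) - xbar by abel] at htri
        have hρ2 : (0:ℝ) ≤ ρ (K₀ + 1) ^ (1 - q) := (Real.rpow_pos_of_pos (hρpos _) _).le
        linarith [hK₀near, hΔK₀, hSbound, hTb, hnorm]
      refine ⟨hball1, ?_⟩
      rw [e] at hball1
      have hst := hstep (K₀ + m) (Nat.le_add_right _ _) hball1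
      have hTsucc : T (m + 1 + 1) = T (m + 1) + Δ (K₀ + (m + 1)) := by
        rw [hT]
        exact Finset.sum_range_succ _ _
      rw [hTsucc, e]
      have e2 : K₀ + m + 1 + 1 = K₀ + m + 2 := by omega
      rw [e2]
      linarith [hst, ihsum]
  have hball : ∀ k, K₀ ≤ k → ‖x (k + 1) - xbar‖ < ε := by
    intro k hk
    obtain ⟨m, rfl⟩ := Nat.exists_eq_add_of_le hk
    have h := (hcap (m + 1)).1
    have e : K₀ + (m + 1) = K₀ + m + 1 := by omega
    rwa [e] at h
  -- recursion and rate
  set C := (M * (1 - q) * b) ^ 2 / a with hCdef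
  have hC : 0 < C := by rw [hCdef]; positivity
  have hrec : ∀ k, K₀ ≤ k → ρ (k + 1) ^ (2 * q) ≤ C * (ρ k - ρ (k + 1)) := by
    intro k hk
    have h1 := hKL k (hball k hk) (hηρ (k + 1) (le_trans hk (Nat.le_succ k)))
    have h2 := hH1 k
    have h3 : ρ (k + 1) ^ (2 * q) = (ρ (k + 1) ^ q) ^ 2 := by
      rw [← Real.rpow_natCast (ρ (k + 1) ^ q) 2, ← Real.rpow_mul (hρpos (k + 1)).le]
      norm_num [mul_comm]
    rw [h3]
    have h4 : (ρ (k + 1) ^ q) ^ 2 ≤ (M * (1 - q) * b * Δ k) ^ 2 :=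
      pow_le_pow_left₀ (Real.rpow_pos_of_pos (hρpos _) q).le h1 2
    have h5 : Δ k ^ 2 ≤ (ρ k - ρ (k + 1)) / a := by
      rw [le_div_iff₀ ha]
      nlinarith [h2]
    calc (ρ (k + 1) ^ q) ^ 2 ≤ (M * (1 - q) * b * Δ k) ^ 2 := h4
      _ = (M * (1 - q) * b) ^ 2 * Δ k ^ 2 := by ring
      _ ≤ (M * (1 - q) * b) ^ 2 * ((ρ k - ρ (k + 1)) / a) :=
          mul_le_mul_of_nonneg_left h5 (by positivity)
      _ = C * (ρ k - ρ (k + 1)) := by rw [hCdef]; ring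
  have := rate_aux ρ (2 * q) C (by linarith) (by linarith) hC hρpos hmono K₀ hrec
  simpa [show 2 * q - 1 = 2 * q - 1 by ring] using this


theorem value_sublinear_high_exponent_H2
    (n : ℕ) (φ : EuclideanSpace ℝ (Fin n) → ℝ)
    (hφ : ContDiff ℝ 1 φ)
    (hbdd : ∃ m : ℝ, ∀ x, m ≤ φ x)
    (a b : ℝ) (ha : 0 < a) (hb : 0 < b)
    (x : ℕ → EuclideanSpace ℝ (Fin n))
    (hH1 : ∀ k : ℕ, φ (x (k + 1)) + a * ‖x (k + 1) - x k‖ ^ 2 ≤ φ (x k))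
    (hH2 : ∀ k : ℕ, ‖gradient φ (x (k + 1))‖ ≤ b * ‖x (k + 1) - x k‖)
    (xbar : EuclideanSpace ℝ (Fin n))
    (hacc : ∃ σ : ℕ → ℕ, StrictMono σ ∧
      Tendsto (fun j => x (σ j)) atTop (𝓝 xbar))
    (q : ℝ) (hq : q ∈ Set.Ioo (1/2 : ℝ) 1)
    (M : ℝ) (hM : 0 < M)
    (hPLK : ∃ ε η : ℝ, 0 < ε ∧ 0 < η ∧
      ∀ y, ‖y - xbar‖ < ε → φ xbar < φ y → φ y < φ xbar + η →
        (1 / (M * (1 - q))) * (φ y - φ xbar) ^ q ≤ ‖gradient φ y‖) :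
    ∃ η' > (0 : ℝ), ∃ K : ℕ, ∀ k ≥ K,
      φ (x k) - φ xbar ≤ η' * (k : ℝ) ^ (-(1 / (2 * q - 1))) := by
  obtain ⟨ε, η, hε, hη, hKL⟩ := hPLK
  obtain ⟨σ, hσmono, hσlim⟩ := hacc
  obtain ⟨hq12, hq1⟩ := hq
  have h1q : 0 < 1 - q := by linarith
  have hcont : Continuous φ := hφ.continuous
  have hdec : ∀ k, φ (x (k + 1)) ≤ φ (x k) := by
    intro k
    nlinarith [hH1 k, mul_nonneg ha.le (sq_nonneg ‖x (k + 1) - x k‖)]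
  have hanti : Antitone fun k => φ (x k) := antitone_nat_of_succ_le hdec
  obtain ⟨m₀, hm₀⟩ := hbdd
  have hlim : Tendsto (fun k => φ (x k)) atTop (𝓝 (φ xbar)) := by
    have hbdd' : BddBelow (Set.range fun k => φ (x k)) := by
      refine ⟨m₀, ?_⟩
      rintro y ⟨k, rfl⟩
      exact hm₀ _
    have h1 : Tendsto (fun k => φ (x k)) atTop (𝓝 (⨅ k, φ (x k))) :=
      tendsto_atTop_ciInf hanti hbdd'
    have h2 : Tendsto (fun j => φ (x (σ j))) atTop (𝓝 (φ xbar)) :=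
      (hcont.tendsto xbar).comp hσlim
    have h3 : Tendsto (fun j => φ (x (σ j))) atTop (𝓝 (⨅ k, φ (x k))) :=
      h1.comp hσmono.tendsto_atTop
    rwa [tendsto_nhds_unique h3 h2] at h1
  have hge : ∀ k, φ xbar ≤ φ (x k) := fun k => hanti.le_of_tendsto hlim k
  by_cases hfin : ∃ K, φ (x K) = φ xbar
  · obtain ⟨K0, hK0⟩ := hfin
    refine ⟨1, one_pos, K0 + 1, fun k hk => ?_⟩
    have h1 : φ (x k) ≤ φ (x K0) := hanti (le_trans (Nat.le_succ K0) hk)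
    have h2 : (0:ℝ) < (k : ℝ) := by
      have : 0 < k := by omega
      exact_mod_cast this
    have h3 : 0 < (k : ℝ) ^ (-(1 / (2 * q - 1))) := Real.rpow_pos_of_pos h2 _
    rw [hK0] at h1
    linarith
  · push_neg at hfin
    have hρpos : ∀ k, 0 < φ (x k) - φ xbar := fun k =>
      sub_pos.mpr (lt_of_le_of_ne (hge k) (Ne.symm (hfin k)))
    have hH1' : ∀ k, a * ‖x (k + 1) - x k‖ ^ 2
        ≤ (φ (x k) - φ xbar) - (φ (x (k + 1)) - φ xbar) := by
      intro k
      have := hH1 k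
      linarith
    have hKL' : ∀ k, ‖x (k + 1) - xbar‖ < ε → (φ (x (k + 1)) - φ xbar) < η →
        (φ (x (k + 1)) - φ xbar) ^ q ≤ M * (1 - q) * b * ‖x (k + 1) - x k‖ := by
      intro k hball hlt
      have h1 := hKL (x (k + 1)) hball (by linarith [hρpos (k + 1)]) (by linarith)
      have h2 := hH2 k
      have h3 : (1 / (M * (1 - q))) * (φ (x (k + 1)) - φ xbar) ^ q
          ≤ b * ‖x (k + 1) - x k‖ := le_trans h1 h2
      have hM1q : 0 < M * (1 - q) := mul_pos hM h1q
      have h4 := mul_le_mul_of_nonneg_left h3 hM1q.le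
      calc (φ (x (k + 1)) - φ xbar) ^ q
          = M * (1 - q) * ((1 / (M * (1 - q))) * (φ (x (k + 1)) - φ xbar) ^ q) := by
            field_simp
        _ ≤ M * (1 - q) * (b * ‖x (k + 1) - x k‖) := h4
        _ = M * (1 - q) * b * ‖x (k + 1) - x k‖ := by ring
    have hρlim : Tendsto (fun k => φ (x k) - φ xbar) atTop (𝓝 0) := by
      have := hlim.sub_const (φ xbar)
      simpa using this
    have hnear : ∀ δ > (0:ℝ), ∃ K₀ : ℕ,
        ‖x K₀ - xbar‖ < ε / 4 ∧ (φ (x K₀) - φ xbar) < δ := by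
      intro δ hδ
      obtain ⟨N₁, hN₁⟩ := Metric.tendsto_atTop.mp hσlim (ε / 4) (by linarith)
      have h2 : ∀ᶠ k in atTop, φ (x k) - φ xbar < δ :=
        (tendsto_order.1 hρlim).2 δ hδ
      obtain ⟨N₂, hN₂⟩ := eventually_atTop.mp h2
      refine ⟨σ (max N₁ N₂), ?_, ?_⟩
      · have := hN₁ (max N₁ N₂) (le_max_left _ _)
        rwa [dist_eq_norm] at this
      · exact hN₂ _ (le_trans (le_max_right N₁ N₂) (hσmono.le_apply))
    exact main_aux x xbar (fun k => φ (x k) - φ xbar) a b M q ε η ha hb hM hq12 hq1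
      hε hη hρpos hH1' hKL' hnear
end

section
/- Let φ : ℝⁿ → ℝ be continuously differentiable and bounded from below, let a, b > 0, let (x^k) satisfy the sufficient-decrease condition (H1) and the relative-error condition (H2), let x̄ be an accumulation point of (x^k), and suppose φ satisfies the exponent PLK condition at x̄ with exponent q = 0 and some constant M > 0. Then the iterate sequence (x^k) terminates at x̄ in finitely many steps: there exists K ∈ ℕ such that x^k = x̄ for all k ≥ K. -/
open Filter Topology

theorem iterate_finite_termination_q0_H2
    (n : ℕ) (φ : EuclideanSpace ℝ (Fin n) → ℝ)
    (hφ : ContDiff ℝ 1 φ)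
    (hbdd : ∃ m : ℝ, ∀ x, m ≤ φ x)
    (a b : ℝ) (ha : 0 < a) (hb : 0 < b)
    (x : ℕ → EuclideanSpace ℝ (Fin n))
    (hH1 : ∀ k : ℕ, φ (x (k + 1)) + a * ‖x (k + 1) - x k‖ ^ 2 ≤ φ (x k))
    (hH2 : ∀ k : ℕ, ‖gradient φ (x (k + 1))‖ ≤ b * ‖x (k + 1) - x k‖)
    (xbar : EuclideanSpace ℝ (Fin n))
    (hacc : ∃ σ : ℕ → ℕ, StrictMono σ ∧
      Tendsto (fun j => x (σ j)) atTop (𝓝 xbar))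
    (q : ℝ) (hq : q = 0)
    (M : ℝ) (hM : 0 < M)
    (hPLK : ∃ ε η : ℝ, 0 < ε ∧ 0 < η ∧
      ∀ y, ‖y - xbar‖ < ε → φ xbar < φ y → φ y < φ xbar + η →
        (1 / (M * (1 - q))) * (φ y - φ xbar) ^ q ≤ ‖gradient φ y‖) :
    ∃ K : ℕ, ∀ k ≥ K, x k = xbar := by
  subst hq
  obtain ⟨σ, hσ, hσconv⟩ := hacc
  obtain ⟨m, hm⟩ := hbdd
  obtain ⟨ε, η, hε, hη, hKL⟩ := hPLK
  have hmono : ∀ k, φ (x (k+1)) ≤ φ (x k) := by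
    intro k
    nlinarith [hH1 k, sq_nonneg ‖x (k+1) - x k‖]
  have hanti : Antitone (fun k => φ (x k)) := antitone_nat_of_succ_le hmono
  have hbdd' : BddBelow (Set.range fun k => φ (x k)) :=
    ⟨m, by rintro _ ⟨k, rfl⟩; exact hm _⟩
  have hconv : Tendsto (fun k => φ (x k)) atTop (𝓝 (⨅ k, φ (x k))) :=
    tendsto_atTop_ciInf hanti hbdd'
  have hφcont := hφ.continuous
  have hsub : Tendsto (fun j => φ (x (σ j))) atTop (𝓝 (φ xbar)) :=
    (hφcont.tendsto xbar).comp hσconv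
  have hsub2 : Tendsto (fun j => φ (x (σ j))) atTop (𝓝 (⨅ k, φ (x k))) :=
    hconv.comp hσ.tendsto_atTop
  have hLs : (⨅ k, φ (x k)) = φ xbar := tendsto_nhds_unique hsub2 hsub
  have hlow : ∀ k, φ xbar ≤ φ (x k) := fun k => hLs ▸ ciInf_le hbdd' k
  -- differences tend to 0
  have hdiff : Tendsto (fun k => φ (x k) - φ (x (k+1))) atTop (𝓝 0) := by
    have h2 : Tendsto (fun k => φ (x (k+1))) atTop (𝓝 (⨅ k, φ (x k))) :=
      hconv.comp (tendsto_add_atTop_nat 1)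
    simpa using hconv.sub h2
  have hdsq : Tendsto (fun k => ‖x (k+1) - x k‖^2) atTop (𝓝 0) := by
    apply squeeze_zero (fun k => sq_nonneg _)
      (g := fun k => (φ (x k) - φ (x (k+1))) / a)
    · intro k
      rw [le_div_iff₀ ha, mul_comm]
      nlinarith [hH1 k]
    · simpa using hdiff.div_const a
  have hd : Tendsto (fun k => ‖x (k+1) - x k‖) atTop (𝓝 0) := by
    have := (Real.continuous_sqrt.tendsto' 0 0 Real.sqrt_zero).comp hdsq
    have heq : (Real.sqrt ∘ fun k => ‖x (k+1) - x k‖^2)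
        = fun k => ‖x (k+1) - x k‖ := by
      funext k
      simp [Real.sqrt_sq (norm_nonneg _)]
    rwa [heq] at this
  have hdσ : Tendsto (fun j => ‖x (σ j + 1) - x (σ j)‖) atTop (𝓝 0) :=
    hd.comp hσ.tendsto_atTop
  -- eventual conditions
  have hc : 0 < min (ε/2) (1/(M*b)) := by positivity
  have E1 : ∀ᶠ j in atTop, ‖x (σ j) - xbar‖ < ε/2 := by
    have := hσconv.eventually (Metric.ball_mem_nhds xbar (half_pos hε))
    filter_upwards [this] with j hj
    simpa [dist_eq_norm] using hj
  have E2 : ∀ᶠ j in atTop, ‖x (σ j + 1) - x (σ j)‖ < min (ε/2) (1/(M*b)) :=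
    hdσ.eventually_lt_const hc
  have E3 : ∀ᶠ j in atTop, φ (x (σ j)) < φ xbar + η :=
    hsub.eventually_lt_const (by linarith)
  obtain ⟨j, h1, h2, h3⟩ := (E1.and (E2.and E3)).exists
  set k := σ j with hk
  -- show φ (x (k+1)) = φ xbar
  have hkey : φ (x (k+1)) = φ xbar := by
    by_contra hne
    have hlt : φ xbar < φ (x (k+1)) := lt_of_le_of_ne (hlow _) (Ne.symm hne)
    have hnear : ‖x (k+1) - xbar‖ < ε := by
      have : ‖x (k+1) - xbar‖ ≤ ‖x (k+1) - x k‖ + ‖x k - xbar‖ := by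
        have : x (k+1) - xbar = (x (k+1) - x k) + (x k - xbar) := by abel
        rw [this]; exact norm_add_le _ _
      have h2' : ‖x (k+1) - x k‖ < ε/2 := lt_of_lt_of_le h2 (min_le_left _ _)
      linarith
    have hupper : φ (x (k+1)) < φ xbar + η := lt_of_le_of_lt (hmono k) h3
    have hplk := hKL (x (k+1)) hnear hlt hupper
    rw [Real.rpow_zero] at hplk
    have hgr := hH2 k
    have h2'' : ‖x (k+1) - x k‖ < 1/(M*b) := lt_of_lt_of_le h2 (min_le_right _ _)
    have : (1:ℝ)/M ≤ b * ‖x (k+1) - x k‖ := by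
      calc (1:ℝ)/M = 1/(M*(1-0)) * 1 := by ring
        _ ≤ ‖gradient φ (x (k+1))‖ := hplk
        _ ≤ b * ‖x (k+1) - x k‖ := hgr
    have hb' : b * ‖x (k+1) - x k‖ < b * (1/(M*b)) :=
      (mul_lt_mul_iff_right₀ hb).mpr h2''
    have : (1:ℝ)/M < 1/M := by
      calc (1:ℝ)/M ≤ b * ‖x (k+1) - x k‖ := this
        _ < b * (1/(M*b)) := hb'
        _ = 1/M := by field_simp
    exact absurd this (lt_irrefl _)
  set K := k + 1 with hK
  -- φ constant at φ xbar from K on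
  have hφconst : ∀ l ≥ K, φ (x l) = φ xbar := by
    intro l hl
    exact le_antisymm (hkey ▸ hanti hl) (hlow l)
  -- steps vanish from K on
  have hstep : ∀ l ≥ K, x (l+1) = x l := by
    intro l hl
    have h1 := hH1 l
    rw [hφconst l hl, hφconst (l+1) (le_trans hl (Nat.le_succ l))] at h1
    have : ‖x (l+1) - x l‖^2 ≤ 0 := by nlinarith
    have : ‖x (l+1) - x l‖ = 0 := by nlinarith [sq_nonneg ‖x (l+1) - x l‖, norm_nonneg (x (l+1) - x l)]
    have := norm_eq_zero.mp this
    exact sub_eq_zero.mp this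
  have hconst : ∀ l ≥ K, x l = x K := by
    intro l hl
    induction l with
    | zero => omega
    | succ p ih =>
      rcases Nat.lt_or_ge K (p+1) with h | h
      · have hp : p ≥ K := by omega
        rw [hstep p hp, ih hp]
      · have : K = p + 1 := by omega
        rw [this]
  -- x K = xbar via subsequence
  have hev : ∀ᶠ j' in atTop, σ j' ≥ K := hσ.tendsto_atTop.eventually_ge_atTop K
  have htend : Tendsto (fun _ : ℕ => x K) atTop (𝓝 xbar) := by
    apply hσconv.congr'
    filter_upwards [hev] with j' hj'
    exact hconst (σ j') hj'
  have hxK : x K = xbar := tendsto_nhds_unique tendsto_const_nhds htend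
  exact ⟨K, fun l hl => (hconst l hl).trans hxK⟩
end

section
/- Let φ : ℝⁿ → ℝ be continuously differentiable and bounded from below, let a, b > 0, let (x^k) satisfy the sufficient-decrease condition (H1) and the relative-error condition (H2), let x̄ be an accumulation point of (x^k), and suppose φ satisfies the exponent PLK condition at x̄ with exponent q ∈ (0, 1/2) and some constant M > 0. Then either there exists K ∈ ℕ such that x^k = x̄ for all k ≥ K, or (x^k) converges R-superlinearly to x̄, i.e., there is a positive sequence (ε_k) with ε_{k+1}/ε_k → 0 and ‖x^k − x̄‖ ≤ ε_k for all large k. -/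
open Filter Topology

private lemma ballAux {w v z s e p : ℝ} (hw : w ≤ v + z) (hv : v ≤ (2 - 2*p)*s)
    (hz : z < e/4) (hs : 0 ≤ s) (hse : s ≤ e/4) (hp : 0 < p) : w < e := by nlinarith

private lemma quarterAux {r1 r0 t : ℝ} (h : r1 ≤ t * r0) (ht : t ≤ 1/4) (h0 : 0 < r0) :
    r1 ≤ (1/4)*r0 := by nlinarith

private lemma twoAux {p s : ℝ} (hp : 0 < p) (hs : 0 ≤ s) : (2 - 2*p)*s ≤ 2*s := by nlinarith

theorem iterate_superlinear_lower_exponent_H2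
    (n : ℕ) (φ : EuclideanSpace ℝ (Fin n) → ℝ)
    (hφ : ContDiff ℝ 1 φ)
    (hbdd : ∃ m : ℝ, ∀ x, m ≤ φ x)
    (a b : ℝ) (ha : 0 < a) (hb : 0 < b)
    (x : ℕ → EuclideanSpace ℝ (Fin n))
    (hH1 : ∀ k : ℕ, φ (x (k + 1)) + a * ‖x (k + 1) - x k‖ ^ 2 ≤ φ (x k))
    (hH2 : ∀ k : ℕ, ‖gradient φ (x (k + 1))‖ ≤ b * ‖x (k + 1) - x k‖)
    (xbar : EuclideanSpace ℝ (Fin n))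
    (hacc : ∃ σ : ℕ → ℕ, StrictMono σ ∧
      Tendsto (fun j => x (σ j)) atTop (𝓝 xbar))
    (q : ℝ) (hq : q ∈ Set.Ioo (0 : ℝ) (1/2))
    (M : ℝ) (hM : 0 < M)
    (hPLK : ∃ ε η : ℝ, 0 < ε ∧ 0 < η ∧
      ∀ y, ‖y - xbar‖ < ε → φ xbar < φ y → φ y < φ xbar + η →
        (1 / (M * (1 - q))) * (φ y - φ xbar) ^ q ≤ ‖gradient φ y‖) :
    (∃ K : ℕ, ∀ k ≥ K, x k = xbar) ∨
      (∃ ε : ℕ → ℝ, (∀ k, 0 < ε k) ∧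
        Tendsto (fun k => ε (k + 1) / ε k) atTop (𝓝 0) ∧
        ∃ K : ℕ, ∀ k ≥ K, ‖x k - xbar‖ ≤ ε k) := by
  classical
  obtain ⟨σ, hσmono, hσtend⟩ := hacc
  obtain ⟨εp, ηp, hεp, hηp, hKL⟩ := hPLK
  obtain ⟨m0, hm0⟩ := hbdd
  obtain ⟨hq0, hq2⟩ := hq
  have hq1 : q < 1 := lt_trans hq2 (by norm_num)
  -- monotonicity of φ along the sequence
  have hfanti : ∀ k, φ (x (k+1)) ≤ φ (x k) := by
    intro k
    have h := hH1 k
    have h2 : 0 ≤ a * ‖x (k+1) - x k‖ ^ 2 := by positivity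
    linarith
  have hAnti : Antitone (fun k => φ (x k)) := antitone_nat_of_succ_le hfanti
  have hbdd' : BddBelow (Set.range fun k => φ (x k)) := by
    refine ⟨m0, ?_⟩; rintro _ ⟨k, rfl⟩; exact hm0 _
  have hL : Tendsto (fun k => φ (x k)) atTop (𝓝 (⨅ k, φ (x k))) :=
    tendsto_atTop_ciInf hAnti hbdd'
  have hφcont : Continuous φ := hφ.continuous
  have h1 : Tendsto (fun j => φ (x (σ j))) atTop (𝓝 (⨅ k, φ (x k))) :=
    hL.comp hσmono.tendsto_atTop
  have h2 : Tendsto (fun j => φ (x (σ j))) atTop (𝓝 (φ xbar)) :=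
    (hφcont.tendsto xbar).comp hσtend
  have hLeq : (⨅ k, φ (x k)) = φ xbar := tendsto_nhds_unique h1 h2
  have hftend : Tendsto (fun k => φ (x k)) atTop (𝓝 (φ xbar)) := hLeq ▸ hL
  have hfge : ∀ k, φ xbar ≤ φ (x k) := by
    intro k
    exact le_of_tendsto hftend (eventually_atTop.2 ⟨k, fun m hm => hAnti hm⟩)

  by_cases hA : ∃ k0, φ (x k0) = φ xbar
  · -- Case A: eventually constant
    left
    obtain ⟨k0, hk0⟩ := hA
    have hfeq : ∀ k ≥ k0, φ (x k) = φ xbar := fun k hk =>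
      le_antisymm (hk0 ▸ hAnti hk) (hfge k)
    have hxstep : ∀ k ≥ k0, x (k+1) = x k := by
      intro k hk
      have h := hH1 k
      have e1 := hfeq k hk
      have e2 := hfeq (k+1) (le_trans hk (Nat.le_succ k))
      have : a * ‖x (k+1) - x k‖ ^ 2 ≤ 0 := by linarith
      have hsq : ‖x (k+1) - x k‖ ^ 2 = 0 := le_antisymm (by nlinarith) (sq_nonneg _)
      have hn : ‖x (k+1) - x k‖ = 0 := by
        have := pow_eq_zero_iff (n := 2) (by norm_num) |>.mp hsq
        exact this
      have := norm_eq_zero.mp hn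
      exact sub_eq_zero.mp this
    have hconst : ∀ k ≥ k0, x k = x k0 := by
      intro k hk
      obtain ⟨m, rfl⟩ := Nat.exists_eq_add_of_le hk
      induction m with
      | zero => rfl
      | succ m ih =>
        have : x (k0 + m + 1) = x (k0 + m) := hxstep (k0 + m) (Nat.le_add_right _ _)
        rw [show k0 + (m+1) = k0 + m + 1 from rfl, this]
        exact ih (Nat.le_add_right _ _)
    have hxk0 : x k0 = xbar := by
      have hev : ∀ᶠ j in atTop, x (σ j) = x k0 := by
        filter_upwards [eventually_ge_atTop k0] with j hj
        exact hconst (σ j) (le_trans hj (hσmono.le_apply))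
      have : Tendsto (fun j => x (σ j)) atTop (𝓝 (x k0)) :=
        Tendsto.congr' (by filter_upwards [hev] with j hj; exact hj.symm) tendsto_const_nhds
      exact tendsto_nhds_unique this hσtend
    exact ⟨k0, fun k hk => (hconst k hk).trans hxk0⟩
  · -- Case B
    right
    push_neg at hA
    have hrpos : ∀ k, 0 < φ (x k) - φ xbar := fun k =>
      sub_pos.mpr (lt_of_le_of_ne (hfge k) (Ne.symm (hA k)))
    set r : ℕ → ℝ := fun k => φ (x k) - φ xbar with hrdef
    have hranti : ∀ {i j : ℕ}, i ≤ j → r j ≤ r i := fun h => sub_le_sub_right (hAnti h) _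
    have hrtend : Tendsto r atTop (𝓝 0) := by
      have := hftend.sub_const (φ xbar)
      simpa using this
    -- step bound
    have hrΔ : ∀ k, ‖x (k+1) - x k‖ ≤ Real.sqrt (r k / a) := by
      intro k
      have h := hH1 k
      have h1 : a * ‖x (k+1) - x k‖ ^ 2 ≤ r k := by
        have := hfge (k+1); simp only [hrdef]; linarith
      have h2 : ‖x (k+1) - x k‖ ^ 2 ≤ r k / a := by
        rw [le_div_iff₀ ha]; linarith [h1]
      calc ‖x (k+1) - x k‖ = Real.sqrt (‖x (k+1) - x k‖ ^ 2) :=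
            (Real.sqrt_sq (norm_nonneg _)).symm
        _ ≤ Real.sqrt (r k / a) := Real.sqrt_le_sqrt h2
    -- constants
    have h1q : (0:ℝ) < 1 - q := by linarith
    set c : ℝ := 1 / (M * (1 - q)) with hcdef
    have hc : 0 < c := by positivity
    set D : ℝ := b / (c * Real.sqrt a) with hDdef
    have hD : 0 < D := div_pos hb (mul_pos hc (Real.sqrt_pos.mpr ha))
    set C : ℝ := D ^ (q⁻¹ : ℝ) with hCdef
    have hC : 0 < C := Real.rpow_pos_of_pos hD _
    set θ : ℝ := q⁻¹ / 2 - 1 with hθdef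
    have hqi : (2:ℝ) < q⁻¹ := by
      rw [inv_eq_one_div, lt_div_iff₀ hq0]; linarith
    have hθ : 0 < θ := by rw [hθdef]; linarith
    -- key PLK recursion
    have hkey : ∀ k, ‖x (k+1) - xbar‖ < εp → r (k+1) < ηp →
        r (k+1) ≤ C * r k ^ (1 + θ : ℝ) := by
      intro k hnear hη
      have hr1 : 0 < r (k+1) := hrpos (k+1)
      have hr0 : 0 < r k := hrpos k
      have hφlt : φ xbar < φ (x (k+1)) := by have := hrpos (k+1); linarith
      have hφlt2 : φ (x (k+1)) < φ xbar + ηp := by simp only [hrdef] at hη; linarith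
      have hgrad := hKL (x (k+1)) hnear hφlt hφlt2
      have hchain : c * r (k+1) ^ (q:ℝ) ≤ b * (Real.sqrt (r k) / Real.sqrt a) := by
        calc c * r (k+1) ^ (q:ℝ) ≤ ‖gradient φ (x (k+1))‖ := hgrad
          _ ≤ b * ‖x (k+1) - x k‖ := hH2 k
          _ ≤ b * Real.sqrt (r k / a) := mul_le_mul_of_nonneg_left (hrΔ k) hb.le
          _ = b * (Real.sqrt (r k) / Real.sqrt a) := by rw [Real.sqrt_div hr0.le]
      have h5 : r (k+1) ^ (q:ℝ) ≤ D * Real.sqrt (r k) := by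
        have heq : c * (D * Real.sqrt (r k)) = b * (Real.sqrt (r k) / Real.sqrt a) := by
          rw [hDdef]
          have hsa : Real.sqrt a ≠ 0 := ne_of_gt (Real.sqrt_pos.mpr ha)
          field_simp
        rw [← heq] at hchain
        exact le_of_mul_le_mul_left hchain hc
      have h6 : r (k+1) ≤ (D * Real.sqrt (r k)) ^ (q⁻¹ : ℝ) := by
        have h7 : (r (k+1) ^ (q:ℝ)) ^ (q⁻¹:ℝ) ≤ (D * Real.sqrt (r k)) ^ (q⁻¹:ℝ) :=
          Real.rpow_le_rpow (Real.rpow_nonneg hr1.le _) h5 (inv_nonneg.mpr hq0.le)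
        rwa [← Real.rpow_mul hr1.le, mul_inv_cancel₀ (ne_of_gt hq0), Real.rpow_one] at h7
      have h8 : (D * Real.sqrt (r k)) ^ (q⁻¹:ℝ) = C * r k ^ (1+θ:ℝ) := by
        rw [Real.mul_rpow hD.le (Real.sqrt_nonneg _), Real.sqrt_eq_rpow,
            ← Real.rpow_mul hr0.le]
        congr 1
        rw [hθdef]
        ring_nf
      rw [h8] at h6
      exact h6
    have hkeysplit : ∀ k, ‖x (k+1) - xbar‖ < εp → r (k+1) < ηp →
        r (k+1) ≤ (C * r k ^ (θ:ℝ)) * r k := by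
      intro k h1 h2
      have h := hkey k h1 h2
      have hsplit : r k ^ (1+θ:ℝ) = r k * r k ^ (θ:ℝ) := by
        rw [Real.rpow_add (hrpos k), Real.rpow_one]
      rw [hsplit] at h
      calc r (k+1) ≤ C * (r k * r k ^ (θ:ℝ)) := h
        _ = (C * r k ^ (θ:ℝ)) * r k := by ring
    -- delta thresholds
    set δ2 : ℝ := ((4*(C+1))⁻¹) ^ (θ⁻¹:ℝ) with hδ2
    have hδ2pos : 0 < δ2 := Real.rpow_pos_of_pos (by positivity) _
    set δ : ℝ := min ηp (min δ2 (a * (εp/4)^2)) with hδdef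
    have hδpos : 0 < δ := lt_min hηp (lt_min hδ2pos (by positivity))
    have hδη : δ ≤ ηp := min_le_left _ _
    have hδquarter : ∀ s : ℝ, 0 < s → s ≤ δ → C * s ^ (θ:ℝ) ≤ 1/4 := by
      intro s hs hsδ
      have h1 : s ≤ δ2 := le_trans hsδ (le_trans (min_le_right _ _) (min_le_left _ _))
      have h2 : s ^ (θ:ℝ) ≤ δ2 ^ (θ:ℝ) := Real.rpow_le_rpow hs.le h1 hθ.le
      have h3 : δ2 ^ (θ:ℝ) = (4*(C+1))⁻¹ := by
        rw [hδ2, ← Real.rpow_mul (by positivity), inv_mul_cancel₀ (ne_of_gt hθ), Real.rpow_one]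
      calc C * s ^ (θ:ℝ) ≤ C * (4*(C+1))⁻¹ := by
            rw [← h3]; exact mul_le_mul_of_nonneg_left h2 hC.le
        _ ≤ 1/4 := by
            rw [inv_eq_one_div, mul_one_div, div_le_div_iff₀ (by positivity) (by norm_num)]
            nlinarith
    have hδsqrt : ∀ s : ℝ, 0 ≤ s → s ≤ δ → Real.sqrt (s/a) ≤ εp/4 := by
      intro s hs hsδ
      have h1 : s ≤ a * (εp/4)^2 := le_trans hsδ (le_trans (min_le_right _ _) (min_le_right _ _))
      have h2 : s / a ≤ (εp/4)^2 := by rw [div_le_iff₀ ha]; linarith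
      calc Real.sqrt (s/a) ≤ Real.sqrt ((εp/4)^2) := Real.sqrt_le_sqrt h2
        _ = εp/4 := Real.sqrt_sq (by positivity)
    -- choose K
    have hev1 : ∀ᶠ k in atTop, r k < δ := hrtend.eventually_lt_const hδpos
    obtain ⟨N, hN⟩ := eventually_atTop.mp hev1
    have hev2 : ∀ᶠ j in atTop, ‖x (σ j) - xbar‖ < εp/4 := by
      have h0 : Tendsto (fun j => x (σ j) - xbar) atTop (𝓝 (xbar - xbar)) :=
        hσtend.sub_const xbar
      rw [sub_self] at h0
      have h1 : Tendsto (fun j => ‖x (σ j) - xbar‖) atTop (𝓝 0) := by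
        simpa using h0.norm
      exact h1.eventually_lt_const (by positivity)
    obtain ⟨J, hJ⟩ := eventually_atTop.mp hev2
    set K := σ (max N J) with hKdef
    have hKnear : ‖x K - xbar‖ < εp/4 := hJ _ (le_max_right _ _)
    have hKδ : r K < δ := hN _ (le_trans (le_max_left N J) hσmono.le_apply)
    -- sqrt geometric helper
    have hsqrtgeo : ∀ k m : ℕ, r (k+m) ≤ (1/4:ℝ)^m * r k →
        Real.sqrt (r (k+m) / a) ≤ (1/2:ℝ)^m * Real.sqrt (r k / a) := by
      intro k m h
      have h1 : r (k+m)/a ≤ (1/4:ℝ)^m * (r k / a) := by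
        rw [div_le_iff₀ ha]
        calc r (k+m) ≤ (1/4:ℝ)^m * r k := h
          _ = (1/4:ℝ)^m * (r k / a) * a := by field_simp
      have h2 : ((1/4:ℝ)^m) = ((1/2:ℝ)^m)^2 := by
        rw [← pow_mul, mul_comm, pow_mul]; norm_num
      calc Real.sqrt (r (k+m)/a) ≤ Real.sqrt ((1/4:ℝ)^m * (r k / a)) := Real.sqrt_le_sqrt h1
        _ = (1/2:ℝ)^m * Real.sqrt (r k / a) := by
            rw [Real.sqrt_mul (by positivity), h2, Real.sqrt_sq (by positivity)]
    -- main trapping induction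
    have hmain : ∀ m : ℕ, r (K+m) ≤ (1/4:ℝ)^m * r K ∧
        ‖x (K+m) - x K‖ ≤ (2 - 2*(1/2:ℝ)^m) * Real.sqrt (r K / a) := by
      intro m
      induction m with
      | zero => constructor <;> simp
      | succ m ih =>
        obtain ⟨ihr, ihx⟩ := ih
        have hsq : Real.sqrt (r (K+m) / a) ≤ (1/2:ℝ)^m * Real.sqrt (r K / a) :=
          hsqrtgeo K m ihr
        have hxm1 : ‖x (K+m+1) - x K‖ ≤ (2 - 2*(1/2:ℝ)^(m+1)) * Real.sqrt (r K / a) := by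
          have htri : ‖x (K+m+1) - x K‖ ≤ ‖x (K+m+1) - x (K+m)‖ + ‖x (K+m) - x K‖ :=
            norm_sub_le_norm_sub_add_norm_sub _ _ _
          have hstep : ‖x (K+m+1) - x (K+m)‖ ≤ (1/2:ℝ)^m * Real.sqrt (r K / a) :=
            le_trans (hrΔ (K+m)) hsq
          have hpows : ((1/2:ℝ)^(m+1)) = (1/2) * (1/2:ℝ)^m := by rw [pow_succ]; ring
          calc ‖x (K+m+1) - x K‖ ≤ ‖x (K+m+1) - x (K+m)‖ + ‖x (K+m) - x K‖ := htri
            _ ≤ (1/2:ℝ)^m * Real.sqrt (r K / a)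
                + (2 - 2*(1/2:ℝ)^m) * Real.sqrt (r K / a) := add_le_add hstep ihx
            _ = (2 - 2*(1/2:ℝ)^(m+1)) * Real.sqrt (r K / a) := by rw [hpows]; ring
        have hnear : ‖x (K+m+1) - xbar‖ < εp := by
          have htri2 : ‖x (K+m+1) - xbar‖ ≤ ‖x (K+m+1) - x K‖ + ‖x K - xbar‖ :=
            norm_sub_le_norm_sub_add_norm_sub _ _ _
          have h3 : Real.sqrt (r K / a) ≤ εp/4 := hδsqrt _ (hrpos K).le hKδ.le
          have h4 : (0:ℝ) < (1/2:ℝ)^(m+1) := by positivity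
          have h5 : (0:ℝ) ≤ Real.sqrt (r K / a) := Real.sqrt_nonneg _
          exact ballAux htri2 hxm1 hKnear h5 h3 h4
        have hηm : r (K+m+1) < ηp :=
          lt_of_le_of_lt (hranti (Nat.le_add_right K (m+1))) (lt_of_lt_of_le hKδ hδη)
        have hq4 : C * r (K+m) ^ (θ:ℝ) ≤ 1/4 :=
          hδquarter _ (hrpos _) (le_trans (hranti (Nat.le_add_right K m)) hKδ.le)
        have hrstep : r (K+m+1) ≤ (1/4) * r (K+m) :=
          quarterAux (hkeysplit (K+m) hnear hηm) hq4 (hrpos (K+m))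
        refine ⟨?_, hxm1⟩
        calc r (K+m+1) ≤ (1/4) * r (K+m) := hrstep
          _ ≤ (1/4) * ((1/4:ℝ)^m * r K) := mul_le_mul_of_nonneg_left ihr (by norm_num)
          _ = (1/4:ℝ)^(m+1) * r K := by ring
    -- the whole tail stays in the ball
    have hball : ∀ k, K ≤ k → ‖x k - xbar‖ < εp := by
      intro k hk
      obtain ⟨m, rfl⟩ := Nat.exists_eq_add_of_le hk
      have hx := (hmain m).2
      have htri2 : ‖x (K+m) - xbar‖ ≤ ‖x (K+m) - x K‖ + ‖x K - xbar‖ :=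
        norm_sub_le_norm_sub_add_norm_sub _ _ _
      have h3 : Real.sqrt (r K / a) ≤ εp/4 := hδsqrt _ (hrpos K).le hKδ.le
      have h4 : (0:ℝ) < (1/2:ℝ)^m := by positivity
      have h5 : (0:ℝ) ≤ Real.sqrt (r K / a) := Real.sqrt_nonneg _
      exact ballAux htri2 hx hKnear h5 h3 h4
    -- superlinear recursion for all k ≥ K
    have hsuper : ∀ k, K ≤ k → r (k+1) ≤ (C * r k ^ (θ:ℝ)) * r k := by
      intro k hk
      refine hkeysplit k (hball (k+1) (by omega)) ?_
      exact lt_of_le_of_lt (hranti (by omega)) (lt_of_lt_of_le hKδ hδη)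
    have hquarter : ∀ k, K ≤ k → r (k+1) ≤ (1/4) * r k := by
      intro k hk
      exact quarterAux (hsuper k hk) (hδquarter _ (hrpos k) (le_trans (hranti hk) hKδ.le)) (hrpos k)
    have hgeo : ∀ k, K ≤ k → ∀ m, r (k+m) ≤ (1/4:ℝ)^m * r k := by
      intro k hk m
      induction m with
      | zero => simp
      | succ m ih =>
        calc r (k+m+1) ≤ (1/4) * r (k+m) := hquarter _ (by omega)
          _ ≤ (1/4) * ((1/4:ℝ)^m * r k) := mul_le_mul_of_nonneg_left ih (by norm_num)
          _ = (1/4:ℝ)^(m+1) * r k := by ring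
    have htele : ∀ k, K ≤ k → ∀ m, ‖x (k+m) - x k‖ ≤ (2 - 2*(1/2:ℝ)^m) * Real.sqrt (r k / a) := by
      intro k hk m
      induction m with
      | zero => simp
      | succ m ih =>
        have hsq : Real.sqrt (r (k+m) / a) ≤ (1/2:ℝ)^m * Real.sqrt (r k / a) :=
          hsqrtgeo k m (hgeo k hk m)
        have hstep : ‖x (k+m+1) - x (k+m)‖ ≤ (1/2:ℝ)^m * Real.sqrt (r k / a) :=
          le_trans (hrΔ (k+m)) hsq
        have hpows : ((1/2:ℝ)^(m+1)) = (1/2) * (1/2:ℝ)^m := by rw [pow_succ]; ring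
        calc ‖x (k+m+1) - x k‖ ≤ ‖x (k+m+1) - x (k+m)‖ + ‖x (k+m) - x k‖ :=
              norm_sub_le_norm_sub_add_norm_sub _ _ _
          _ ≤ (1/2:ℝ)^m * Real.sqrt (r k / a)
              + (2 - 2*(1/2:ℝ)^m) * Real.sqrt (r k / a) := add_le_add hstep ih
          _ = (2 - 2*(1/2:ℝ)^(m+1)) * Real.sqrt (r k / a) := by rw [hpows]; ring
    -- distance to xbar
    have hdist : ∀ k, K ≤ k → ‖x k - xbar‖ ≤ 2 * Real.sqrt (r k / a) := by
      intro k hk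
      have hlim : Tendsto (fun j => ‖x k - x (σ j)‖) atTop (𝓝 ‖x k - xbar‖) :=
        (tendsto_const_nhds.sub hσtend).norm
      refine le_of_tendsto hlim ?_
      filter_upwards [eventually_ge_atTop k] with j hj
      have hσj : k ≤ σ j := le_trans hj hσmono.le_apply
      obtain ⟨m, hm⟩ := Nat.exists_eq_add_of_le hσj
      rw [norm_sub_rev, hm]
      have h4 : (0:ℝ) < (1/2:ℝ)^m := by positivity
      have h5 : (0:ℝ) ≤ Real.sqrt (r k / a) := Real.sqrt_nonneg _
      calc ‖x (k+m) - x k‖ ≤ (2 - 2*(1/2:ℝ)^m) * Real.sqrt (r k / a) := htele k hk m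
        _ ≤ 2 * Real.sqrt (r k / a) := twoAux h4 h5
    refine ⟨fun k => 2 * Real.sqrt (r k / a), ?_, ?_, K, fun k hk => hdist k hk⟩
    · intro k
      have := hrpos k
      have : 0 < r k / a := by positivity
      have := Real.sqrt_pos.mpr this
      linarith
    · -- ratio tends to zero
      have hg : Tendsto (fun k => Real.sqrt (C * r k ^ (θ:ℝ))) atTop (𝓝 0) := by
        have h0 : Tendsto (fun k => (r k) ^ (θ:ℝ)) atTop (𝓝 0) := by
          have := hrtend.rpow_const (p := θ) (Or.inr hθ.le)
          rwa [Real.zero_rpow (ne_of_gt hθ)] at this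
        have h1 : Tendsto (fun k => C * (r k) ^ (θ:ℝ)) atTop (𝓝 0) := by
          simpa using h0.const_mul C
        have h2 := h1.sqrt
        rwa [Real.sqrt_zero] at h2
      apply squeeze_zero' ?_ ?_ hg
      · filter_upwards with k
        have h1 : 0 < Real.sqrt (r k / a) := Real.sqrt_pos.mpr (div_pos (hrpos k) ha)
        have h2 : 0 < Real.sqrt (r (k+1) / a) := Real.sqrt_pos.mpr (div_pos (hrpos (k+1)) ha)
        positivity
      · filter_upwards [eventually_ge_atTop K] with k hk
        have hεk : (0:ℝ) < 2*Real.sqrt (r k /a) := by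
          have := Real.sqrt_pos.mpr (div_pos (hrpos k) ha)
          linarith
        rw [div_le_iff₀ hεk]
        have hnum : r (k+1) / a ≤ (C * r k ^ (θ:ℝ)) * (r k / a) := by
          rw [div_le_iff₀ ha]
          calc r (k+1) ≤ (C * r k ^ (θ:ℝ)) * r k := hsuper k hk
            _ = (C * r k ^ (θ:ℝ)) * (r k / a) * a := by field_simp
        calc 2*Real.sqrt (r (k+1)/a) ≤ 2*Real.sqrt ((C * r k ^ (θ:ℝ)) * (r k /a)) := by
              have := Real.sqrt_le_sqrt hnum
              linarith
          _ = Real.sqrt (C * r k ^ (θ:ℝ)) * (2*Real.sqrt (r k /a)) := by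
              rw [Real.sqrt_mul (mul_nonneg hC.le (Real.rpow_nonneg (hrpos k).le _))]; ring
end

section
/- Let φ : ℝⁿ → ℝ be continuously differentiable and bounded from below, let a, b > 0, let (x^k) satisfy the sufficient-decrease condition (H1) and the relative-error condition (H2), let x̄ be an accumulation point of (x^k), and suppose φ satisfies the exponent PLK condition at x̄ with exponent q = 1/2 and some constant M > 0. Then (x^k) converges R-linearly to x̄: there exist C > 0 and ρ ∈ (0,1) such that ‖x^k − x̄‖ ≤ C·ρ^k for all k ∈ ℕ. -/
/-!
Write `s k = √(φ (x k) - φ xbar)`. Sufficient decrease makes `φ ∘ x` antitone, so it decreases to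
`φ xbar` along the whole sequence, and it bounds the step `‖x (k+1) - x k‖` by `s k / √a`.
Near `xbar`, the PLK inequality with `q = 1/2` combined with (H2) gives
`4 s (k+1)² ≤ (M b)² ‖x (k+1) - x k‖² ≤ (M b)² (s k² - s (k+1)²) / a`, i.e. `s` contracts by the
factor `ρ = M b / √(4a + (M b)²) < 1`. Starting at an index where `x K` is close to `xbar` and
`s K` is small, the total length of the geometrically shrinking steps never carries the iterates
out of the PLK neighbourhood, so the contraction persists forever and `x` converges to `xbar`
at the rate `ρ ^ k`.
-/

open Filter Topology

theorem exists_pos_le_mul_pow_of_le_shift {f : ℕ → ℝ} {D ρ : ℝ} (hρ : 0 < ρ) (hf : ∀ k, 0 ≤ f k)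
    (K : ℕ) (htail : ∀ k, f (k + K) ≤ D * ρ ^ k) : ∃ C > 0, ∀ k, f k ≤ C * ρ ^ k := by
  have hO : f =O[atTop] (ρ ^ ·) := by
    refine Asymptotics.IsBigO.of_bound (D / ρ ^ K) ?_
    filter_upwards [eventually_ge_atTop K] with k hk
    obtain ⟨j, rfl⟩ := Nat.exists_eq_add_of_le' hk
    rw [Real.norm_of_nonneg (hf _), Real.norm_of_nonneg (by positivity), pow_add,
      div_mul_eq_mul_div, mul_div_assoc, mul_div_cancel_right₀ _ (pow_ne_zero K hρ.ne')]
    exact htail j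
  obtain ⟨C, hC, hbound⟩ := Asymptotics.bound_of_isBigO_nat_atTop hO
  refine ⟨C, hC, fun k => ?_⟩
  simpa [Real.norm_of_nonneg (hf k), abs_of_pos hρ] using hbound (pow_ne_zero k hρ.ne')

section LocalContraction

variable {E : Type*} [PseudoMetricSpace E] {u : ℕ → E} {s : ℕ → ℝ} {p : E} {c ρ ε : ℝ}

theorem le_pow_mul_of_contraction_near (hc : 0 ≤ c) (hρ0 : 0 ≤ ρ) (hρ1 : ρ < 1)
    (hstep : ∀ k, dist (u k) (u (k + 1)) ≤ c * s k)
    (hcontr : ∀ k, dist (u (k + 1)) p < ε → s (k + 1) ≤ ρ * s k)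
    (h0 : dist (u 0) p + c * s 0 / (1 - ρ) < ε) (k : ℕ) :
    s k ≤ ρ ^ k * s 0 := by
  have hcs : 0 ≤ c * s 0 := dist_nonneg.trans (hstep 0)
  induction k using Nat.strong_induction_on with
  | _ k ih =>
  cases k with
  | zero => simp
  | succ k =>
    have hpath : ∑ i ∈ Finset.range (k + 1), dist (u i) (u (i + 1)) ≤ c * s 0 / (1 - ρ) :=
      calc ∑ i ∈ Finset.range (k + 1), dist (u i) (u (i + 1))
          ≤ ∑ i ∈ Finset.range (k + 1), c * s 0 * ρ ^ i := by
            refine Finset.sum_le_sum fun i hi => (hstep i).trans ?_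
            calc c * s i ≤ c * (ρ ^ i * s 0) :=
                mul_le_mul_of_nonneg_left (ih i (Finset.mem_range.1 hi)) hc
              _ = c * s 0 * ρ ^ i := by ring
        _ = c * s 0 * ∑ i ∈ Finset.range (k + 1), ρ ^ i := (Finset.mul_sum ..).symm
        _ ≤ c * s 0 * (1 / (1 - ρ)) := by
            gcongr
            simpa using geom_sum_Ico_le_of_lt_one (m := 0) (n := k + 1) hρ0 hρ1
        _ = c * s 0 / (1 - ρ) := by ring
    -- the path from `u 0` is too short to leave the ball, so the contraction applies at `k + 1`
    have hnear : dist (u (k + 1)) p < ε :=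
      calc dist (u (k + 1)) p ≤ dist (u 0) (u (k + 1)) + dist (u 0) p := dist_triangle_left _ _ _
        _ ≤ ∑ i ∈ Finset.range (k + 1), dist (u i) (u (i + 1)) + dist (u 0) p := by
            gcongr; exact dist_le_range_sum_dist u (k + 1)
        _ < ε := by linarith
    calc s (k + 1) ≤ ρ * s k := hcontr k hnear
      _ ≤ ρ * (ρ ^ k * s 0) := mul_le_mul_of_nonneg_left (ih k k.lt_succ_self) hρ0
      _ = ρ ^ (k + 1) * s 0 := by ring

theorem exists_dist_le_pow_of_contraction_near (hc : 0 ≤ c) (hρ0 : 0 < ρ) (hρ1 : ρ < 1)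
    (hε : 0 < ε) {η : ℝ} (hη : 0 < η) (hs : Antitone s)
    (hstep : ∀ k, dist (u k) (u (k + 1)) ≤ c * s k)
    (hcontr : ∀ k, dist (u (k + 1)) p < ε → s (k + 1) < η → s (k + 1) ≤ ρ * s k)
    {σ : ℕ → ℕ} (hσ : StrictMono σ) (huσ : Tendsto (u ∘ σ) atTop (𝓝 p))
    (hsσ : Tendsto (s ∘ σ) atTop (𝓝 0)) :
    ∃ C > 0, ∀ k, dist (u k) p ≤ C * ρ ^ k := by
  have hsmall : Tendsto (fun j => dist (u (σ j)) p + c * s (σ j) / (1 - ρ)) atTop (𝓝 0) := by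
    simpa using (tendsto_iff_dist_tendsto_zero.1 huσ).add ((hsσ.const_mul c).div_const (1 - ρ))
  obtain ⟨j, hjε, hjη⟩ :=
    ((hsmall.eventually (gt_mem_nhds hε)).and (hsσ.eventually (gt_mem_nhds hη))).exists
  set K := σ j
  have hdecay : ∀ k, s (k + K) ≤ ρ ^ k * s K := by
    simpa only [zero_add] using le_pow_mul_of_contraction_near (u := fun k => u (k + K))
      (s := fun k => s (k + K)) (ε := ε) hc hρ0.le hρ1
      (fun k => by simpa only [add_right_comm] using hstep (k + K))
      (fun k hk => by
        simpa only [add_right_comm] using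
          hcontr (k + K) (by simpa only [add_right_comm] using hk)
            ((hs (by omega)).trans_lt hjη))
      (by simpa using hjε)
  have hgeom : ∀ k, dist (u (k + K)) (u (k + 1 + K)) ≤ c * s K * ρ ^ k := fun k =>
    calc dist (u (k + K)) (u (k + 1 + K)) ≤ c * s (k + K) := by
          simpa only [add_right_comm] using hstep (k + K)
      _ ≤ c * (ρ ^ k * s K) := mul_le_mul_of_nonneg_left (hdecay k) hc
      _ = c * s K * ρ ^ k := by ring
  have hlim : Tendsto u atTop (𝓝 p) :=
    tendsto_nhds_of_cauchySeq_of_subseq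
      ((cauchySeq_shift K).1 (cauchySeq_of_le_geometric _ _ hρ1 hgeom)) hσ.tendsto_atTop huσ
  exact exists_pos_le_mul_pow_of_le_shift hρ0 (fun _ => dist_nonneg) K fun k => by
    simpa only [mul_div_right_comm] using
      dist_le_of_le_geometric_of_tendsto _ _ hρ1 hgeom ((tendsto_add_atTop_iff_nat K).2 hlim) k

end LocalContraction

theorem div_sqrt_four_mul_add_sq_mem_Ioo {a L : ℝ} (ha : 0 < a) (hL : 0 < L) :
    L / √(4 * a + L ^ 2) ∈ Set.Ioo 0 1 := by
  have hlt : L < √(4 * a + L ^ 2) := (Real.lt_sqrt hL.le).2 (by linarith)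
  exact ⟨by positivity, (div_lt_one (hL.trans hlt)).2 hlt⟩

theorem le_div_sqrt_mul_of_two_mul_le {a L s s' d : ℝ} (ha : 0 < a) (hL : 0 ≤ L) (hs : 0 ≤ s)
    (hs' : 0 ≤ s') (hgrad : 2 * s' ≤ L * d) (hdec : a * d ^ 2 ≤ s ^ 2 - s' ^ 2) :
    s' ≤ L / √(4 * a + L ^ 2) * s := by
  have hQ : 0 < 4 * a + L ^ 2 := by positivity
  have hsq : 4 * s' ^ 2 ≤ L ^ 2 * d ^ 2 :=
    calc 4 * s' ^ 2 = (2 * s') ^ 2 := by ring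
      _ ≤ (L * d) ^ 2 := pow_le_pow_left₀ (by positivity) hgrad 2
      _ = L ^ 2 * d ^ 2 := by ring
  have hkey : (s' * √(4 * a + L ^ 2)) ^ 2 ≤ (L * s) ^ 2 := by
    rw [mul_pow, Real.sq_sqrt hQ.le]
    nlinarith [mul_le_mul_of_nonneg_left hdec (sq_nonneg L)]
  rw [div_mul_eq_mul_div, le_div_iff₀ (Real.sqrt_pos.2 hQ)]
  exact (pow_le_pow_iff_left₀ (by positivity) (by positivity) two_ne_zero).1 hkey

theorem two_mul_sqrt_le_of_rpow_half_le {t G M : ℝ} (hM : 0 < M) (hG : 0 ≤ G)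
    (h : 0 < t → 1 / (M * (1 - 1 / 2)) * t ^ (1 / 2 : ℝ) ≤ G) : 2 * √t ≤ M * G := by
  rcases le_or_gt t 0 with ht | ht
  · rw [Real.sqrt_eq_zero'.2 ht, mul_zero]
    positivity
  · have hG' := h ht
    rw [← Real.sqrt_eq_rpow, show 1 / (M * (1 - 1 / 2)) = 2 / M by ring] at hG'
    rw [div_mul_eq_mul_div, div_le_iff₀ hM] at hG'
    linarith

section SufficientDecrease

variable {E : Type*} [NormedAddCommGroup E] {φ : E → ℝ} {x : ℕ → E} {a : ℝ}

theorem antitone_of_sufficient_decrease (ha : 0 ≤ a)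
    (hH1 : ∀ k, φ (x (k + 1)) + a * ‖x (k + 1) - x k‖ ^ 2 ≤ φ (x k)) :
    Antitone (φ ∘ x) :=
  antitone_nat_of_succ_le fun k => by
    have := hH1 k
    simp only [Function.comp_apply]
    nlinarith [sq_nonneg ‖x (k + 1) - x k‖]

theorem norm_succ_sub_le_of_sufficient_decrease (ha : 0 < a)
    (hH1 : ∀ k, φ (x (k + 1)) + a * ‖x (k + 1) - x k‖ ^ 2 ≤ φ (x k)) {v : ℝ} {k : ℕ}
    (hv : v ≤ φ (x (k + 1))) :
    ‖x (k + 1) - x k‖ ≤ (√a)⁻¹ * √(φ (x k) - v) := by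
  rw [← Real.sqrt_inv, ← Real.sqrt_mul (inv_nonneg.2 ha.le)]
  refine (le_abs_self _).trans (Real.abs_le_sqrt ?_)
  rw [inv_mul_eq_div, le_div_iff₀ ha]
  linarith [hH1 k]

variable [InnerProductSpace ℝ E] [CompleteSpace E] {b M : ℝ}

theorem sqrt_sub_succ_le_of_plk_half (ha : 0 < a) (hM : 0 < M) (hb : 0 ≤ b)
    (hH1 : ∀ k, φ (x (k + 1)) + a * ‖x (k + 1) - x k‖ ^ 2 ≤ φ (x k))
    (hH2 : ∀ k, ‖gradient φ (x (k + 1))‖ ≤ b * ‖x (k + 1) - x k‖)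
    {v : ℝ} (hv : ∀ k, v ≤ φ (x k)) (k : ℕ)
    (hPLK : 0 < φ (x (k + 1)) - v →
      1 / (M * (1 - 1 / 2)) * (φ (x (k + 1)) - v) ^ (1 / 2 : ℝ) ≤ ‖gradient φ (x (k + 1))‖) :
    √(φ (x (k + 1)) - v) ≤ M * b / √(4 * a + (M * b) ^ 2) * √(φ (x k) - v) := by
  have hgrad : 2 * √(φ (x (k + 1)) - v) ≤ M * b * ‖x (k + 1) - x k‖ := by
    rw [mul_assoc]
    exact (two_mul_sqrt_le_of_rpow_half_le hM (norm_nonneg _) hPLK).trans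
      (mul_le_mul_of_nonneg_left (hH2 k) hM.le)
  refine le_div_sqrt_mul_of_two_mul_le ha (by positivity) (Real.sqrt_nonneg _)
    (Real.sqrt_nonneg _) hgrad ?_
  rw [Real.sq_sqrt (sub_nonneg.2 (hv k)), Real.sq_sqrt (sub_nonneg.2 (hv (k + 1)))]
  linarith [hH1 k]

end SufficientDecrease

theorem iterate_Rlinear_q_half_H2_general
    (n : ℕ) (φ : EuclideanSpace ℝ (Fin n) → ℝ)
    (hφ : ContDiff ℝ 1 φ)
    (a b : ℝ) (ha : 0 < a) (hb : 0 < b)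
    (x : ℕ → EuclideanSpace ℝ (Fin n))
    (hH1 : ∀ k : ℕ, φ (x (k + 1)) + a * ‖x (k + 1) - x k‖ ^ 2 ≤ φ (x k))
    (hH2 : ∀ k : ℕ, ‖gradient φ (x (k + 1))‖ ≤ b * ‖x (k + 1) - x k‖)
    (xbar : EuclideanSpace ℝ (Fin n))
    (hacc : ∃ σ : ℕ → ℕ, StrictMono σ ∧
      Tendsto (fun j => x (σ j)) atTop (𝓝 xbar))
    (q : ℝ) (hq : q = 1/2)
    (M : ℝ) (hM : 0 < M)
    (hPLK : ∃ ε η : ℝ, 0 < ε ∧ 0 < η ∧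
      ∀ y, ‖y - xbar‖ < ε → φ xbar < φ y → φ y < φ xbar + η →
        (1 / (M * (1 - q))) * (φ y - φ xbar) ^ q ≤ ‖gradient φ y‖) :
    ∃ C > (0 : ℝ), ∃ ρ ∈ Set.Ioo (0 : ℝ) 1, ∀ k : ℕ,
      ‖x k - xbar‖ ≤ C * ρ ^ k := by
  obtain ⟨σ, hσ, hxσ⟩ := hacc
  obtain ⟨ε, η, hε, hη, hPLK⟩ := hPLK
  subst hq
  have hanti := antitone_of_sufficient_decrease ha.le hH1
  have hφσ : Tendsto (φ ∘ x ∘ σ) atTop (𝓝 (φ xbar)) := (hφ.continuous.tendsto xbar).comp hxσ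
  have hge : ∀ k, φ xbar ≤ φ (x k) :=
    hanti.le_of_tendsto ((tendsto_iff_tendsto_subseq_of_antitone hanti hσ.tendsto_atTop).2 hφσ)
  set s : ℕ → ℝ := fun k => √(φ (x k) - φ xbar)
  have hρ := div_sqrt_four_mul_add_sq_mem_Ioo ha (mul_pos hM hb)
  obtain ⟨C, hC, hbound⟩ := exists_dist_le_pow_of_contraction_near (s := s)
    (inv_nonneg.2 (Real.sqrt_nonneg a)) hρ.1 hρ.2 hε (Real.sqrt_pos.2 hη)
    (fun k l hkl => Real.sqrt_le_sqrt (sub_le_sub_right (hanti hkl) _))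
    (fun k => by
      rw [dist_comm, dist_eq_norm]
      exact norm_succ_sub_le_of_sufficient_decrease ha hH1 (hge (k + 1)))
    (fun k hnear hsmall => sqrt_sub_succ_le_of_plk_half ha hM hb.le hH1 hH2 hge k fun hpos =>
      hPLK _ (by rwa [← dist_eq_norm]) (sub_pos.1 hpos)
        (by linarith [(Real.sqrt_lt_sqrt_iff_of_pos hη).1 hsmall]))
    hσ hxσ (by simpa using (hφσ.sub_const (φ xbar)).sqrt :
      Tendsto (fun j => √(φ (x (σ j)) - φ xbar)) atTop (𝓝 0))
  exact ⟨C, hC, _, hρ, fun k => by simpa only [dist_eq_norm] using hbound k⟩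

theorem iterate_Rlinear_q_half_H2
    (n : ℕ) (φ : EuclideanSpace ℝ (Fin n) → ℝ)
    (hφ : ContDiff ℝ 1 φ)
    (hbdd : ∃ m : ℝ, ∀ x, m ≤ φ x)
    (a b : ℝ) (ha : 0 < a) (hb : 0 < b)
    (x : ℕ → EuclideanSpace ℝ (Fin n))
    (hH1 : ∀ k : ℕ, φ (x (k + 1)) + a * ‖x (k + 1) - x k‖ ^ 2 ≤ φ (x k))
    (hH2 : ∀ k : ℕ, ‖gradient φ (x (k + 1))‖ ≤ b * ‖x (k + 1) - x k‖)
    (xbar : EuclideanSpace ℝ (Fin n))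
    (hacc : ∃ σ : ℕ → ℕ, StrictMono σ ∧
      Tendsto (fun j => x (σ j)) atTop (𝓝 xbar))
    (q : ℝ) (hq : q = 1/2)
    (M : ℝ) (hM : 0 < M)
    (hPLK : ∃ ε η : ℝ, 0 < ε ∧ 0 < η ∧
      ∀ y, ‖y - xbar‖ < ε → φ xbar < φ y → φ y < φ xbar + η →
        (1 / (M * (1 - q))) * (φ y - φ xbar) ^ q ≤ ‖gradient φ y‖) :
    ∃ C > (0 : ℝ), ∃ ρ ∈ Set.Ioo (0 : ℝ) 1, ∀ k : ℕ,
      ‖x k - xbar‖ ≤ C * ρ ^ k :=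
  iterate_Rlinear_q_half_H2_general n φ hφ a b ha hb x hH1 hH2 xbar hacc q hq M hM hPLK
end

section
/- Let φ : ℝⁿ → ℝ be continuously differentiable and bounded from below, let a, b > 0, let (x^k) satisfy the sufficient-decrease condition (H1) and the relative-error condition (H2), let x̄ be an accumulation point of (x^k), and suppose φ satisfies the exponent PLK condition at x̄ with exponent q ∈ (1/2, 1) and some constant M > 0. Then there exist σ > 0 and K ∈ ℕ such that ‖x^k − x̄‖ ≤ σ · k^{−(1−q)/(2q−1)} for all k ≥ K. -/
open Filter Topology



/-- Bernoulli / concavity: for `0 < r < 1` and `0 < t ≤ s`,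
`r * s^(r-1) * (s - t) ≤ s^r - t^r`. -/
lemma aux_bern {s t r : ℝ} (ht : 0 < t) (hts : t ≤ s) (hr0 : 0 < r) (hr1 : r < 1) :
    r * s ^ (r - 1) * (s - t) ≤ s ^ r - t ^ r := by
  have hs : 0 < s := lt_of_lt_of_le ht hts
  have hts0 : (0:ℝ) ≤ t / s := by positivity
  have hb := rpow_one_add_le_one_add_mul_self (s := t / s - 1) (p := r)
    (by linarith) hr0.le hr1.le
  rw [show (1 : ℝ) + (t / s - 1) = t / s by ring] at hb
  rw [Real.div_rpow ht.le hs.le] at hb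
  have hsr : 0 < s ^ r := Real.rpow_pos_of_pos hs r
  rw [div_le_iff₀ hsr] at hb
  have hsr1 : s ^ (r - 1) = s ^ r / s := by rw [Real.rpow_sub hs, Real.rpow_one]
  rw [hsr1]
  have hs0 : s ≠ 0 := hs.ne'
  have hkey : (1 + r * (t / s - 1)) * s ^ r = s ^ r + r * (s ^ r / s) * (t - s) := by
    field_simp
  rw [hkey] at hb
  linarith

/-- Telescoping: if `d (i+1) + W (i+1) ≤ W i` from `m` on, the partial sums of `d`
starting at `l+1` are bounded by `W l`. -/
lemma aux_tel {d W : ℕ → ℝ} {m : ℕ} (hW : ∀ i, 0 ≤ W i) (hd : ∀ i, 0 ≤ d i)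
    (hstep : ∀ i, m ≤ i → d (i + 1) + W (i + 1) ≤ W i) :
    ∀ l, m ≤ l → ∀ N, (∑ j ∈ Finset.Ico (l + 1) N, d j) ≤ W l := by
  intro l hl N
  have key : ∀ N, l ≤ N → (∑ j ∈ Finset.Ico (l + 1) (N + 1), d j) + W N ≤ W l := by
    intro N hN
    induction N, hN using Nat.le_induction with
    | base => simp
    | succ N hN ih =>
      rw [Finset.sum_Ico_succ_top (by omega)]
      have := hstep N (le_trans hl hN)
      linarith
  rcases le_or_gt N (l + 1) with h | h
  · rw [Finset.Ico_eq_empty (by omega), Finset.sum_empty]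
    exact hW l
  · obtain ⟨N', rfl⟩ : ∃ N', N = N' + 1 := ⟨N - 1, by omega⟩
    have := key N' (by omega)
    have := hW N'
    linarith

/-- Linear growth from step lower bounds. -/
lemma aux_growth {u : ℕ → ℝ} {μ : ℝ} {m : ℕ} (h0 : 0 ≤ u (m + 1))
    (hstep : ∀ j, m + 1 ≤ j → u j + μ ≤ u (j + 1)) :
    ∀ k, m + 1 ≤ k → μ * ((k : ℝ) - (m + 1)) ≤ u k := by
  intro k hk
  induction k, hk using Nat.le_induction with
  | base => simpa using h0
  | succ k hk ih =>
    have := hstep k hk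
    have hc : ((k : ℝ) + 1) - (m + 1) = ((k : ℝ) - (m + 1)) + 1 := by ring
    push_cast
    rw [hc, mul_add, mul_one]
    linarith

section ball
variable {E : Type*} [NormedAddCommGroup E]

/-- The bootstrap induction: iterates stay in the `ε`-ball and the length estimate holds. -/
lemma aux_ball {x : ℕ → E} {xbar : E} {d W : ℕ → ℝ} {m : ℕ} {ε : ℝ} (hε : 0 < ε)
    (hd : ∀ i, d i = ‖x (i + 1) - x i‖) (hW0 : ∀ i, 0 ≤ W i)
    (hball0 : ‖x (m + 1) - xbar‖ < ε / 4) (hWm : W m < 3 * ε / 4)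
    (hstep : ∀ i, m ≤ i → ‖x (i + 1) - xbar‖ < ε → d (i + 1) + W (i + 1) ≤ W i) :
    ∀ N, m + 1 ≤ N →
      ‖x N - xbar‖ < ε ∧ (∑ j ∈ Finset.Ico (m + 1) (N + 1), d j) + W N ≤ W m := by
  intro N hN
  induction N, hN using Nat.le_induction with
  | base =>
    constructor
    · linarith
    · rw [Finset.sum_Ico_succ_top le_rfl, Finset.Ico_self, Finset.sum_empty, zero_add]
      exact hstep m le_rfl (by linarith)
  | succ N hN ih =>
    obtain ⟨ihball, ihsum⟩ := ih
    have hsum_le : (∑ j ∈ Finset.Ico (m + 1) (N + 1), d j) ≤ W m := by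
      have := hW0 N; linarith
    have hdistsum : dist (x (m + 1)) (x (N + 1)) ≤ ∑ j ∈ Finset.Ico (m + 1) (N + 1), d j := by
      refine le_trans (dist_le_Ico_sum_dist x (by omega)) (le_of_eq ?_)
      refine Finset.sum_congr rfl fun i _ => ?_
      rw [hd i, dist_eq_norm, norm_sub_rev]
    have hballN1 : ‖x (N + 1) - xbar‖ < ε := by
      have h1 : dist (x (N + 1)) xbar ≤ dist (x (N + 1)) (x (m + 1)) + dist (x (m + 1)) xbar :=
        dist_triangle _ _ _
      rw [dist_comm (x (N + 1)) (x (m + 1))] at h1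
      have h2 : dist (x (m + 1)) xbar < ε / 4 := by rw [dist_eq_norm]; exact hball0
      rw [dist_eq_norm] at h1
      linarith
    refine ⟨hballN1, ?_⟩
    rw [Finset.sum_Ico_succ_top (by omega)]
    have := hstep N (by omega) hballN1
    linarith

end ball


lemma aux_bern' {s t r : ℝ} (ht : 0 < t) (hts : t ≤ s) (hr0 : 0 < r) (hr1 : r < 1) :
    r * s ^ (r - 1) * (s - t) ≤ s ^ r - t ^ r := by
  have hs : 0 < s := lt_of_lt_of_le ht hts
  have hts0 : (0:ℝ) ≤ t / s := by positivity
  have hb := rpow_one_add_le_one_add_mul_self (s := t / s - 1) (p := r)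
    (by linarith) hr0.le hr1.le
  rw [show (1 : ℝ) + (t / s - 1) = t / s by ring] at hb
  rw [Real.div_rpow ht.le hs.le] at hb
  have hsr : 0 < s ^ r := Real.rpow_pos_of_pos hs r
  rw [div_le_iff₀ hsr] at hb
  have hsr1 : s ^ (r - 1) = s ^ r / s := by rw [Real.rpow_sub hs, Real.rpow_one]
  rw [hsr1]
  have hs0 : s ≠ 0 := hs.ne'
  have hkey : (1 + r * (t / s - 1)) * s ^ r = s ^ r + r * (s ^ r / s) * (t - s) := by
    field_simp
  rw [hkey] at hb
  linarith

/-- The one-step inequality of the KL argument. -/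
lemma aux_step {a b M q r C : ℝ} {dprev dnext s t : ℝ}
    (ha : 0 < a) (hr0 : 0 < r) (hr1 : r < 1)
    (hq : q = 1 - r) (hC : a * C = M * b)
    (hCpos : 0 ≤ C)
    (ht : 0 < t) (hts : t ≤ s)
    (hdnext : 0 ≤ dnext) (hdprev : 0 ≤ dprev)
    (hKL : s ^ q ≤ M * r * (b * dprev))
    (hdecr : a * dnext ^ 2 ≤ s - t) :
    2 * dnext ≤ dprev + C * (s ^ r - t ^ r) := by
  have hs : 0 < s := lt_of_lt_of_le ht hts
  have hbern := aux_bern' ht hts hr0 hr1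
  have hsq : 0 < s ^ q := Real.rpow_pos_of_pos hs q
  have hid : s ^ (r - 1) * s ^ q = 1 := by
    rw [← Real.rpow_add hs, show r - 1 + q = 0 by rw [hq]; ring, Real.rpow_zero]
  have hS : 0 ≤ s ^ r - t ^ r := by
    have := Real.rpow_le_rpow ht.le hts hr0.le; linarith
  have h5 : r * (s - t) ≤ s ^ q * (s ^ r - t ^ r) := by
    have h := mul_le_mul_of_nonneg_left hbern hsq.le
    calc r * (s - t) = s ^ q * (r * s ^ (r - 1) * (s - t)) := by
          rw [show s ^ q * (r * s ^ (r-1) * (s - t)) = r * (s ^ (r-1) * s ^ q) * (s - t) by ring,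
            hid]; ring
    _ ≤ s ^ q * (s ^ r - t ^ r) := h
  have h6 : (a * r) * dnext ^ 2 ≤ M * r * (b * dprev) * (s ^ r - t ^ r) := by
    calc (a * r) * dnext ^ 2 = r * (a * dnext ^ 2) := by ring
    _ ≤ r * (s - t) := by nlinarith
    _ ≤ s ^ q * (s ^ r - t ^ r) := h5
    _ ≤ M * r * (b * dprev) * (s ^ r - t ^ r) := mul_le_mul_of_nonneg_right hKL hS
  have h6' : (a * r) * dnext ^ 2 ≤ (a * r) * (C * (s ^ r - t ^ r) * dprev) := by
    calc (a * r) * dnext ^ 2 ≤ M * r * (b * dprev) * (s ^ r - t ^ r) := h6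
    _ = (M * b) * (r * dprev * (s ^ r - t ^ r)) := by ring
    _ = (a * C) * (r * dprev * (s ^ r - t ^ r)) := by rw [hC]
    _ = (a * r) * (C * (s ^ r - t ^ r) * dprev) := by ring
  have h7 : dnext ^ 2 ≤ (C * (s ^ r - t ^ r)) * dprev :=
    le_of_mul_le_mul_left h6' (by positivity)
  have h9 : 0 ≤ dprev + C * (s ^ r - t ^ r) := by
    have := mul_nonneg hCpos hS; linarith
  nlinarith [h7, h9, hdnext, sq_nonneg (dprev - C * (s ^ r - t ^ r))]

/-- The one-step inequality for the reciprocal-power sequence. -/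
lemma aux_ustep {s t p c : ℝ} (hp0 : 0 < p) (hp1 : p < 1) (ht : 0 < t) (hts : t ≤ s)
    (hc : 0 < c) (hrec : c * t ^ (p + 1) ≤ s - t) :
    min ((2 ^ p - 1) * s ^ (-p)) (p * c / 2) ≤ t ^ (-p) - s ^ (-p) := by
  have hs : 0 < s := lt_of_lt_of_le ht hts
  have hsp : 0 < s ^ p := Real.rpow_pos_of_pos hs p
  have htp : 0 < t ^ p := Real.rpow_pos_of_pos ht p
  rcases le_or_gt t (s / 2) with hcase | hcase
  · -- small case : t ≤ s/2
    have h1 : (s / 2) ^ (-p) ≤ t ^ (-p) :=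
      Real.rpow_le_rpow_of_nonpos ht hcase (by linarith)
    have h2 : (s / 2) ^ (-p) = 2 ^ p * s ^ (-p) := by
      rw [Real.div_rpow hs.le (by norm_num), Real.rpow_neg (by norm_num : (0:ℝ) ≤ 2),
        div_eq_mul_inv, inv_inv, mul_comm]
    refine le_trans (min_le_left _ _) ?_
    rw [h2] at h1
    have hsnp : 0 ≤ s ^ (-p) := Real.rpow_nonneg hs.le _
    nlinarith [h1]
  · -- large case : s/2 < t
    have hbern := aux_bern' ht hts hp0 hp1
    have hsp1 : s ^ (p - 1) = s ^ p / s := by rw [Real.rpow_sub hs, Real.rpow_one]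
    have htp1 : t ^ (p + 1) = t ^ p * t := by rw [Real.rpow_add ht, Real.rpow_one]
    have h4 : p * (s ^ p / s) * (c * (t ^ p * t)) ≤ s ^ p - t ^ p := by
      calc p * (s ^ p / s) * (c * (t ^ p * t)) = p * (s ^ p / s) * (c * t ^ (p + 1)) := by
            rw [htp1]
      _ ≤ p * (s ^ p / s) * (s - t) := by
            apply mul_le_mul_of_nonneg_left hrec (by positivity)
      _ ≤ s ^ p - t ^ p := by rw [← hsp1]; exact hbern
    have h5 : p * c * (t / s) ≤ (s ^ p - t ^ p) / (s ^ p * t ^ p) := by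
      rw [le_div_iff₀ (by positivity)]
      calc p * c * (t / s) * (s ^ p * t ^ p) = p * (s ^ p / s) * (c * (t ^ p * t)) := by
            field_simp
      _ ≤ s ^ p - t ^ p := h4
    have h6 : (s ^ p - t ^ p) / (s ^ p * t ^ p) = (t ^ p)⁻¹ - (s ^ p)⁻¹ := by
      field_simp
    have h7 : (1:ℝ) / 2 < t / s := by
      rw [div_lt_div_iff₀ (by norm_num) hs]; linarith
    have h8 : p * c / 2 ≤ p * c * (t / s) := by
      have := mul_le_mul_of_nonneg_left h7.le (mul_pos hp0 hc).le
      linarith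
    refine le_trans (min_le_right _ _) ?_
    rw [Real.rpow_neg ht.le, Real.rpow_neg hs.le]
    rw [h6] at h5
    linarith

lemma aux_sqrt {d B : ℝ} (hd : 0 ≤ d) (h : d^2 ≤ B) : d ≤ B ^ ((2:ℝ)⁻¹) := by
  have h1 : d = (d ^ ((2:ℕ):ℝ)) ^ ((2:ℝ)⁻¹) := by
    rw [show (((2:ℕ):ℝ)) = (2:ℝ) by norm_num]
    exact (Real.rpow_rpow_inv hd (by norm_num)).symm
  rw [h1]
  apply Real.rpow_le_rpow (Real.rpow_nonneg hd _) _ (by norm_num)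
  rw [Real.rpow_natCast]
  exact h

set_option maxHeartbeats 1000000 in
theorem iterate_sublinear_high_exponent_H2
    (n : ℕ) (φ : EuclideanSpace ℝ (Fin n) → ℝ)
    (hφ : ContDiff ℝ 1 φ)
    (hbdd : ∃ m : ℝ, ∀ x, m ≤ φ x)
    (a b : ℝ) (ha : 0 < a) (hb : 0 < b)
    (x : ℕ → EuclideanSpace ℝ (Fin n))
    (hH1 : ∀ k : ℕ, φ (x (k + 1)) + a * ‖x (k + 1) - x k‖ ^ 2 ≤ φ (x k))
    (hH2 : ∀ k : ℕ, ‖gradient φ (x (k + 1))‖ ≤ b * ‖x (k + 1) - x k‖)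
    (xbar : EuclideanSpace ℝ (Fin n))
    (hacc : ∃ σ : ℕ → ℕ, StrictMono σ ∧
      Tendsto (fun j => x (σ j)) atTop (𝓝 xbar))
    (q : ℝ) (hq : q ∈ Set.Ioo (1/2 : ℝ) 1)
    (M : ℝ) (hM : 0 < M)
    (hPLK : ∃ ε η : ℝ, 0 < ε ∧ 0 < η ∧
      ∀ y, ‖y - xbar‖ < ε → φ xbar < φ y → φ y < φ xbar + η →
        (1 / (M * (1 - q))) * (φ y - φ xbar) ^ q ≤ ‖gradient φ y‖) :
    ∃ σ' > (0 : ℝ), ∃ K : ℕ, ∀ k ≥ K,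
      ‖x k - xbar‖ ≤ σ' * (k : ℝ) ^ (-((1 - q) / (2 * q - 1))) := by
  obtain ⟨hq1, hq2⟩ := hq
  obtain ⟨σ, hσmono, hσtend⟩ := hacc
  obtain ⟨ε, η, hε, hη, hKL⟩ := hPLK
  -- basic monotonicity facts
  have hmono : ∀ k, φ (x (k+1)) ≤ φ (x k) := by
    intro k
    have h0 : 0 ≤ a * ‖x (k+1) - x k‖^2 := by positivity
    linarith [hH1 k]
  have hanti : Antitone (fun k => φ (x k)) := antitone_nat_of_succ_le hmono
  have hσge : ∀ j, j ≤ σ j := fun j => hσmono.le_apply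
  have hφtend : Tendsto (fun j => φ (x (σ j))) atTop (𝓝 (φ xbar)) :=
    (hφ.continuous.tendsto xbar).comp hσtend
  have hlb : ∀ k, φ xbar ≤ φ (x k) := by
    intro k
    apply le_of_tendsto hφtend
    filter_upwards [eventually_ge_atTop k] with j hj
    exact hanti (hj.trans (hσge j))
  have hsmall : ∀ e : ℝ, 0 < e → ∃ N, ∀ k, N ≤ k → φ (x k) - φ xbar < e := by
    intro e he
    have hev : ∀ᶠ j in atTop, φ (x (σ j)) < φ xbar + e :=
      hφtend.eventually_lt_const (by linarith)
    obtain ⟨j, hj⟩ := hev.exists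
    refine ⟨σ j, fun k hk => ?_⟩
    have h1 : φ (x k) ≤ φ (x (σ j)) := hanti hk
    linarith
  rcases em (∀ k, φ xbar < φ (x k)) with hpos | hneg
  swap
  · -- degenerate case : the sequence is eventually constant equal to xbar
    push_neg at hneg
    obtain ⟨K, hK⟩ := hneg
    have heq : ∀ k, K ≤ k → φ (x k) = φ xbar := fun k hk =>
      le_antisymm (le_trans (hanti hk) hK) (hlb k)
    have hsame : ∀ k, K ≤ k → x k = x K := by
      intro k hk
      induction k, hk using Nat.le_induction with
      | base => rfl
      | succ k hk ih =>
        have h1 := hH1 k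
        have h2 : φ (x k) = φ xbar := heq k hk
        have h3 : φ (x (k+1)) = φ xbar := heq (k+1) (by omega)
        have h4 : ‖x (k+1) - x k‖^2 ≤ 0 := by nlinarith
        have h5 : ‖x (k+1) - x k‖^2 = 0 := le_antisymm h4 (sq_nonneg _)
        have h6 : x (k+1) = x k := by
          rw [pow_eq_zero_iff (two_ne_zero), norm_sub_eq_zero_iff] at h5
          exact h5
        rw [h6, ih]
    have hxK : x K = xbar := by
      have h1 : Tendsto (fun j => x (σ j)) atTop (𝓝 (x K)) := by
        apply Tendsto.congr' _ tendsto_const_nhds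
        filter_upwards [eventually_ge_atTop K] with j hj
        exact (hsame (σ j) (hj.trans (hσge j))).symm
      exact tendsto_nhds_unique h1 hσtend
    refine ⟨1, one_pos, K, fun k hk => ?_⟩
    rw [hsame k hk, hxK, sub_self, norm_zero, one_mul]
    positivity
  -- main case
  have hΔpos : ∀ k, 0 < φ (x k) - φ xbar := fun k => sub_pos.2 (hpos k)
  have hΔanti : ∀ {i j : ℕ}, i ≤ j → φ (x j) - φ xbar ≤ φ (x i) - φ xbar := by
    intro i j h
    have := hanti h
    simp only at this
    linarith
  set r := 1 - q with hrdef
  set p := 2*q - 1 with hpdef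
  have hr0 : 0 < r := by rw [hrdef]; linarith
  have hr1 : r < 1 := by rw [hrdef]; linarith
  have hr12 : r ≤ 1/2 := by rw [hrdef]; linarith
  have hp0 : 0 < p := by rw [hpdef]; linarith
  have hp1 : p < 1 := by rw [hpdef]; linarith
  have hMr : 0 < M * r := by positivity
  set C := M * b / a with hCdef
  have hC : 0 < C := by rw [hCdef]; positivity
  have haC : a * C = M * b := by rw [hCdef]; field_simp
  set c := a / (M * r * b)^2 with hcdef
  have hc : 0 < c := by rw [hcdef]; positivity
  have hca : c * (M * r * b)^2 = a := by rw [hcdef]; field_simp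
  have hd2 : ∀ k, a * ‖x (k+1) - x k‖^2 ≤ (φ (x k) - φ xbar) - (φ (x (k+1)) - φ xbar) := by
    intro k; have := hH1 k; linarith
  -- thresholds
  have hCpos1 : (0:ℝ) < 3*ε/(8*(C+1)) := by positivity
  have ht0 : (0:ℝ) < min η (min (a * (3*ε/8)^2) ((3*ε/(8*(C+1))) ^ r⁻¹)) :=
    lt_min hη (lt_min (by positivity) (Real.rpow_pos_of_pos hCpos1 _))
  obtain ⟨N₁, hN₁⟩ := hsmall _ ht0
  obtain ⟨j₁, hj₁⟩ := Metric.tendsto_atTop.mp hσtend (ε/4) (by positivity)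
  obtain ⟨m, hm⟩ : ∃ m, σ (max j₁ (N₁ + 1)) = m + 1 :=
    ⟨σ (max j₁ (N₁ + 1)) - 1, by
      have := hσge (max j₁ (N₁ + 1)); omega⟩
  have hmN₁ : N₁ ≤ m := by
    have h1 : N₁ + 1 ≤ max j₁ (N₁ + 1) := le_max_right _ _
    have h2 := hσge (max j₁ (N₁ + 1))
    omega
  have hball0 : ‖x (m+1) - xbar‖ < ε/4 := by
    have h1 := hj₁ (max j₁ (N₁ + 1)) (le_max_left _ _)
    rw [dist_eq_norm, hm] at h1
    exact h1
  have hΔm : φ (x m) - φ xbar < min η (min (a * (3*ε/8)^2) ((3*ε/(8*(C+1))) ^ r⁻¹)) :=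
    hN₁ m hmN₁
  have hΔmη : φ (x m) - φ xbar < η := lt_of_lt_of_le hΔm (min_le_left _ _)
  have hΔma : φ (x m) - φ xbar < a * (3*ε/8)^2 :=
    lt_of_lt_of_le hΔm (le_trans (min_le_right _ _) (min_le_left _ _))
  have hΔmc : φ (x m) - φ xbar < (3*ε/(8*(C+1))) ^ r⁻¹ :=
    lt_of_lt_of_le hΔm (le_trans (min_le_right _ _) (min_le_right _ _))
  -- d m bound
  have hdm : ‖x (m+1) - x m‖ < 3*ε/8 := by
    have h1 := hd2 m
    have h2 := hΔpos (m+1)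
    have h3 : a * ‖x (m+1) - x m‖^2 < a * (3*ε/8)^2 := by linarith
    have h4 : ‖x (m+1) - x m‖^2 < (3*ε/8)^2 := lt_of_mul_lt_mul_left h3 ha.le
    nlinarith [norm_nonneg (x (m+1) - x m), hε]
  have hΔsucη : ∀ i, m ≤ i → φ (x (i+1)) - φ xbar < η := fun i hi =>
    lt_of_le_of_lt (hΔanti (by omega)) hΔmη
  have hCΔ : C * (φ (x (m+1)) - φ xbar) ^ r < 3*ε/8 := by
    have h1 : (φ (x (m+1)) - φ xbar) ^ r < ((3*ε/(8*(C+1))) ^ r⁻¹) ^ r :=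
      Real.rpow_lt_rpow (hΔpos _).le (lt_of_le_of_lt (hΔanti (by omega)) hΔmc) hr0
    rw [Real.rpow_inv_rpow hCpos1.le hr0.ne'] at h1
    have h2 : C * (φ (x (m+1)) - φ xbar) ^ r ≤ C * (3*ε/(8*(C+1))) :=
      mul_le_mul_of_nonneg_left h1.le hC.le
    have h3 : C * (3*ε/(8*(C+1))) < 3*ε/8 := by
      rw [mul_div_assoc', div_lt_div_iff₀ (by positivity) (by norm_num)]
      nlinarith
    linarith
  -- the Lyapunov quantity W
  set W : ℕ → ℝ := fun i => ‖x (i+1) - x i‖ + C * (φ (x (i+1)) - φ xbar) ^ r with hWdef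
  have hW0 : ∀ i, 0 ≤ W i := fun i =>
    add_nonneg (norm_nonneg _) (mul_nonneg hC.le (Real.rpow_nonneg (hΔpos _).le _))
  have hWm : W m < 3*ε/4 := by
    simp only [hWdef]
    linarith
  -- instantiated KL inequality
  have hKLx : ∀ i, m ≤ i → ‖x (i+1) - xbar‖ < ε →
      (φ (x (i+1)) - φ xbar) ^ q ≤ M * r * (b * ‖x (i+1) - x i‖) := by
    intro i hi hballi
    have h1 := hKL (x (i+1)) hballi (hpos _) (by have := hΔsucη i hi; linarith)
    have h2 := le_trans h1 (hH2 i)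
    calc (φ (x (i+1)) - φ xbar) ^ q
        = (M*r) * ((1/(M*r)) * (φ (x (i+1)) - φ xbar) ^ q) := by field_simp
    _ ≤ (M*r) * (b * ‖x (i+1) - x i‖) := mul_le_mul_of_nonneg_left h2 hMr.le
    _ = M * r * (b * ‖x (i+1) - x i‖) := by ring
  -- the step inequality (conditional on being in the ball)
  have hstepW : ∀ i, m ≤ i → ‖x (i+1) - xbar‖ < ε →
      ‖x (i+1+1) - x (i+1)‖ + W (i+1) ≤ W i := by
    intro i hi hballi
    have hstep2 : 2 * ‖x (i+1+1) - x (i+1)‖ ≤ ‖x (i+1) - x i‖ +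
        C * ((φ (x (i+1)) - φ xbar) ^ r - (φ (x (i+1+1)) - φ xbar) ^ r) := by
      refine aux_step ha hr0 hr1 (by rw [hrdef]; ring) haC hC.le (hΔpos (i+1+1))
        (hΔanti (by omega)) (norm_nonneg _) (norm_nonneg _) (hKLx i hi hballi) (hd2 (i+1))
    simp only [hWdef]
    linarith
  -- the bootstrap induction
  have hballmain := aux_ball (d := fun i => ‖x (i+1) - x i‖) (W := W) hε
    (fun i => rfl) hW0 hball0 hWm hstepW
  have hballall : ∀ N, m+1 ≤ N → ‖x N - xbar‖ < ε := fun N hN => (hballmain N hN).1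
  -- unconditional step inequality and telescoping
  have hstepfull : ∀ i, m ≤ i → ‖x (i+1+1) - x (i+1)‖ + W (i+1) ≤ W i := fun i hi =>
    hstepW i hi (hballall (i+1) (by omega))
  have htail := aux_tel (d := fun i => ‖x (i+1) - x i‖) (W := W) (m := m)
    hW0 (fun i => norm_nonneg _) hstepfull
  -- limit bound : ‖x (l+1) - xbar‖ ≤ W l
  have hxbound : ∀ l, m ≤ l → ‖x (l+1) - xbar‖ ≤ W l := by
    intro l hl
    have h1 : Tendsto (fun j => ‖x (l+1) - x (σ j)‖) atTop (𝓝 ‖x (l+1) - xbar‖) :=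
      (tendsto_const_nhds.sub hσtend).norm
    refine le_of_tendsto h1 ?_
    filter_upwards [eventually_ge_atTop (l+1)] with j hj
    have hjl : l + 1 ≤ σ j := le_trans hj (hσge j)
    have h2 : dist (x (l+1)) (x (σ j)) ≤ ∑ i ∈ Finset.Ico (l+1) (σ j), ‖x (i+1) - x i‖ := by
      refine le_trans (dist_le_Ico_sum_dist x hjl) (le_of_eq (Finset.sum_congr rfl fun i _ => ?_))
      rw [dist_eq_norm, norm_sub_rev]
    calc ‖x (l+1) - x (σ j)‖ = dist (x (l+1)) (x (σ j)) := (dist_eq_norm _ _).symm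
    _ ≤ ∑ i ∈ Finset.Ico (l+1) (σ j), ‖x (i+1) - x i‖ := h2
    _ ≤ W l := htail l hl (σ j)
  -- the decrease recursion
  have hrec : ∀ j, m ≤ j → c * (φ (x (j+1)) - φ xbar) ^ (p+1) ≤
      (φ (x j) - φ xbar) - (φ (x (j+1)) - φ xbar) := by
    intro j hj
    have hballj : ‖x (j+1) - xbar‖ < ε := hballall (j+1) (by omega)
    have hKLj := hKLx j hj hballj
    have h1 : ((φ (x (j+1)) - φ xbar) ^ q)^2 ≤ (M*r*(b*‖x (j+1) - x j‖))^2 :=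
      pow_le_pow_left₀ (Real.rpow_nonneg (hΔpos _).le _) hKLj 2
    have h2 : (φ (x (j+1)) - φ xbar) ^ (p+1) = ((φ (x (j+1)) - φ xbar) ^ q)^2 := by
      rw [← Real.rpow_natCast ((φ (x (j+1)) - φ xbar) ^ q) 2,
        ← Real.rpow_mul (hΔpos (j+1)).le]
      push_cast
      congr 1
      rw [hpdef]; ring
    calc c * (φ (x (j+1)) - φ xbar) ^ (p+1) = c * ((φ (x (j+1)) - φ xbar) ^ q)^2 := by rw [h2]
    _ ≤ c * (M*r*(b*‖x (j+1) - x j‖))^2 := mul_le_mul_of_nonneg_left h1 hc.le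
    _ = a * ‖x (j+1) - x j‖^2 := by rw [← hca]; ring
    _ ≤ (φ (x j) - φ xbar) - (φ (x (j+1)) - φ xbar) := hd2 j
  -- the reciprocal-power sequence grows linearly
  have h21 : (1:ℝ) < 2 ^ p := by
    calc (1:ℝ) = 2 ^ (0:ℝ) := (Real.rpow_zero 2).symm
    _ < 2 ^ p := Real.rpow_lt_rpow_of_exponent_lt (by norm_num) hp0
  set μ := min ((2 ^ p - 1) * (φ (x (m+1)) - φ xbar) ^ (-p)) (p * c / 2) with hμdef
  have hμ : 0 < μ := lt_min
    (mul_pos (by linarith) (Real.rpow_pos_of_pos (hΔpos _) _)) (by positivity)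
  have hustep : ∀ j, m+1 ≤ j →
      (φ (x j) - φ xbar) ^ (-p) + μ ≤ (φ (x (j+1)) - φ xbar) ^ (-p) := by
    intro j hj
    have hts : φ (x (j+1)) - φ xbar ≤ φ (x j) - φ xbar := hΔanti (by omega)
    have hmain := aux_ustep hp0 hp1 (hΔpos (j+1)) hts hc (hrec j (by omega))
    have hw : (φ (x (m+1)) - φ xbar) ^ (-p) ≤ (φ (x j) - φ xbar) ^ (-p) :=
      Real.rpow_le_rpow_of_nonpos (hΔpos j) (hΔanti hj) (by linarith)
    have hμle : μ ≤ min ((2 ^ p - 1) * (φ (x j) - φ xbar) ^ (-p)) (p * c / 2) := by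
      apply le_min
      · exact le_trans (min_le_left _ _) (mul_le_mul_of_nonneg_left hw (by linarith))
      · exact min_le_right _ _
    have := le_trans hμle hmain
    linarith
  have hu := aux_growth (u := fun k => (φ (x k) - φ xbar) ^ (-p)) (μ := μ) (m := m)
    (Real.rpow_nonneg (hΔpos _).le _) hustep
  -- final constant
  have hμ2 : (0:ℝ) < μ/2 := by positivity
  refine ⟨(μ/2) ^ ((-p)⁻¹ * (2:ℝ)⁻¹) / a ^ ((2:ℝ)⁻¹) + C * (μ/2) ^ (-(r/p)), ?_, 2*m+4, ?_⟩
  · have h1 : (0:ℝ) < (μ/2) ^ ((-p)⁻¹ * (2:ℝ)⁻¹) := Real.rpow_pos_of_pos hμ2 _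
    have h2 : (0:ℝ) < a ^ ((2:ℝ)⁻¹) := Real.rpow_pos_of_pos ha _
    have h3 : (0:ℝ) < (μ/2) ^ (-(r/p)) := Real.rpow_pos_of_pos hμ2 _
    positivity
  intro k hk
  obtain ⟨l, rfl⟩ : ∃ l, k = l + 1 := ⟨k-1, by omega⟩
  have hml : m ≤ l := by omega
  have hm1l : m + 1 ≤ l := by omega
  have hnp : -p ≠ 0 := by intro h; rw [neg_eq_zero] at h; exact hp0.ne' h
  have hnpneg : (-p)⁻¹ ≤ 0 := inv_nonpos.mpr (by linarith)
  have hcast : (2*(m:ℝ)+4) ≤ ((l+1:ℕ):ℝ) := by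
    push_cast
    have : (2*m+4 : ℕ) ≤ l + 1 := hk
    exact_mod_cast by push_cast; linarith [this]
  have hk1 : (1:ℝ) ≤ ((l+1:ℕ):ℝ) := by push_cast; linarith [Nat.cast_nonneg (α := ℝ) l]
  set z := μ/2 * ((l+1:ℕ):ℝ) with hzdef
  have hz : 0 < z := by
    rw [hzdef]; exact mul_pos hμ2 (by exact_mod_cast Nat.succ_pos l)
  have hz_le_ul : z ≤ (φ (x l) - φ xbar) ^ (-p) := by
    have h1 := hu l hm1l
    have h2 : z ≤ μ * ((l:ℝ) - (m+1)) := by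
      rw [hzdef]
      push_cast at hcast ⊢
      nlinarith [hμ.le]
    linarith
  have hz_le_uk : z ≤ (φ (x (l+1)) - φ xbar) ^ (-p) := by
    have h1 := hu (l+1) (by omega)
    have h2 : z ≤ μ * (((l+1:ℕ):ℝ) - (m+1)) := by
      rw [hzdef]
      push_cast at hcast ⊢
      nlinarith [hμ.le]
    linarith
  have hΔk_le : φ (x (l+1)) - φ xbar ≤ z ^ (-p)⁻¹ := by
    have h1 : (φ (x (l+1)) - φ xbar) = ((φ (x (l+1)) - φ xbar) ^ (-p)) ^ (-p)⁻¹ :=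
      (Real.rpow_rpow_inv (hΔpos _).le hnp).symm
    rw [h1]
    exact Real.rpow_le_rpow_of_nonpos hz hz_le_uk hnpneg
  have hΔl_le : φ (x l) - φ xbar ≤ z ^ (-p)⁻¹ := by
    have h1 : (φ (x l) - φ xbar) = ((φ (x l) - φ xbar) ^ (-p)) ^ (-p)⁻¹ :=
      (Real.rpow_rpow_inv (hΔpos _).le hnp).symm
    rw [h1]
    exact Real.rpow_le_rpow_of_nonpos hz hz_le_ul hnpneg
  have hdl2 : ‖x (l+1) - x l‖^2 ≤ z ^ (-p)⁻¹ / a := by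
    rw [le_div_iff₀ ha]
    nlinarith [hd2 l, hΔpos (l+1), hΔl_le]
  have hdl : ‖x (l+1) - x l‖ ≤ (z ^ (-p)⁻¹ / a) ^ ((2:ℝ)⁻¹) :=
    aux_sqrt (norm_nonneg _) hdl2
  have hzp : 0 ≤ z ^ (-p)⁻¹ := Real.rpow_nonneg hz.le _
  have hsplit : ∀ e : ℝ, z ^ e = (μ/2) ^ e * ((l+1:ℕ):ℝ) ^ e := fun e => by
    rw [hzdef, Real.mul_rpow hμ2.le (Nat.cast_nonneg _)]
  have hexp1 : (z ^ (-p)⁻¹) ^ r = (μ/2) ^ (-(r/p)) * ((l+1:ℕ):ℝ) ^ (-(r/p)) := by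
    rw [← Real.rpow_mul hz.le,
      show (-p)⁻¹ * r = -(r/p) by rw [inv_neg]; ring]
    exact hsplit _
  have hexp2 : (z ^ (-p)⁻¹ / a) ^ ((2:ℝ)⁻¹) =
      ((μ/2) ^ ((-p)⁻¹ * (2:ℝ)⁻¹) * ((l+1:ℕ):ℝ) ^ ((-p)⁻¹ * (2:ℝ)⁻¹)) / a ^ ((2:ℝ)⁻¹) := by
    rw [Real.div_rpow hzp ha.le, ← Real.rpow_mul hz.le, hsplit]
  have hmexp : ((l+1:ℕ):ℝ) ^ ((-p)⁻¹ * (2:ℝ)⁻¹) ≤ ((l+1:ℕ):ℝ) ^ (-(r/p)) := by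
    apply Real.rpow_le_rpow_of_exponent_le hk1
    have key : r * p⁻¹ ≤ 2⁻¹ * p⁻¹ :=
      mul_le_mul_of_nonneg_right (by linarith) (by positivity)
    calc (-p)⁻¹ * (2:ℝ)⁻¹ = -(2⁻¹ * p⁻¹) := by rw [inv_neg]; ring
    _ ≤ -(r * p⁻¹) := by linarith
    _ = -(r/p) := by ring
  have hrp : (φ (x (l+1)) - φ xbar) ^ r ≤ (z ^ (-p)⁻¹) ^ r :=
    Real.rpow_le_rpow (hΔpos _).le hΔk_le hr0.le
  have hfinal1 : ‖x (l+1) - x l‖ ≤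
      (μ/2) ^ ((-p)⁻¹ * (2:ℝ)⁻¹) / a ^ ((2:ℝ)⁻¹) * ((l+1:ℕ):ℝ) ^ (-(r/p)) := by
    refine le_trans hdl ?_
    rw [hexp2]
    have h2 : 0 ≤ (μ/2) ^ ((-p)⁻¹ * (2:ℝ)⁻¹) := (Real.rpow_pos_of_pos hμ2 _).le
    have h3 : 0 < a ^ ((2:ℝ)⁻¹) := Real.rpow_pos_of_pos ha _
    calc (μ/2) ^ ((-p)⁻¹ * (2:ℝ)⁻¹) * ((l+1:ℕ):ℝ) ^ ((-p)⁻¹ * (2:ℝ)⁻¹) / a ^ ((2:ℝ)⁻¹)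
        ≤ (μ/2) ^ ((-p)⁻¹ * (2:ℝ)⁻¹) * ((l+1:ℕ):ℝ) ^ (-(r/p)) / a ^ ((2:ℝ)⁻¹) := by
          exact (div_le_div_iff_of_pos_right h3).mpr (mul_le_mul_of_nonneg_left hmexp h2)
    _ = (μ/2) ^ ((-p)⁻¹ * (2:ℝ)⁻¹) / a ^ ((2:ℝ)⁻¹) * ((l+1:ℕ):ℝ) ^ (-(r/p)) := by ring
  have hfinal2 : C * (φ (x (l+1)) - φ xbar) ^ r ≤
      C * (μ/2) ^ (-(r/p)) * ((l+1:ℕ):ℝ) ^ (-(r/p)) := by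
    calc C * (φ (x (l+1)) - φ xbar) ^ r ≤ C * ((z ^ (-p)⁻¹) ^ r) :=
      mul_le_mul_of_nonneg_left hrp hC.le
    _ = C * (μ/2) ^ (-(r/p)) * ((l+1:ℕ):ℝ) ^ (-(r/p)) := by rw [hexp1]; ring
  calc ‖x (l+1) - xbar‖ ≤ W l := hxbound l hml
  _ = ‖x (l+1) - x l‖ + C * (φ (x (l+1)) - φ xbar) ^ r := by simp only [hWdef]
  _ ≤ (μ/2) ^ ((-p)⁻¹ * (2:ℝ)⁻¹) / a ^ ((2:ℝ)⁻¹) * ((l+1:ℕ):ℝ) ^ (-(r/p)) +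
      C * (μ/2) ^ (-(r/p)) * ((l+1:ℕ):ℝ) ^ (-(r/p)) := add_le_add hfinal1 hfinal2
  _ = ((μ/2) ^ ((-p)⁻¹ * (2:ℝ)⁻¹) / a ^ ((2:ℝ)⁻¹) + C * (μ/2) ^ (-(r/p))) *
      ((l+1:ℕ):ℝ) ^ (-(r/p)) := by ring
end

section
/- Let φ : ℝⁿ → ℝ be continuously differentiable and bounded from below, let a, b > 0, let (x^k) satisfy the sufficient-decrease condition (H1) and the modified relative-error condition (H3), let x̄ be an accumulation point of (x^k), and suppose φ satisfies the exponent PLK condition at x̄ with exponent q ∈ [0, 1/2) and some constant M > 0. Then the sequences (x^k) and (φ(x^k)) terminate in finitely many steps at x̄ and φ(x̄): there exists K ∈ ℕ such that x^k = x̄ and φ(x^k) = φ(x̄) for all k ≥ K. -/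
open Filter Topology

theorem finite_termination_lower_exponent_H3
    (n : ℕ) (φ : EuclideanSpace ℝ (Fin n) → ℝ)
    (hφ : ContDiff ℝ 1 φ)
    (hbdd : ∃ m : ℝ, ∀ x, m ≤ φ x)
    (a b : ℝ) (ha : 0 < a) (hb : 0 < b)
    (x : ℕ → EuclideanSpace ℝ (Fin n))
    (hH1 : ∀ k : ℕ, φ (x (k + 1)) + a * ‖x (k + 1) - x k‖ ^ 2 ≤ φ (x k))
    (hH3 : ∀ k : ℕ, ‖gradient φ (x k)‖ ≤ b * ‖x (k + 1) - x k‖)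
    (xbar : EuclideanSpace ℝ (Fin n))
    (hacc : ∃ σ : ℕ → ℕ, StrictMono σ ∧
      Tendsto (fun j => x (σ j)) atTop (𝓝 xbar))
    (q : ℝ) (hq : q ∈ Set.Ico (0 : ℝ) (1/2))
    (M : ℝ) (hM : 0 < M)
    (hPLK : ∃ ε η : ℝ, 0 < ε ∧ 0 < η ∧
      ∀ y, ‖y - xbar‖ < ε → φ xbar < φ y → φ y < φ xbar + η →
        (1 / (M * (1 - q))) * (φ y - φ xbar) ^ q ≤ ‖gradient φ y‖) :
    ∃ K : ℕ, ∀ k ≥ K, x k = xbar ∧ φ (x k) = φ xbar := by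
  obtain ⟨m, hm⟩ := hbdd
  obtain ⟨σ, hσmono, hσtend⟩ := hacc
  obtain ⟨ε, η, hε, hη, hKL⟩ := hPLK
  obtain ⟨hq0, hq2⟩ := hq
  have hanti : Antitone (fun k => φ (x k)) := by
    apply antitone_nat_of_succ_le
    intro k
    have h := hH1 k
    nlinarith [sq_nonneg ‖x (k+1) - x k‖]
  have hbdd' : BddBelow (Set.range (fun k => φ (x k))) :=
    ⟨m, by rintro _ ⟨k, rfl⟩; exact hm _⟩
  have hL : Tendsto (fun k => φ (x k)) atTop (𝓝 (⨅ k, φ (x k))) :=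
    tendsto_atTop_ciInf hanti hbdd'
  have hσatTop : Tendsto σ atTop atTop := hσmono.tendsto_atTop
  have h1 : Tendsto (fun j => φ (x (σ j))) atTop (𝓝 (⨅ k, φ (x k))) := hL.comp hσatTop
  have h2 : Tendsto (fun j => φ (x (σ j))) atTop (𝓝 (φ xbar)) :=
    (hφ.continuous.tendsto xbar).comp hσtend
  have hLeq : (⨅ k, φ (x k)) = φ xbar := tendsto_nhds_unique h1 h2
  have hLim : Tendsto (fun k => φ (x k)) atTop (𝓝 (φ xbar)) := hLeq ▸ hL
  have hge : ∀ k, φ xbar ≤ φ (x k) := fun k => hanti.le_of_tendsto hLim k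
  by_cases hK : ∃ K, φ (x K) = φ xbar
  · obtain ⟨K, hKeq⟩ := hK
    have heq : ∀ k, K ≤ k → φ (x k) = φ xbar := fun k hk =>
      le_antisymm (hKeq ▸ hanti hk) (hge k)
    have hstep : ∀ k, K ≤ k → x (k+1) = x k := by
      intro k hk
      have h1 := hH1 k
      rw [heq k hk, heq (k+1) (le_trans hk (Nat.le_succ k))] at h1
      have hsq : ‖x (k+1) - x k‖ ^ 2 ≤ 0 := by nlinarith
      have hsq0 : ‖x (k+1) - x k‖ ^ 2 = 0 := le_antisymm hsq (sq_nonneg _)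
      have hn : ‖x (k+1) - x k‖ = 0 := by
        have := (pow_eq_zero_iff two_ne_zero).mp hsq0
        simpa using this
      have := norm_eq_zero.mp hn
      exact sub_eq_zero.mp this
    have hconst : ∀ k, K ≤ k → x k = x K := by
      intro k hk
      induction k, hk using Nat.le_induction with
      | base => rfl
      | succ k hk ih => rw [hstep k hk, ih]
    have hev : ∀ᶠ j in atTop, x (σ j) = x K := by
      filter_upwards [hσatTop.eventually_ge_atTop K] with j hj
      exact hconst (σ j) hj
    have hconstTend : Tendsto (fun j => x (σ j)) atTop (𝓝 (x K)) :=
      Tendsto.congr' (by filter_upwards [hev] with j hj; exact hj.symm) tendsto_const_nhds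
    have hxK : x K = xbar := tendsto_nhds_unique hconstTend hσtend
    exact ⟨K, fun k hk => ⟨(hconst k hk).trans hxK, heq k hk⟩⟩
  · exfalso
    push_neg at hK
    have hpos : ∀ k, φ xbar < φ (x k) := fun k => lt_of_le_of_ne (hge k) (Ne.symm (hK k))
    set c : ℝ := 1 / (M * (1 - q)) with hc
    have hq1 : q < 1 := lt_trans hq2 (by norm_num)
    have hcpos : 0 < c := by
      apply div_pos one_pos
      exact mul_pos hM (by linarith)
    set δ : ℝ := a * c ^ 2 / b ^ 2 with hδ
    have hδpos : 0 < δ := div_pos (mul_pos ha (pow_pos hcpos 2)) (pow_pos hb 2)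
    set t : ℝ := δ ^ (1 - 2*q)⁻¹ with ht
    have htpos : 0 < t := Real.rpow_pos_of_pos hδpos _
    have hexp : (0:ℝ) < 1 - 2*q := by linarith
    -- residual tends to 0
    have hrtend : Tendsto (fun j => φ (x (σ j)) - φ xbar) atTop (𝓝 0) := by
      have := h2.sub_const (φ xbar)
      simpa using this
    have hntend : Tendsto (fun j => ‖x (σ j) - xbar‖) atTop (𝓝 0) :=
      tendsto_iff_norm_sub_tendsto_zero.mp hσtend
    have hev1 : ∀ᶠ j in atTop, φ (x (σ j)) - φ xbar < min η t :=
      hrtend.eventually_lt_const (lt_min hη htpos)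
    have hev2 : ∀ᶠ j in atTop, ‖x (σ j) - xbar‖ < ε :=
      hntend.eventually_lt_const hε
    obtain ⟨j, hj1, hj2⟩ := (hev1.and hev2).exists
    set k := σ j with hkdef
    set r : ℝ := φ (x k) - φ xbar with hr
    have hr0 : 0 < r := sub_pos.mpr (hpos k)
    have hrη : r < η := lt_of_lt_of_le hj1 (min_le_left _ _)
    have hrt : r < t := lt_of_lt_of_le hj1 (min_le_right _ _)
    have hplk := hKL (x k) hj2 (hpos k) (by linarith)
    -- from H3: c * r^q ≤ b * ‖Δ‖
    have hΔ : c * r ^ q ≤ b * ‖x (k+1) - x k‖ := le_trans hplk (hH3 k)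
    have hrq_pos : 0 < r ^ q := Real.rpow_pos_of_pos hr0 q
    -- square it
    have hΔ2 : (c * r ^ q) ^ 2 ≤ (b * ‖x (k+1) - x k‖) ^ 2 := by
      apply pow_le_pow_left₀ (by positivity) hΔ
    have hnormsq : a * c ^ 2 * (r ^ q) ^ 2 / b ^ 2 ≤ a * ‖x (k+1) - x k‖ ^ 2 := by
      rw [div_le_iff₀ (pow_pos hb 2)]
      nlinarith
    -- H1 gives r_{k+1} ≥ 0 and decrease
    have hH1k := hH1 k
    have hge1 := hge (k+1)
    have key : δ * (r ^ q) ^ 2 ≤ r := by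
      have : a * c ^ 2 * (r ^ q) ^ 2 / b ^ 2 ≤ r := by linarith
      calc δ * (r ^ q) ^ 2 = a * c ^ 2 * (r ^ q) ^ 2 / b ^ 2 := by
            rw [hδ]; ring
        _ ≤ r := this
    -- but r < t implies r < δ * (r^q)^2
    have hr2q : (r ^ q) ^ 2 = r ^ (2*q) := by
      rw [← Real.rpow_natCast (r ^ q) 2, ← Real.rpow_mul hr0.le]
      norm_num
      ring_nf
    have hsplit : r = r ^ (1 - 2*q) * r ^ (2*q) := by
      rw [← Real.rpow_add hr0]
      norm_num
    have hlt : r ^ (1 - 2*q) < δ := by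
      calc r ^ (1 - 2*q) < t ^ (1 - 2*q) :=
            Real.rpow_lt_rpow hr0.le hrt hexp
        _ = δ := by
            rw [ht, ← Real.rpow_mul hδpos.le, inv_mul_cancel₀ (ne_of_gt hexp), Real.rpow_one]
    have hfinal : r < δ * r ^ (2*q) := by
      have hpos2q : 0 < r ^ (2*q) := Real.rpow_pos_of_pos hr0 _
      calc r = r ^ (1 - 2*q) * r ^ (2*q) := hsplit
        _ < δ * r ^ (2*q) := by exact mul_lt_mul_of_pos_right hlt hpos2q
    rw [hr2q] at key
    linarith
end

section
/- Let φ : ℝⁿ → ℝ be continuously differentiable and bounded from below, let a, b > 0, let (x^k) satisfy the sufficient-decrease condition (H1) and the modified relative-error condition (H3), let x̄ be an accumulation point of (x^k), and suppose φ satisfies the exponent PLK condition at x̄ with exponent q = 1/2 and some constant M > 0. Then the value sequence converges Q-linearly to φ(x̄) (there exist ρ ∈ (0,1) and K ∈ ℕ with φ(x^{k+1}) − φ(x̄) ≤ ρ(φ(x^k) − φ(x̄)) for all k ≥ K), and (x^k) converges R-linearly to x̄ (there exist C > 0 and ρ' ∈ (0,1) with ‖x^k − x̄‖ ≤ C·ρ'^k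 for all k). -/
open Filter Topology

set_option maxHeartbeats 1000000 in
theorem linear_convergence_q_half_H3
    (n : ℕ) (φ : EuclideanSpace ℝ (Fin n) → ℝ)
    (hφ : ContDiff ℝ 1 φ)
    (hbdd : ∃ m : ℝ, ∀ x, m ≤ φ x)
    (a b : ℝ) (ha : 0 < a) (hb : 0 < b)
    (x : ℕ → EuclideanSpace ℝ (Fin n))
    (hH1 : ∀ k : ℕ, φ (x (k + 1)) + a * ‖x (k + 1) - x k‖ ^ 2 ≤ φ (x k))
    (hH3 : ∀ k : ℕ, ‖gradient φ (x k)‖ ≤ b * ‖x (k + 1) - x k‖)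
    (xbar : EuclideanSpace ℝ (Fin n))
    (hacc : ∃ σ : ℕ → ℕ, StrictMono σ ∧
      Tendsto (fun j => x (σ j)) atTop (𝓝 xbar))
    (q : ℝ) (hq : q = 1/2)
    (M : ℝ) (hM : 0 < M)
    (hPLK : ∃ ε η : ℝ, 0 < ε ∧ 0 < η ∧
      ∀ y, ‖y - xbar‖ < ε → φ xbar < φ y → φ y < φ xbar + η →
        (1 / (M * (1 - q))) * (φ y - φ xbar) ^ q ≤ ‖gradient φ y‖) :
    (∃ ρ ∈ Set.Ioo (0 : ℝ) 1, ∃ K : ℕ, ∀ k ≥ K,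
        φ (x (k + 1)) - φ xbar ≤ ρ * (φ (x k) - φ xbar)) ∧
      (∃ C > (0 : ℝ), ∃ ρ' ∈ Set.Ioo (0 : ℝ) 1, ∀ k : ℕ,
        ‖x k - xbar‖ ≤ C * ρ' ^ k) := by
  obtain ⟨σ, hσmono, hσtend⟩ := hacc
  subst hq
  -- basic facts
  have hdec : ∀ k, φ (x (k + 1)) ≤ φ (x k) := fun k =>
    le_trans (le_add_of_nonneg_right (by positivity)) (hH1 k)
  have hanti : Antitone (fun k => φ (x k)) := antitone_nat_of_succ_le hdec
  have hφtend : Tendsto (fun j => φ (x (σ j))) atTop (𝓝 (φ xbar)) :=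
    (hφ.continuous.tendsto xbar).comp hσtend
  have hrge : ∀ k, φ xbar ≤ φ (x k) := by
    intro k
    refine le_of_tendsto hφtend ?_
    filter_upwards [eventually_ge_atTop k] with j hj
    exact hanti (hj.trans hσmono.le_apply)
  have hstep : ∀ k, a * ‖x (k + 1) - x k‖ ^ 2 ≤ φ (x k) - φ (x (k + 1)) :=
    fun k => by linarith [hH1 k]
  by_cases hpos : ∀ k, φ xbar < φ (x k)
  · -- Case B: strictly above the critical value forever
    obtain ⟨ε, η, hε, hη, hKL⟩ := hPLK
    set c : ℝ := 4 * a / (M ^ 2 * b ^ 2) with hc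
    have hcpos : 0 < c := by positivity
    set ρ : ℝ := max (1 - c) (1 / 2) with hρ
    have hρ0 : (0:ℝ) < ρ := lt_of_lt_of_le (by norm_num) (le_max_right _ _)
    have hρ1 : ρ < 1 := max_lt (by linarith) (by norm_num)
    set s : ℝ := Real.sqrt ρ with hs
    have hs0 : 0 < s := Real.sqrt_pos.2 hρ0
    have hs1 : s < 1 := by
      have h := Real.sqrt_lt_sqrt hρ0.le hρ1
      simpa [hs] using h
    have hs1' : (0:ℝ) < 1 - s := by linarith
    have hsa : (0:ℝ) < Real.sqrt a := Real.sqrt_pos.2 ha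
    -- contraction lemma
    have hcontr : ∀ k, ‖x k - xbar‖ < ε → φ (x k) < φ xbar + η →
        φ (x (k + 1)) - φ xbar ≤ ρ * (φ (x k) - φ xbar) := by
      intro k hdist hval
      have hrk : 0 < φ (x k) - φ xbar := sub_pos.2 (hpos k)
      have hkl := (hKL (x k) hdist (hpos k) hval).trans (hH3 k)
      rw [← Real.sqrt_eq_rpow] at hkl
      have hv2 : Real.sqrt (φ (x k) - φ xbar) * Real.sqrt (φ (x k) - φ xbar)
          = φ (x k) - φ xbar := Real.mul_self_sqrt hrk.le
      have hcoef : 1 / (M * (1 - (1/2:ℝ))) = 2 / M := by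
        rw [show (1:ℝ) - 1/2 = 1/2 by norm_num]
        field_simp
      rw [hcoef, div_mul_eq_mul_div, div_le_iff₀ hM] at hkl
      have hsq := mul_self_le_mul_self
        (by positivity : (0:ℝ) ≤ 2 * Real.sqrt (φ (x k) - φ xbar)) hkl
      have h4r : 4 * (φ (x k) - φ xbar) ≤ b ^ 2 * M ^ 2 * ‖x (k + 1) - x k‖ ^ 2 := by
        nlinarith [hv2]
      have e2 : c * (φ (x k) - φ xbar) ≤ φ (x k) - φ (x (k + 1)) := by
        rw [hc, div_mul_eq_mul_div, div_le_iff₀ (by positivity : (0:ℝ) < M ^ 2 * b ^ 2)]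
        nlinarith [mul_le_mul_of_nonneg_left h4r ha.le,
          mul_le_mul_of_nonneg_left (hstep k) (by positivity : (0:ℝ) ≤ M ^ 2 * b ^ 2)]
      have e3 : 1 - c ≤ ρ := le_max_left _ _
      nlinarith [mul_le_mul_of_nonneg_right e3 hrk.le]
    -- step bound
    have hstepbound : ∀ k, ‖x (k + 1) - x k‖ ≤
        Real.sqrt (φ (x k) - φ xbar) / Real.sqrt a := by
      intro k
      have h0 : 0 ≤ φ (x k) - φ xbar := by linarith [hrge k]
      have h1 : ‖x (k + 1) - x k‖ ^ 2 ≤ (φ (x k) - φ xbar) / a := by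
        rw [le_div_iff₀ ha]
        nlinarith [hstep k, hrge (k + 1)]
      calc ‖x (k + 1) - x k‖ = Real.sqrt (‖x (k + 1) - x k‖ ^ 2) :=
            (Real.sqrt_sq (norm_nonneg _)).symm
        _ ≤ Real.sqrt ((φ (x k) - φ xbar) / a) := Real.sqrt_le_sqrt h1
        _ = _ := Real.sqrt_div h0 a
    -- choose K
    obtain ⟨K, hK1, hK2, hK3⟩ : ∃ K, ‖x K - xbar‖ < ε / 2 ∧ φ (x K) < φ xbar + η ∧
        Real.sqrt (φ (x K) - φ xbar) / Real.sqrt a * (1 - s)⁻¹ < ε / 2 := by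
      have hδ : (0:ℝ) < min η (a * ((1 - s) * (ε / 2)) ^ 2) := lt_min hη (by positivity)
      have h1 : ∀ᶠ j in atTop,
          φ (x (σ j)) < φ xbar + min η (a * ((1 - s) * (ε / 2)) ^ 2) :=
        hφtend.eventually_lt_const (by linarith)
      have h2 : ∀ᶠ j in atTop, ‖x (σ j) - xbar‖ < ε / 2 :=
        (tendsto_iff_norm_sub_tendsto_zero.mp hσtend).eventually_lt_const (by linarith)
      obtain ⟨j, hj1, hj2⟩ := (h1.and h2).exists
      refine ⟨σ j, hj2, lt_of_lt_of_le hj1 (by linarith [min_le_left η (a * ((1 - s) * (ε / 2)) ^ 2)]), ?_⟩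
      have hrK : φ (x (σ j)) - φ xbar < a * ((1 - s) * (ε / 2)) ^ 2 := by
        have := min_le_right η (a * ((1 - s) * (ε / 2)) ^ 2)
        linarith
      have hs2 : Real.sqrt (φ (x (σ j)) - φ xbar) < Real.sqrt a * ((1 - s) * (ε / 2)) := by
        have h := Real.sqrt_lt_sqrt (by linarith [hrge (σ j)]) hrK
        rwa [Real.sqrt_mul ha.le, Real.sqrt_sq (by positivity)] at h
      have h3 : Real.sqrt (φ (x (σ j)) - φ xbar) / Real.sqrt a < (1 - s) * (ε / 2) := by
        rw [div_lt_iff₀ hsa]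
        nlinarith [hs2]
      calc Real.sqrt (φ (x (σ j)) - φ xbar) / Real.sqrt a * (1 - s)⁻¹
          < ((1 - s) * (ε / 2)) * (1 - s)⁻¹ :=
            mul_lt_mul_of_pos_right h3 (by positivity)
        _ = ε / 2 := by field_simp
    -- invariant
    have hinv : ∀ k, K ≤ k → ‖x k - xbar‖ +
        Real.sqrt (φ (x k) - φ xbar) / Real.sqrt a * (1 - s)⁻¹ < ε := by
      intro k hk
      induction k, hk using Nat.le_induction with
      | base => linarith
      | succ k hk ih =>
        have hgt : 0 ≤ Real.sqrt (φ (x k) - φ xbar) / Real.sqrt a * (1 - s)⁻¹ := by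
          positivity
        have hd : ‖x k - xbar‖ < ε := by linarith
        have hval : φ (x k) < φ xbar + η := lt_of_le_of_lt (hanti hk) hK2
        have hc1 := hcontr k hd hval
        have hsq1 : Real.sqrt (φ (x (k + 1)) - φ xbar)
            ≤ s * Real.sqrt (φ (x k) - φ xbar) := by
          have h := Real.sqrt_le_sqrt hc1
          rwa [Real.sqrt_mul hρ0.le] at h
        have htri : ‖x (k + 1) - xbar‖ ≤ ‖x k - xbar‖ + ‖x (k + 1) - x k‖ := by
          have h := norm_add_le (x (k + 1) - x k) (x k - xbar)
          rw [sub_add_sub_cancel] at h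
          linarith
        have hsb := hstepbound k
        have key : s * (Real.sqrt (φ (x k) - φ xbar) / Real.sqrt a) * (1 - s)⁻¹
            = Real.sqrt (φ (x k) - φ xbar) / Real.sqrt a * (1 - s)⁻¹
              - Real.sqrt (φ (x k) - φ xbar) / Real.sqrt a := by
          field_simp
          ring
        have h2 : Real.sqrt (φ (x (k + 1)) - φ xbar) / Real.sqrt a * (1 - s)⁻¹
            ≤ s * (Real.sqrt (φ (x k) - φ xbar) / Real.sqrt a) * (1 - s)⁻¹ := by
          apply mul_le_mul_of_nonneg_right _ (by positivity)
          rw [← mul_div_assoc]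
          gcongr
        linarith
    have hball : ∀ k, K ≤ k → ‖x k - xbar‖ < ε := by
      intro k hk
      have h := hinv k hk
      have : 0 ≤ Real.sqrt (φ (x k) - φ xbar) / Real.sqrt a * (1 - s)⁻¹ := by positivity
      linarith
    have hcontrK : ∀ k, K ≤ k → φ (x (k + 1)) - φ xbar ≤ ρ * (φ (x k) - φ xbar) := by
      intro k hk
      refine hcontr k (hball k hk) ?_
      calc φ (x k) ≤ φ (x K) := hanti hk
        _ < φ xbar + η := hK2
    -- sqrt contraction
    have hsqrtK : ∀ k, K ≤ k → Real.sqrt (φ (x (k + 1)) - φ xbar) / Real.sqrt a ≤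
        s * (Real.sqrt (φ (x k) - φ xbar) / Real.sqrt a) := by
      intro k hk
      have h := Real.sqrt_le_sqrt (hcontrK k hk)
      rw [Real.sqrt_mul hρ0.le] at h
      rw [← mul_div_assoc]
      gcongr
    -- telescoping bound
    have hT : ∀ k, K ≤ k → ∀ m, k ≤ m → ‖x m - x k‖ +
        Real.sqrt (φ (x m) - φ xbar) / Real.sqrt a * (1 - s)⁻¹ ≤
        Real.sqrt (φ (x k) - φ xbar) / Real.sqrt a * (1 - s)⁻¹ := by
      intro k hk m hm
      induction m, hm using Nat.le_induction with
      | base => simp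
      | succ m hm ih =>
        have hmK : K ≤ m := hk.trans hm
        have hc1 := hsqrtK m hmK
        have htri : ‖x (m + 1) - x k‖ ≤ ‖x m - x k‖ + ‖x (m + 1) - x m‖ := by
          have h := norm_add_le (x (m + 1) - x m) (x m - x k)
          rw [sub_add_sub_cancel] at h
          linarith
        have hsb := hstepbound m
        have key : s * (Real.sqrt (φ (x m) - φ xbar) / Real.sqrt a) * (1 - s)⁻¹
            = Real.sqrt (φ (x m) - φ xbar) / Real.sqrt a * (1 - s)⁻¹
              - Real.sqrt (φ (x m) - φ xbar) / Real.sqrt a := by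
          field_simp
          ring
        have h2 : Real.sqrt (φ (x (m + 1)) - φ xbar) / Real.sqrt a * (1 - s)⁻¹
            ≤ s * (Real.sqrt (φ (x m) - φ xbar) / Real.sqrt a) * (1 - s)⁻¹ :=
          mul_le_mul_of_nonneg_right hc1 (by positivity)
        linarith
    -- limit bound
    have hlim : ∀ k, K ≤ k → ‖x k - xbar‖ ≤
        Real.sqrt (φ (x k) - φ xbar) / Real.sqrt a * (1 - s)⁻¹ := by
      intro k hk
      have htend : Tendsto (fun j => ‖x (σ j) - x k‖) atTop (𝓝 ‖xbar - x k‖) :=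
        (hσtend.sub tendsto_const_nhds).norm
      rw [show ‖x k - xbar‖ = ‖xbar - x k‖ from norm_sub_rev _ _]
      refine le_of_tendsto htend ?_
      filter_upwards [eventually_ge_atTop k] with j hj
      have h := hT k hk (σ j) (hj.trans hσmono.le_apply)
      have hg1 : 0 ≤ Real.sqrt (φ (x (σ j)) - φ xbar) / Real.sqrt a * (1 - s)⁻¹ := by
        positivity
      linarith
    -- geometric decay of sqrt values
    have hgeo : ∀ k, K ≤ k → Real.sqrt (φ (x k) - φ xbar) / Real.sqrt a ≤
        s ^ (k - K) * (Real.sqrt (φ (x K) - φ xbar) / Real.sqrt a) := by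
      intro k hk
      induction k, hk using Nat.le_induction with
      | base => simp
      | succ k hk ih =>
        have hpow : s ^ (k + 1 - K) = s * s ^ (k - K) := by
          rw [Nat.succ_sub hk, pow_succ]
          ring
        calc Real.sqrt (φ (x (k + 1)) - φ xbar) / Real.sqrt a
            ≤ s * (Real.sqrt (φ (x k) - φ xbar) / Real.sqrt a) := hsqrtK k hk
          _ ≤ s * (s ^ (k - K) * (Real.sqrt (φ (x K) - φ xbar) / Real.sqrt a)) :=
              mul_le_mul_of_nonneg_left ih hs0.le
          _ = s ^ (k + 1 - K) * (Real.sqrt (φ (x K) - φ xbar) / Real.sqrt a) := by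
              rw [hpow]; ring
    refine ⟨⟨ρ, ⟨hρ0, hρ1⟩, K, fun k hk => hcontrK k hk⟩, ?_⟩
    -- R-linear convergence
    have hsum : 0 ≤ ∑ i ∈ Finset.range K, ‖x i - xbar‖ / s ^ i :=
      Finset.sum_nonneg fun i _ => div_nonneg (norm_nonneg _) (by positivity)
    have hB : 0 ≤ Real.sqrt (φ (x K) - φ xbar) / Real.sqrt a * (1 - s)⁻¹ / s ^ K := by
      positivity
    refine ⟨Real.sqrt (φ (x K) - φ xbar) / Real.sqrt a * (1 - s)⁻¹ / s ^ K
        + (∑ i ∈ Finset.range K, ‖x i - xbar‖ / s ^ i) + 1, by linarith,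
      s, ⟨hs0, hs1⟩, fun k => ?_⟩
    have hsk : (0:ℝ) < s ^ k := by positivity
    rcases le_or_gt K k with hk | hk
    · have h1 := hlim k hk
      have h2 := hgeo k hk
      have h3 : s ^ (k - K) * (Real.sqrt (φ (x K) - φ xbar) / Real.sqrt a) * (1 - s)⁻¹
          = (Real.sqrt (φ (x K) - φ xbar) / Real.sqrt a * (1 - s)⁻¹ / s ^ K) * s ^ k := by
        rw [pow_sub₀ s (ne_of_gt hs0) hk]
        field_simp
      have h4 : ‖x k - xbar‖ ≤
          (Real.sqrt (φ (x K) - φ xbar) / Real.sqrt a * (1 - s)⁻¹ / s ^ K) * s ^ k := by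
        rw [← h3]
        calc ‖x k - xbar‖ ≤ Real.sqrt (φ (x k) - φ xbar) / Real.sqrt a * (1 - s)⁻¹ := h1
          _ ≤ s ^ (k - K) * (Real.sqrt (φ (x K) - φ xbar) / Real.sqrt a) * (1 - s)⁻¹ :=
            mul_le_mul_of_nonneg_right h2 (by positivity)
      refine h4.trans ?_
      apply mul_le_mul_of_nonneg_right _ hsk.le
      linarith
    · have hterm : ‖x k - xbar‖ / s ^ k ≤ ∑ i ∈ Finset.range K, ‖x i - xbar‖ / s ^ i :=
        Finset.single_le_sum (f := fun i => ‖x i - xbar‖ / s ^ i)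
          (fun i _ => div_nonneg (norm_nonneg _) (by positivity))
          (Finset.mem_range.mpr hk)
      have heq : ‖x k - xbar‖ = ‖x k - xbar‖ / s ^ k * s ^ k := by
        field_simp
      rw [heq]
      apply mul_le_mul_of_nonneg_right _ hsk.le
      linarith
  · -- Case A: the value hits φ xbar
    push_neg at hpos
    obtain ⟨m, hm⟩ := hpos
    have hmeq : φ (x m) = φ xbar := le_antisymm hm (hrge m)
    have hconst : ∀ k, m ≤ k → x k = x m := by
      intro k hk
      induction k with
      | zero => cases Nat.le_zero.mp hk; rfl
      | succ k ih =>
        rcases Nat.eq_or_lt_of_le hk with h | h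
        · rw [← h]
        · have hmk : m ≤ k := Nat.lt_succ_iff.mp h
          have hxk : x k = x m := ih hmk
          have h1 : φ (x k) = φ xbar := by rw [hxk, hmeq]
          have h2 : φ (x (k + 1)) = φ xbar :=
            le_antisymm (h1 ▸ hdec k) (hrge (k + 1))
          have h3 : a * ‖x (k + 1) - x k‖ ^ 2 ≤ 0 := by
            have := hstep k; rw [h1, h2] at this; linarith
          have h4 : ‖x (k + 1) - x k‖ = 0 := by
            have h5 : ‖x (k + 1) - x k‖ ^ 2 ≤ 0 := by nlinarith [h3]
            have h6 : ‖x (k + 1) - x k‖ ^ 2 = 0 := le_antisymm h5 (sq_nonneg _)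
            exact pow_eq_zero_iff two_ne_zero |>.mp h6
          have h5 : x (k + 1) = x k := by
            rw [← sub_eq_zero]; exact norm_eq_zero.mp h4
          rw [h5, hxk]
    have hxm : x m = xbar := by
      refine tendsto_nhds_unique ?_ hσtend
      refine tendsto_const_nhds.congr' ?_
      filter_upwards [eventually_ge_atTop m] with j hj
      exact (hconst (σ j) (hj.trans hσmono.le_apply)).symm
    constructor
    · refine ⟨1/2, ⟨by norm_num, by norm_num⟩, m, fun k hk => ?_⟩
      have h1 : φ (x (k + 1)) = φ xbar := by
        rw [hconst (k + 1) (hk.trans (Nat.le_succ k)), hmeq]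
      have h2 : φ (x k) = φ xbar := by rw [hconst k hk, hmeq]
      rw [h1, h2]; simp
    · have hsum : 0 ≤ ∑ i ∈ Finset.range m, ‖x i - xbar‖ * 2 ^ i :=
        Finset.sum_nonneg fun i _ => mul_nonneg (norm_nonneg _) (by positivity)
      refine ⟨(∑ i ∈ Finset.range m, ‖x i - xbar‖ * 2 ^ i) + 1, by linarith,
        1/2, ⟨by norm_num, by norm_num⟩, fun k => ?_⟩
      rcases le_or_gt m k with hk | hk
      · have h0 : ‖x k - xbar‖ = 0 := by rw [hconst k hk, hxm, sub_self, norm_zero]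
        rw [h0]
        have : (0:ℝ) ≤ ((1:ℝ)/2) ^ k := by positivity
        nlinarith
      · have hterm : ‖x k - xbar‖ * 2 ^ k ≤
            ∑ i ∈ Finset.range m, ‖x i - xbar‖ * 2 ^ i :=
          Finset.single_le_sum (f := fun i => ‖x i - xbar‖ * 2 ^ i)
            (fun i _ => mul_nonneg (norm_nonneg _) (by positivity)) (Finset.mem_range.mpr hk)
        have h2k : ‖x k - xbar‖ = (‖x k - xbar‖ * 2 ^ k) * ((1:ℝ)/2) ^ k := by
          rw [mul_assoc, ← mul_pow]; norm_num
        rw [h2k]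
        exact mul_le_mul_of_nonneg_right (by linarith [hterm]) (by positivity)
end
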